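/- arXiv:2409.09255 — 9 statements merged into one kernel-verified Lean document; each statement's English description precedes it below -/
import Mathlib

section
/- Let ℓ⃗ = (ℓ_μ ≥ ⋯ ≥ ℓ_1) and ℓ⃗' = (ℓ'_{μ'} ≥ ⋯ ≥ ℓ'_1) be partitions of the same integer ℓ ≥ 1 into positive parts. If (t - (-1)^μ) · ∏_{ν=1}^{μ} (t^{2ℓ_ν} - 1) = (t - (-1)^{μ'}) · ∏_{ν=1}^{μ'} (t^{2ℓ'_ν} - 1) as polynomials in ℂ[t], then μ = μ' and ℓ_ν = ℓ'_ν for all ν. -/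
/-!
Every factor `t ^ (2 ℓ) - 1` is separable with simple roots at `±1`, and the linear factor
`t - (-1) ^ μ` vanishes at exactly one of `±1`; so the root multiplicities at `1` and `-1` add
up to `2 μ + 1`, which recovers `μ`. For the parts, let `m` be the largest exponent `2 ℓ` on
either side. A primitive `m`-th root of unity is a root of `t ^ n - 1` only when `m ∣ n`, so `m`
occurs on both sides; cancelling that factor and inducting shows the multisets of parts agree,
and sorted lists with the same multiset are equal.
-/

open Polynomial

namespace Polynomial

variable {K : Type*} [Field K]

theorem X_pow_sub_one_ne_zero {n : ℕ} (hn : 0 < n) : (X ^ n - 1 : K[X]) ≠ 0 := by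
  simpa using X_pow_sub_C_ne_zero hn (1 : K)

theorem rootMultiplicity_X_sub_C_mul [DecidableEq K] {c : K} {p : K[X]} (hp : p ≠ 0) (a : K) :
    rootMultiplicity a ((X - C c) * p) = (if a = c then 1 else 0) + rootMultiplicity a p := by
  rw [rootMultiplicity_mul (mul_ne_zero (X_sub_C_ne_zero c) hp), rootMultiplicity_X_sub_C]

theorem multiset_prod_X_pow_sub_one_ne_zero {N : Multiset ℕ} (hN : ∀ n ∈ N, 0 < n) :
    (N.map fun n => (X ^ n - 1 : K[X])).prod ≠ 0 := by
  simpa [Multiset.prod_eq_zero_iff] using fun n hn => X_pow_sub_one_ne_zero (K := K) (hN n hn)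

theorem exists_dvd_of_isRoot_multiset_prod_X_pow_sub_one {N : Multiset ℕ} {m : ℕ} {ζ : K}
    (hζ : IsPrimitiveRoot ζ m) (hroot : ((N.map fun n => (X ^ n - 1 : K[X])).prod).IsRoot ζ) :
    ∃ n ∈ N, m ∣ n := by
  rw [IsRoot, eval_multiset_prod, Multiset.prod_eq_zero_iff, Multiset.map_map] at hroot
  obtain ⟨n, hn, hζn⟩ := Multiset.mem_map.mp hroot
  refine ⟨n, hn, hζ.dvd_of_pow_eq_one n ?_⟩
  simpa [sub_eq_zero] using hζn

section CharZero

variable [CharZero K]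

theorem rootMultiplicity_X_pow_sub_one {n : ℕ} (hn : 0 < n) {a : K} (ha : a ^ n = 1) :
    rootMultiplicity a (X ^ n - 1 : K[X]) = 1 := by
  have hsep : (X ^ n - 1 : K[X]).Separable :=
    X_pow_sub_one_separable_iff.mpr (Nat.cast_ne_zero.mpr hn.ne')
  refine le_antisymm (rootMultiplicity_le_one_of_separable hsep a) ?_
  exact (rootMultiplicity_pos (X_pow_sub_one_ne_zero hn)).mpr (by simp [ha])

theorem rootMultiplicity_multiset_prod_X_pow_sub_one {N : Multiset ℕ} (hN : ∀ n ∈ N, 0 < n)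
    {a : K} (ha : ∀ n ∈ N, a ^ n = 1) :
    rootMultiplicity a (N.map fun n => (X ^ n - 1 : K[X])).prod = Multiset.card N := by
  induction N using Multiset.induction_on with
  | empty => simp
  | cons n N ih =>
    simp only [Multiset.mem_cons, forall_eq_or_imp] at hN ha
    rw [Multiset.map_cons, Multiset.prod_cons,
      rootMultiplicity_mul (mul_ne_zero (X_pow_sub_one_ne_zero hN.1)
        (multiset_prod_X_pow_sub_one_ne_zero hN.2)),
      rootMultiplicity_X_pow_sub_one hN.1 ha.1, ih hN.2 ha.2, Multiset.card_cons, add_comm]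

theorem rootMultiplicity_one_add_rootMultiplicity_neg_one {N : Multiset ℕ}
    (hN : ∀ n ∈ N, 0 < n ∧ Even n) (k : ℕ) :
    rootMultiplicity 1 ((X - C ((-1 : K) ^ k)) * (N.map fun n => (X ^ n - 1 : K[X])).prod) +
      rootMultiplicity (-1) ((X - C ((-1 : K) ^ k)) * (N.map fun n => (X ^ n - 1 : K[X])).prod) =
      2 * Multiset.card N + 1 := by
  classical
  have hpos : ∀ n ∈ N, 0 < n := fun n hn => (hN n hn).1
  have hne := multiset_prod_X_pow_sub_one_ne_zero (K := K) hpos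
  rw [rootMultiplicity_X_sub_C_mul hne, rootMultiplicity_X_sub_C_mul hne,
    rootMultiplicity_multiset_prod_X_pow_sub_one hpos (fun n _ => one_pow n),
    rootMultiplicity_multiset_prod_X_pow_sub_one hpos (fun n hn => (hN n hn).2.neg_one_pow)]
  have h1 : (1 : K) ≠ -1 := by norm_num
  rcases neg_one_pow_eq_or K k with hk | hk <;> simp [hk, h1, h1.symm] <;> ring

theorem card_eq_of_X_sub_neg_one_pow_mul_multiset_prod_eq {N N' : Multiset ℕ} {k k' : ℕ}
    (hN : ∀ n ∈ N, 0 < n ∧ Even n) (hN' : ∀ n ∈ N', 0 < n ∧ Even n)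
    (h : (X - C ((-1 : K) ^ k)) * (N.map fun n => (X ^ n - 1 : K[X])).prod =
      (X - C ((-1 : K) ^ k')) * (N'.map fun n => (X ^ n - 1 : K[X])).prod) :
    Multiset.card N = Multiset.card N' := by
  have := rootMultiplicity_one_add_rootMultiplicity_neg_one (K := K) hN k
  rw [h, rootMultiplicity_one_add_rootMultiplicity_neg_one hN' k'] at this
  omega

variable [IsAlgClosed K]

theorem mem_of_multiset_prod_X_pow_sub_one_eq {N N' : Multiset ℕ} (hN' : ∀ n ∈ N', 0 < n)
    {m : ℕ} (hm : m ∈ N) (hm_pos : 0 < m) (hm_max : ∀ n ∈ N', n ≤ m)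
    (h : (N.map fun n => (X ^ n - 1 : K[X])).prod = (N'.map fun n => (X ^ n - 1 : K[X])).prod) :
    m ∈ N' := by
  have : NeZero (m : K) := ⟨Nat.cast_ne_zero.mpr hm_pos.ne'⟩
  obtain ⟨ζ, hζ⟩ := HasEnoughRootsOfUnity.exists_primitiveRoot K m
  have hroot : ((N.map fun n => (X ^ n - 1 : K[X])).prod).IsRoot ζ := by
    rw [IsRoot, eval_multiset_prod]
    exact Multiset.prod_eq_zero (Multiset.mem_map.mpr
      ⟨_, Multiset.mem_map.mpr ⟨m, hm, rfl⟩, by simp [hζ.pow_eq_one]⟩)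
  rw [h] at hroot
  obtain ⟨n, hn, hmn⟩ := exists_dvd_of_isRoot_multiset_prod_X_pow_sub_one hζ hroot
  rwa [le_antisymm (hm_max n hn) (Nat.le_of_dvd (hN' n hn) hmn)] at hn

theorem multiset_eq_of_multiset_prod_X_pow_sub_one_eq {N N' : Multiset ℕ}
    (hN : ∀ n ∈ N, 0 < n) (hN' : ∀ n ∈ N', 0 < n)
    (h : (N.map fun n => (X ^ n - 1 : K[X])).prod = (N'.map fun n => (X ^ n - 1 : K[X])).prod) :
    N = N' := by
  induction hc : Multiset.card (N + N') using Nat.strong_induction_on generalizing N N' with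
  | _ c ih =>
  rcases eq_or_ne (N + N') 0 with h0 | h0
  · obtain ⟨rfl, rfl⟩ := add_eq_zero.mp h0
    rfl
  obtain ⟨m, hm, hm_max⟩ := Multiset.exists_max_image id h0
  have hm_pos : 0 < m := (Multiset.mem_add.mp hm).elim (hN m) (hN' m)
  have hmN : m ∈ N ∧ m ∈ N' := by
    rcases Multiset.mem_add.mp hm with hmN | hmN'
    · exact ⟨hmN, mem_of_multiset_prod_X_pow_sub_one_eq hN' hmN hm_pos
        (fun n hn => hm_max n (Multiset.mem_add.mpr (.inr hn))) h⟩
    · exact ⟨mem_of_multiset_prod_X_pow_sub_one_eq hN hmN' hm_pos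
        (fun n hn => hm_max n (Multiset.mem_add.mpr (.inl hn))) h.symm, hmN'⟩
  rw [← Multiset.cons_erase hmN.1, ← Multiset.cons_erase hmN.2] at h ⊢
  simp only [Multiset.map_cons, Multiset.prod_cons] at h
  congr 1
  refine ih _ ?_ (fun n hn => hN n (Multiset.mem_of_mem_erase hn))
    (fun n hn => hN' n (Multiset.mem_of_mem_erase hn))
    (mul_left_cancel₀ (X_pow_sub_one_ne_zero hm_pos) h) rfl
  rw [← hc, Multiset.card_add, Multiset.card_add]
  exact add_lt_add (Multiset.card_erase_lt_of_mem hmN.1) (Multiset.card_erase_lt_of_mem hmN.2)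

end CharZero

theorem prod_X_pow_two_mul_sub_one_eq_multiset_prod {μ : ℕ} (L : Fin μ → ℕ) :
    ∏ ν, (X ^ (2 * L ν) - 1 : K[X]) =
      (((List.ofFn L : Multiset ℕ).map (2 * ·)).map fun n => (X ^ n - 1 : K[X])).prod := by
  rw [Multiset.map_map, Multiset.map_coe, List.map_ofFn, Multiset.prod_coe, List.prod_ofFn]
  rfl

end Polynomial

theorem Multiset.pos_and_even_of_mem_map_two_mul_ofFn {μ : ℕ} {L : Fin μ → ℕ}
    (hL : ∀ ν, 0 < L ν) : ∀ n ∈ (List.ofFn L : Multiset ℕ).map (2 * ·), 0 < n ∧ Even n := by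
  intro n hn
  obtain ⟨l, hl, rfl⟩ := Multiset.mem_map.mp hn
  obtain ⟨ν, rfl⟩ := List.mem_ofFn.mp hl
  exact ⟨by simpa using hL ν, even_two_mul _⟩


theorem stmt4_general (μ μ' : ℕ) (L : Fin μ → ℕ) (L' : Fin μ' → ℕ)
    (hpos : ∀ ν, 0 < L ν) (hmono : Monotone L)
    (hpos' : ∀ ν, 0 < L' ν) (hmono' : Monotone L')
    (heq : (X - C ((-1 : ℂ) ^ μ)) * ∏ ν : Fin μ, (X ^ (2 * L ν) - 1) =
           (X - C ((-1 : ℂ) ^ μ')) * ∏ ν : Fin μ', (X ^ (2 * L' ν) - 1)) :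
    μ = μ' ∧ ∀ (ν : ℕ) (h1 : ν < μ) (h2 : ν < μ'), L ⟨ν, h1⟩ = L' ⟨ν, h2⟩ := by
  have hN := Multiset.pos_and_even_of_mem_map_two_mul_ofFn hpos
  have hN' := Multiset.pos_and_even_of_mem_map_two_mul_ofFn hpos'
  rw [prod_X_pow_two_mul_sub_one_eq_multiset_prod,
    prod_X_pow_two_mul_sub_one_eq_multiset_prod] at heq
  have hμ : μ = μ' := by
    simpa using card_eq_of_X_sub_neg_one_pow_mul_multiset_prod_eq hN hN' heq
  subst hμ
  have hparts := multiset_eq_of_multiset_prod_X_pow_sub_one_eq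
    (fun n hn => (hN n hn).1) (fun n hn => (hN' n hn).1)
    (mul_left_cancel₀ (X_sub_C_ne_zero _) heq)
  have hperm : (List.ofFn L).Perm (List.ofFn L') :=
    Multiset.coe_eq_coe.mp (Multiset.map_injective (mul_right_injective₀ two_ne_zero) hparts)
  have hL : L = L' :=
    List.ofFn_injective (hperm.eq_of_sortedLE hmono.sortedLE_ofFn hmono'.sortedLE_ofFn)
  exact ⟨rfl, fun ν _ _ => congrFun hL _⟩

/-- If `ℓ⃗ = (ℓ_μ ≥ ⋯ ≥ ℓ_1)` and `ℓ⃗' = (ℓ'_{μ'} ≥ ⋯ ≥ ℓ'_1)` are partitions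
of the same integer `ℓ ≥ 1` into positive parts and
`(t - (-1)^μ)·∏_ν (t^{2ℓ_ν} - 1) = (t - (-1)^{μ'})·∏_ν (t^{2ℓ'_ν} - 1)` in `ℂ[t]`,
then `μ = μ'` and `ℓ_ν = ℓ'_ν` for all `ν`.  (Partitions are recorded as monotone functions
`Fin μ → ℕ`, the value at `ν` being the part `ℓ_{ν+1}`.) -/
theorem stmt4 (ℓ μ μ' : ℕ) (hℓ : 1 ≤ ℓ) (L : Fin μ → ℕ) (L' : Fin μ' → ℕ)
    (hpos : ∀ ν, 0 < L ν) (hmono : Monotone L) (hsum : ∑ ν, L ν = ℓ)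
    (hpos' : ∀ ν, 0 < L' ν) (hmono' : Monotone L') (hsum' : ∑ ν, L' ν = ℓ)
    (heq : (X - C ((-1 : ℂ) ^ μ)) * ∏ ν : Fin μ, (X ^ (2 * L ν) - 1) =
           (X - C ((-1 : ℂ) ^ μ')) * ∏ ν : Fin μ', (X ^ (2 * L' ν) - 1)) :
    μ = μ' ∧ ∀ (ν : ℕ) (h1 : ν < μ) (h2 : ν < μ'), L ⟨ν, h1⟩ = L' ⟨ν, h2⟩ :=
  stmt4_general μ μ' L L' hpos hmono hpos' hmono' heq
end

section
/- Let ℓ ≥ 2 and let ℓ⃗ and ℓ⃗' be partitions of ℓ into positive parts, with associated elements n_{ℓ⃗} and n_{ℓ⃗'} of SO_{2ℓ+1}(ℂ). If there exists g ∈ SO_{2ℓ+1}(ℂ) with g n_{ℓ⃗} g⁻¹ = n_{ℓ⃗'}, then ℓ⃗ = ℓ⃗'. -/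
open Matrix

namespace Stmt5

/-- The anti-diagonal matrix `K` with ones on the anti-diagonal (1-based: `K_{ij} = 1` iff
`i + j = (2ℓ+1) + 1`). -/
noncomputable def K (ℓ : ℕ) : Matrix (Fin (2*ℓ+1)) (Fin (2*ℓ+1)) ℂ :=
  Matrix.of fun i j => if (i.val + 1) + (j.val + 1) = (2*ℓ+1) + 1 then 1 else 0

/-- The matrix `s_k ∈ SO_{2ℓ+1}(ℂ)` (1-based indices). -/
noncomputable def s (ℓ k : ℕ) : Matrix (Fin (2*ℓ+1)) (Fin (2*ℓ+1)) ℂ :=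
  Matrix.of fun i j =>
    if i = j ∧ i.val + 1 ≠ k ∧ i.val + 1 ≠ k + 1 ∧
        i.val + 1 ≠ 2*ℓ - k + 1 ∧ i.val + 1 ≠ 2*ℓ - k + 2 then 1
    else if i ≠ j ∧ ((i.val + 1 = k ∧ j.val + 1 = k + 1) ∨
        (i.val + 1 = k + 1 ∧ j.val + 1 = k)) then 1
    else if i ≠ j ∧ ((i.val + 1 = 2*ℓ - k + 1 ∧ j.val + 1 = 2*ℓ - k + 2) ∨
        (i.val + 1 = 2*ℓ - k + 2 ∧ j.val + 1 = 2*ℓ - k + 1)) then 1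
    else 0

/-- The matrix `t_ℓ ∈ SO_{2ℓ+1}(ℂ)`. -/
noncomputable def tTop (ℓ : ℕ) : Matrix (Fin (2*ℓ+1)) (Fin (2*ℓ+1)) ℂ :=
  Matrix.of fun i j =>
    if i = j ∧ (i.val + 1 < ℓ ∨ ℓ + 2 < i.val + 1) then 1
    else if i ≠ j ∧ ((i.val + 1 = ℓ ∧ j.val + 1 = ℓ + 2) ∨
        (i.val + 1 = ℓ + 2 ∧ j.val + 1 = ℓ)) then 1
    else if i = j ∧ i.val + 1 = ℓ + 1 then -1
    else 0

/-- `t_k = s_k s_{k+1} ⋯ s_{ℓ-1} · t_ℓ · s_{ℓ-1} ⋯ s_{k+1} s_k`. -/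
noncomputable def t (ℓ k : ℕ) : Matrix (Fin (2*ℓ+1)) (Fin (2*ℓ+1)) ℂ :=
  (List.ofFn fun a : Fin (ℓ - k) => s ℓ (k + a.val)).prod * tTop ℓ *
  (List.ofFn fun a : Fin (ℓ - k) => s ℓ (ℓ - 1 - a.val)).prod

/-- `n_{ℓ⃗} = ∏_{ν=1}^{μ} ( s_{ℓ'_ν+1} ⋯ s_{ℓ'_ν+ℓ_ν-1} · t_{ℓ'_ν+ℓ_ν} )`. -/
noncomputable def n (ℓ μ : ℕ) (L : Fin μ → ℕ) : Matrix (Fin (2*ℓ+1)) (Fin (2*ℓ+1)) ℂ :=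
  (List.ofFn fun ν : Fin μ =>
    (List.ofFn fun a : Fin (L ν - 1) =>
      s ℓ ((∑ j ∈ Finset.Iio ν, L j) + a.val + 1)).prod *
    t ℓ ((∑ j ∈ Finset.Iio ν, L j) + L ν)).prod

/-!
The generators `s_k`, `t_k` are signed permutation matrices, and so is `n_{ℓ⃗}`: the part `ℓ_ν`
contributes a `2ℓ_ν`-cycle through the indices `ℓ'_ν + 1, …, ℓ'_ν + ℓ_ν` and their mirror images
under `i ↦ 2ℓ + 2 - i`, while the middle index `ℓ + 1` is fixed with sign `(-1)^μ`. Counting fixed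
points gives `tr (n_{ℓ⃗} ^ (2k)) = 1 + 2 ∑_{ℓ_ν ∣ k} ℓ_ν`. Traces are invariant under conjugation,
so these divisor sums agree for `ℓ⃗` and `ℓ⃗'`, and strong induction on `d` shows that `d` occurs
equally often as a part of both. Sorted lists with the same multiplicities are equal.
-/

lemma add_mod_eq_self_iff {n q m : ℕ} (hq : q < n) : (q + m) % n = q ↔ n ∣ m := by
  have : (q + m) % n = q ↔ q + m ≡ q + 0 [MOD n] := by rw [Nat.ModEq, add_zero, Nat.mod_eq_of_lt hq]
  rw [this, ← Nat.modEq_zero_iff_dvd]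
  exact ⟨Nat.ModEq.add_left_cancel' q, Nat.ModEq.add_left q⟩

lemma sum_filter_dvd_eq_sum_divisors {d : ℕ} (hd : d ≠ 0) (as : List ℕ) :
    (as.filter (· ∣ d)).sum = ∑ e ∈ d.divisors, e * as.count e := by
  induction as with
  | nil => simp
  | cons a as ih =>
    have hcount : ∑ e ∈ d.divisors, e * (if a = e then 1 else 0) = if a ∣ d then a else 0 := by
      simp only [mul_ite, mul_one, mul_zero, Finset.sum_ite_eq, Nat.mem_divisors, hd, ne_eq,
        not_false_eq_true, and_true]
    simp only [List.filter_cons, decide_eq_true_eq, List.count_cons, beq_iff_eq, mul_add,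
      Finset.sum_add_distrib, ← ih, hcount]
    split_ifs <;> simp [add_comm]

lemma perm_of_sum_filter_dvd_eq {as bs : List ℕ} (hpos : ∀ a ∈ as, 0 < a)
    (hpos' : ∀ b ∈ bs, 0 < b) (h : ∀ k, (as.filter (· ∣ k)).sum = (bs.filter (· ∣ k)).sum) :
    as.Perm bs := by
  rw [List.perm_iff_count]
  intro d
  induction d using Nat.strong_induction_on with
  | _ d ih =>
    rcases Nat.eq_zero_or_pos d with rfl | hd
    · rw [List.count_eq_zero.mpr fun h0 => (hpos 0 h0).ne rfl,
        List.count_eq_zero.mpr fun h0 => (hpos' 0 h0).ne rfl]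
    · have hk := h d
      rw [sum_filter_dvd_eq_sum_divisors hd.ne', sum_filter_dvd_eq_sum_divisors hd.ne',
        ← Nat.cons_self_properDivisors hd.ne', Finset.sum_cons, Finset.sum_cons,
        Finset.sum_congr rfl fun e he => by rw [ih e (Nat.mem_properDivisors.mp he).2]] at hk
      exact Nat.eq_of_mul_eq_mul_left hd (by omega)

lemma trace_conj_pow {ι R : Type*} [Fintype ι] [DecidableEq ι] [CommRing R]
    {g : Matrix ι ι R} (hg : IsUnit g.det) (A : Matrix ι ι R) (m : ℕ) :
    ((g * A * g⁻¹) ^ m).trace = (A ^ m).trace :=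
  (congrArg Matrix.trace (Units.conj_pow (Matrix.nonsingInvUnit g hg) A m)).trans
    (Matrix.trace_units_conj _ _)

lemma eq_and_apply_eq_of_ofFn_eq {α : Type*} {m n : ℕ} {f : Fin m → α} {g : Fin n → α}
    (h : List.ofFn f = List.ofFn g) :
    m = n ∧ ∀ i (hm : i < m) (hn : i < n), f ⟨i, hm⟩ = g ⟨i, hn⟩ := by
  obtain rfl : m = n := by simpa using congrArg List.length h
  exact ⟨rfl, fun i hm _ => congrFun (List.ofFn_injective h) ⟨i, hm⟩⟩

lemma sum_Iio_eq_sum_take {M : Type*} [AddCommMonoid M] {μ : ℕ} (L : Fin μ → M) (ν : Fin μ) :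
    ∑ j ∈ Finset.Iio ν, L j = ((List.ofFn L).take ν).sum := by
  rw [List.sum_take_ofFn]
  refine Finset.sum_congr ?_ fun _ _ => rfl
  ext j
  simp only [Finset.mem_Iio, Finset.mem_filter, Finset.mem_univ, true_and, Fin.lt_def]

section MonomialMatrix

variable {R : Type*} [CommSemiring R] (N : ℕ)

/-- Rows and columns are addressed by `0`-based natural numbers, so that all index arithmetic
below is linear arithmetic on `ℕ`. -/
def monomialMatrix (f : ℕ → ℕ) (ε : ℕ → R) : Matrix (Fin N) (Fin N) R :=
  Matrix.of fun i j => if (i : ℕ) = f j then ε j else 0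

variable {N}

lemma monomialMatrix_apply (f : ℕ → ℕ) (ε : ℕ → R) (i j : Fin N) :
    monomialMatrix N f ε i j = if (i : ℕ) = f j then ε j else 0 := rfl

lemma monomialMatrix_congr {f f' : ℕ → ℕ} {ε ε' : ℕ → R} (hf : ∀ x < N, f x = f' x)
    (hε : ∀ x < N, ε x = ε' x) : monomialMatrix N f ε = monomialMatrix N f' ε' := by
  ext i j
  rw [monomialMatrix_apply, monomialMatrix_apply, hf j j.isLt, hε j j.isLt]

lemma monomialMatrix_id_one : monomialMatrix N id (fun _ => (1 : R)) = 1 := by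
  ext i j
  simp only [monomialMatrix_apply, id_eq, Matrix.one_apply, Fin.val_inj]

lemma monomialMatrix_mul {g : ℕ → ℕ} (hg : ∀ x < N, g x < N) (f : ℕ → ℕ) (ε δ : ℕ → R) :
    monomialMatrix N f ε * monomialMatrix N g δ =
      monomialMatrix N (f ∘ g) (fun x => δ x * ε (g x)) := by
  ext i j
  rw [Matrix.mul_apply, Finset.sum_eq_single ⟨g j, hg j j.isLt⟩]
  · simp [monomialMatrix_apply, mul_comm]
  · intro k _ hk
    simp [monomialMatrix_apply, Fin.ext_iff.not.mp hk]
  · simp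

lemma monomialMatrix_pow {f : ℕ → ℕ} (hf : ∀ x < N, f x < N) {ε : ℕ → R}
    (hε : ∀ x < N, ε (f x) = ε x) (m : ℕ) :
    monomialMatrix N f ε ^ m = monomialMatrix N f^[m] (fun x => ε x ^ m) := by
  induction m with
  | zero => simp [← monomialMatrix_id_one]
  | succ m ih =>
    rw [pow_succ, ih, monomialMatrix_mul hf, ← Function.iterate_succ]
    exact monomialMatrix_congr (fun _ _ => rfl) fun x hx => by rw [hε x hx, pow_succ, mul_comm]

lemma trace_monomialMatrix (f : ℕ → ℕ) (ε : ℕ → R) :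
    (monomialMatrix N f ε).trace = ∑ x ∈ Finset.range N, if x = f x then ε x else 0 :=
  (Finset.sum_range fun x => if x = f x then ε x else 0).symm

end MonomialMatrix

section Generators

variable (ℓ : ℕ)

/-- The permutation underlying `s_k`; unlike `s`, it acts on `0`-based indices. -/
def sPerm (k : ℕ) : ℕ → ℕ := fun x =>
  if x + 1 = k then x + 1 else if x + 1 = k + 1 then x - 1
  else if x + 1 = 2*ℓ - k + 1 then x + 1 else if x + 1 = 2*ℓ - k + 2 then x - 1 else x

def tPerm (k : ℕ) : ℕ → ℕ := fun x =>
  if x + 1 = k then 2*ℓ + 1 - k else if x + 1 = 2*ℓ + 2 - k then k - 1 else x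

def midSign : ℕ → ℂ := fun x => if x = ℓ then -1 else 1

variable {ℓ}

/- The `_cases` lemmas describe a map by linear constraints free of truncated subtraction, so that
`omega` can compose them. -/
lemma sPerm_cases {k : ℕ} (hk1 : 1 ≤ k) (hk : k ≤ ℓ) (x : ℕ) :
    (x + 1 = k ∧ sPerm ℓ k x = x + 1) ∨ (x = k ∧ sPerm ℓ k x + 1 = x) ∨
    (x + k = 2*ℓ ∧ sPerm ℓ k x = x + 1) ∨ (x + k = 2*ℓ + 1 ∧ sPerm ℓ k x + 1 = x) ∨
    (x + 1 ≠ k ∧ x ≠ k ∧ x + k ≠ 2*ℓ ∧ x + k ≠ 2*ℓ + 1 ∧ sPerm ℓ k x = x) := by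
  unfold sPerm; split_ifs <;> omega

lemma tPerm_cases {k : ℕ} (hk1 : 1 ≤ k) (hk : k ≤ ℓ) (x : ℕ) :
    (x + 1 = k ∧ tPerm ℓ k x + k = 2*ℓ + 1) ∨ (x + k = 2*ℓ + 1 ∧ tPerm ℓ k x + 1 = k) ∨
    (x + 1 ≠ k ∧ x + k ≠ 2*ℓ + 1 ∧ tPerm ℓ k x = x) := by
  unfold tPerm; split_ifs <;> omega

lemma sPerm_lt {k : ℕ} (hk1 : 1 ≤ k) (hk : k < ℓ) : ∀ x < 2*ℓ+1, sPerm ℓ k x < 2*ℓ+1 := by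
  intro x hx; unfold sPerm; split_ifs <;> omega

lemma tPerm_lt {k : ℕ} (hk : k ≤ ℓ) : ∀ x < 2*ℓ+1, tPerm ℓ k x < 2*ℓ+1 := by
  intro x hx; unfold tPerm; split_ifs <;> omega

lemma sPerm_eq_mid_iff {k : ℕ} (hk : k < ℓ) (x : ℕ) : sPerm ℓ k x = ℓ ↔ x = ℓ := by
  unfold sPerm; split_ifs <;> omega

lemma s_eq_monomialMatrix {k : ℕ} (hk1 : 1 ≤ k) (hk : k < ℓ) :
    s ℓ k = monomialMatrix _ (sPerm ℓ k) (fun _ => 1) := by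
  ext i j
  have := i.isLt; have := j.isLt
  simp only [s, monomialMatrix_apply, Matrix.of_apply, sPerm, Fin.ext_iff, ne_eq]
  split_ifs <;> first | rfl | omega

lemma tTop_eq_monomialMatrix : tTop ℓ = monomialMatrix _ (tPerm ℓ ℓ) (midSign ℓ) := by
  ext i j
  have := i.isLt; have := j.isLt
  simp only [tTop, monomialMatrix_apply, Matrix.of_apply, tPerm, midSign, Fin.ext_iff, ne_eq]
  split_ifs <;> first | rfl | omega

lemma t_eq_s_mul_t_succ_mul_s {k : ℕ} (hk : k < ℓ) : t ℓ k = s ℓ k * t ℓ (k+1) * s ℓ k := by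
  obtain ⟨d, hd⟩ : ∃ d, ℓ - k = d + 1 := ⟨ℓ - k - 1, by omega⟩
  unfold t
  rw [hd, show ℓ - (k+1) = d by omega, List.ofFn_succ, List.ofFn_succ', List.prod_cons,
    List.concat_eq_append, List.prod_append, List.prod_singleton]
  simp only [Fin.val_zero, Fin.val_succ, Fin.val_castSucc, Fin.val_last, add_zero,
    show ℓ - 1 - d = k by omega, ← add_assoc, add_right_comm k]
  noncomm_ring

lemma sPerm_tPerm_sPerm {k : ℕ} (hk1 : 1 ≤ k) (hk : k < ℓ) (x : ℕ) :
    sPerm ℓ k (tPerm ℓ (k+1) (sPerm ℓ k x)) = tPerm ℓ k x := by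
  have := sPerm_cases hk1 hk.le x
  have := tPerm_cases (k := k + 1) (by omega) hk (sPerm ℓ k x)
  have := sPerm_cases hk1 hk.le (tPerm ℓ (k+1) (sPerm ℓ k x))
  have := tPerm_cases hk1 hk.le x
  omega

lemma t_eq_monomialMatrix {k : ℕ} (hk1 : 1 ≤ k) (hk : k ≤ ℓ) :
    t ℓ k = monomialMatrix _ (tPerm ℓ k) (midSign ℓ) := by
  induction hk using Nat.decreasingInduction with
  | self => simp [t, tTop_eq_monomialMatrix]
  | of_succ k hk ih =>
    rw [t_eq_s_mul_t_succ_mul_s hk, ih (by omega), s_eq_monomialMatrix hk1 hk,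
      monomialMatrix_mul (tPerm_lt hk), monomialMatrix_mul (sPerm_lt hk1 hk)]
    refine monomialMatrix_congr (fun x _ => sPerm_tPerm_sPerm hk1 hk x) fun x _ => ?_
    simp only [one_mul, mul_one, midSign, sPerm_eq_mid_iff hk]

end Generators

section Blocks

variable (ℓ : ℕ)

noncomputable def sProd (p r : ℕ) : Matrix (Fin (2*ℓ+1)) (Fin (2*ℓ+1)) ℂ :=
  (List.ofFn fun a : Fin r => s ℓ (p + a + 1)).prod

def sProdPerm (p r : ℕ) : ℕ → ℕ := fun x =>
  if p + 1 ≤ x + 1 ∧ x + 1 ≤ p + r then x + 1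
  else if x + 1 = p + r + 1 then p
  else if 2*ℓ + 2 - (p + r) ≤ x + 1 ∧ x + 1 ≤ 2*ℓ + 1 - p then x - 1
  else if x + 1 = 2*ℓ + 1 - (p + r) then 2*ℓ - p
  else x

/-- The factor of `n_{ℓ⃗}` contributed by the part `a = ℓ_ν`, with `p = ℓ'_ν`. -/
noncomputable def block (p a : ℕ) : Matrix (Fin (2*ℓ+1)) (Fin (2*ℓ+1)) ℂ :=
  sProd ℓ p (a - 1) * t ℓ (p + a)

/-- The permutation underlying `block ℓ p a`: a `2a`-cycle running up through the `0`-based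
indices `p, …, p+a-1`, jumping to the mirror image `2ℓ-p` of `p` and running down to
`2ℓ+1-p-a`. -/
def blockPerm (p a : ℕ) : ℕ → ℕ := fun x =>
  if p + 1 ≤ x + 1 ∧ x + 1 ≤ p + a - 1 then x + 1
  else if x + 1 = p + a then 2*ℓ - p
  else if x + 1 = 2*ℓ + 2 - (p + a) then p
  else if 2*ℓ + 2 - (p + a) < x + 1 ∧ x + 1 ≤ 2*ℓ + 1 - p then x - 1
  else x

variable {ℓ}

lemma sProdPerm_cases {p r : ℕ} (h : p + r ≤ ℓ) (x : ℕ) :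
    (p ≤ x ∧ x < p + r ∧ sProdPerm ℓ p r x = x + 1) ∨
    (x = p + r ∧ sProdPerm ℓ p r x = p) ∨
    (2*ℓ + 1 ≤ x + p + r ∧ x + p ≤ 2*ℓ ∧ sProdPerm ℓ p r x + 1 = x) ∨
    (x + p + r = 2*ℓ ∧ sProdPerm ℓ p r x + p = 2*ℓ) ∨
    ((x < p ∨ p + r < x) ∧ (x + p + r < 2*ℓ ∨ 2*ℓ < x + p) ∧ sProdPerm ℓ p r x = x) := by
  unfold sProdPerm; split_ifs <;> omega

lemma blockPerm_cases {p a : ℕ} (h : p + a ≤ ℓ) (x : ℕ) :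
    (p ≤ x ∧ x + 1 < p + a ∧ blockPerm ℓ p a x = x + 1) ∨
    (x + 1 = p + a ∧ blockPerm ℓ p a x + p = 2*ℓ) ∨
    (x + p + a = 2*ℓ + 1 ∧ blockPerm ℓ p a x = p) ∨
    (2*ℓ + 1 < x + p + a ∧ x + p ≤ 2*ℓ ∧ blockPerm ℓ p a x + 1 = x) ∨
    ((x < p ∨ p + a ≤ x) ∧ (x + p + a ≤ 2*ℓ ∨ 2*ℓ < x + p) ∧ blockPerm ℓ p a x = x) := by
  unfold blockPerm; split_ifs <;> omega

lemma sProd_eq_monomialMatrix (p : ℕ) {r : ℕ} (h : p + r + 1 ≤ ℓ) :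
    sProd ℓ p r = monomialMatrix _ (sProdPerm ℓ p r) (fun _ => 1) := by
  induction r with
  | zero =>
    rw [sProd, List.ofFn_zero, List.prod_nil, ← monomialMatrix_id_one]
    exact monomialMatrix_congr (fun x _ => by simp only [sProdPerm, id]; split_ifs <;> omega)
      fun _ _ => rfl
  | succ r ih =>
    have hk : 1 ≤ p + r + 1 ∧ p + r + 1 < ℓ := by omega
    have hsucc : sProd ℓ p (r + 1) = sProd ℓ p r * s ℓ (p + r + 1) := by
      rw [sProd, sProd, List.ofFn_succ', List.prod_concat, Fin.val_last]
      simp only [Fin.val_castSucc]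
    rw [hsucc, ih (by omega), s_eq_monomialMatrix hk.1 hk.2,
      monomialMatrix_mul (sPerm_lt hk.1 hk.2)]
    refine monomialMatrix_congr (fun x _ => ?_) fun _ _ => mul_one 1
    have := sPerm_cases hk.1 hk.2.le x
    have := sProdPerm_cases (by omega : p + r ≤ ℓ) (sPerm ℓ (p + r + 1) x)
    have := sProdPerm_cases (by omega : p + (r + 1) ≤ ℓ) x
    simp only [Function.comp_apply]
    omega

lemma blockPerm_lt {p a : ℕ} (h : p + a ≤ ℓ) :
    ∀ x < 2*ℓ+1, blockPerm ℓ p a x < 2*ℓ+1 := by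
  intro x hx; unfold blockPerm; split_ifs <;> omega

lemma blockPerm_eq_mid_iff {p a : ℕ} (ha : 1 ≤ a) (h : p + a ≤ ℓ) (x : ℕ) :
    blockPerm ℓ p a x = ℓ ↔ x = ℓ := by
  unfold blockPerm; split_ifs <;> omega

lemma block_eq_monomialMatrix {p a : ℕ} (ha : 1 ≤ a) (h : p + a ≤ ℓ) :
    block ℓ p a = monomialMatrix _ (blockPerm ℓ p a) (midSign ℓ) := by
  rw [block, sProd_eq_monomialMatrix p (by omega), t_eq_monomialMatrix (by omega) h,
    monomialMatrix_mul (tPerm_lt h)]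
  refine monomialMatrix_congr (fun x hx => ?_) fun x _ => mul_one _
  have := tPerm_cases (by omega) h x
  have := sProdPerm_cases (by omega : p + (a - 1) ≤ ℓ) (tPerm ℓ (p + a) x)
  have := blockPerm_cases h x
  simp only [Function.comp_apply]
  omega

end Blocks

section Partitions

variable (ℓ : ℕ)

def nPerm : ℕ → List ℕ → ℕ → ℕ
  | _, [] => id
  | p, a :: as => blockPerm ℓ p a ∘ nPerm (p + a) as

noncomputable def nProd : ℕ → List ℕ → Matrix (Fin (2*ℓ+1)) (Fin (2*ℓ+1)) ℂ
  | _, [] => 1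
  | p, a :: as => block ℓ p a * nProd (p + a) as

variable {ℓ}

lemma nPerm_lt {as : List ℕ} {p : ℕ} (hsum : p + as.sum ≤ ℓ) :
    ∀ x < 2*ℓ+1, nPerm ℓ p as x < 2*ℓ+1 := by
  induction as generalizing p with
  | nil => exact fun x hx => hx
  | cons a as ih =>
    rw [List.sum_cons] at hsum
    exact fun x hx => blockPerm_lt (by omega) _ (ih (by omega) x hx)

lemma nPerm_eq_mid_iff {as : List ℕ} {p : ℕ} (hpos : ∀ b ∈ as, 0 < b) (hsum : p + as.sum ≤ ℓ)
    (x : ℕ) : nPerm ℓ p as x = ℓ ↔ x = ℓ := by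
  induction as generalizing p with
  | nil => rfl
  | cons a as ih =>
    simp only [List.forall_mem_cons, List.sum_cons] at hpos hsum
    rw [nPerm, Function.comp_apply, blockPerm_eq_mid_iff (p := p) hpos.1 (by omega),
      ih hpos.2 (by omega)]

lemma nProd_eq_monomialMatrix {as : List ℕ} {p : ℕ} (hpos : ∀ b ∈ as, 0 < b)
    (hsum : p + as.sum ≤ ℓ) :
    nProd ℓ p as =
      monomialMatrix _ (nPerm ℓ p as) (fun x => if x = ℓ then (-1) ^ as.length else 1) := by
  induction as generalizing p with
  | nil =>
    exact monomialMatrix_id_one.symm.trans (monomialMatrix_congr (fun _ _ => rfl) (by simp))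
  | cons a as ih =>
    simp only [List.forall_mem_cons, List.sum_cons] at hpos hsum
    rw [nProd, ih hpos.2 (by omega), block_eq_monomialMatrix hpos.1 (by omega),
      monomialMatrix_mul (nPerm_lt (by omega))]
    refine monomialMatrix_congr (fun _ _ => rfl) fun x _ => ?_
    simp only [midSign, nPerm_eq_mid_iff (ℓ := ℓ) (p := p + a) hpos.2 (by omega),
      List.length_cons, pow_succ]
    split_ifs <;> ring

lemma nProd_ofFn (p : ℕ) {μ : ℕ} (L : Fin μ → ℕ) :
    nProd ℓ p (List.ofFn L) =
      (List.ofFn fun ν => block ℓ (p + ∑ j ∈ Finset.Iio ν, L j) (L ν)).prod := by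
  induction μ generalizing p with
  | zero => rfl
  | succ μ ih =>
    have hsucc (ν : Fin μ) :
        ∑ j ∈ Finset.Iio ν.succ, L j = L 0 + ∑ j ∈ Finset.Iio ν, L j.succ := by
      rw [sum_Iio_eq_sum_take, sum_Iio_eq_sum_take, List.ofFn_succ, Fin.val_succ,
        List.take_succ_cons, List.sum_cons]
    rw [List.ofFn_succ, nProd, ih, List.ofFn_succ, List.prod_cons]
    simp only [hsucc, sum_Iio_eq_sum_take L 0, Fin.val_zero, List.take_zero, List.sum_nil,
      add_zero, add_assoc]

lemma n_eq_nProd (μ : ℕ) (L : Fin μ → ℕ) : n ℓ μ L = nProd ℓ 0 (List.ofFn L) := by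
  simp only [nProd_ofFn, zero_add]
  rfl

end Partitions

section CycleStructure

variable {ℓ : ℕ}

variable (ℓ) in
def blockSupport (p s : ℕ) : Finset ℕ :=
  (Finset.range (2*ℓ+1)).filter fun x => (p ≤ x ∧ x < p + s) ∨ (2*ℓ + 1 ≤ x + p + s ∧ x + p ≤ 2*ℓ)

lemma mem_blockSupport {p s x : ℕ} (h : p + s ≤ ℓ) :
    x ∈ blockSupport ℓ p s ↔ (p ≤ x ∧ x < p + s) ∨ (2*ℓ + 1 ≤ x + p + s ∧ x + p ≤ 2*ℓ) := by
  simp only [blockSupport, Finset.mem_filter, Finset.mem_range, and_iff_right_iff_imp]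
  omega

variable (ℓ) in
/-- The `q`-th point, `q < 2a`, of the cycle `blockPerm ℓ p a` started at `p`. -/
def cyclePoint (p a q : ℕ) : ℕ := if q < a then p + q else 2*ℓ - p - (q - a)

lemma cyclePoint_cases {p a q : ℕ} (h : p + a ≤ ℓ) (hq : q < 2*a) :
    (q < a ∧ cyclePoint ℓ p a q = p + q) ∨ (a ≤ q ∧ cyclePoint ℓ p a q + p + q = 2*ℓ + a) := by
  unfold cyclePoint; split_ifs <;> omega

lemma cyclePoint_injOn {p a : ℕ} (h : p + a ≤ ℓ) :
    Set.InjOn (cyclePoint ℓ p a) (Finset.range (2*a)) := by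
  intro q hq q' hq' he
  simp only [Finset.coe_range, Set.mem_Iio] at hq hq'
  have := cyclePoint_cases h hq
  have := cyclePoint_cases h hq'
  omega

lemma image_cyclePoint {p a : ℕ} (h : p + a ≤ ℓ) :
    (Finset.range (2*a)).image (cyclePoint ℓ p a) = blockSupport ℓ p a := by
  ext x
  simp only [Finset.mem_image, Finset.mem_range, mem_blockSupport h]
  constructor
  · rintro ⟨q, hq, rfl⟩
    have := cyclePoint_cases h hq
    omega
  · intro hx
    refine ⟨if x < p + a then x - p else a + (2*ℓ - p - x), by split_ifs <;> omega, ?_⟩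
    have := cyclePoint_cases h (q := if x < p + a then x - p else a + (2*ℓ - p - x))
      (by split_ifs <;> omega)
    split_ifs at this ⊢ <;> omega

lemma blockPerm_cyclePoint {p a q : ℕ} (h : p + a ≤ ℓ) (hq : q < 2*a) :
    blockPerm ℓ p a (cyclePoint ℓ p a q) = cyclePoint ℓ p a ((q + 1) % (2*a)) := by
  have hq' : (q + 1) % (2*a) = if q + 1 < 2*a then q + 1 else 0 := by
    split_ifs with hlt
    · exact Nat.mod_eq_of_lt hlt
    · rw [show q + 1 = 2*a by omega, Nat.mod_self]
  have := cyclePoint_cases h hq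
  have := cyclePoint_cases h (Nat.mod_lt (q + 1) (by omega : 2*a > 0))
  have := blockPerm_cases h (cyclePoint ℓ p a q)
  split_ifs at hq' <;> omega

lemma blockPerm_eq_self {p a x : ℕ} (ha : 0 < a) (h : p + a ≤ ℓ) (hx : x ∉ blockSupport ℓ p a) :
    blockPerm ℓ p a x = x := by
  rw [mem_blockSupport h] at hx
  have := blockPerm_cases h x
  omega

lemma nPerm_eq_self {as : List ℕ} {p₀ x : ℕ} (hpos : ∀ b ∈ as, 0 < b) (hsum : p₀ + as.sum ≤ ℓ)
    (hx : x ∉ blockSupport ℓ p₀ as.sum) : nPerm ℓ p₀ as x = x := by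
  induction as generalizing p₀ with
  | nil => rfl
  | cons b bs ih =>
    simp only [List.forall_mem_cons, List.sum_cons] at hpos hsum hx
    rw [mem_blockSupport hsum] at hx
    rw [nPerm, Function.comp_apply, ih hpos.2 (by omega), blockPerm_eq_self hpos.1 (by omega)] <;>
      rw [mem_blockSupport (by omega)] <;> omega

/-- `IsBlock p₀ as p a`: the parts `as`, laid out from offset `p₀` on, contain a part `a` that
starts at offset `p`. -/
def IsBlock : ℕ → List ℕ → ℕ → ℕ → Prop
  | _, [], _, _ => False
  | p₀, b :: bs, p, a => (p = p₀ ∧ a = b) ∨ IsBlock (p₀ + b) bs p a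

lemma IsBlock.bounds {as : List ℕ} {p₀ p a : ℕ} (hblk : IsBlock p₀ as p a)
    (hpos : ∀ b ∈ as, 0 < b) : p₀ ≤ p ∧ 0 < a ∧ p + a ≤ p₀ + as.sum := by
  induction as generalizing p₀ with
  | nil => exact hblk.elim
  | cons b bs ih =>
    simp only [List.forall_mem_cons, List.sum_cons] at hpos ⊢
    rcases hblk with ⟨rfl, rfl⟩ | hblk
    · omega
    · have := ih hblk hpos.2
      omega

lemma nPerm_cyclePoint {as : List ℕ} {p₀ p a q : ℕ} (hpos : ∀ b ∈ as, 0 < b)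
    (hsum : p₀ + as.sum ≤ ℓ) (hblk : IsBlock p₀ as p a) (hq : q < 2*a) :
    nPerm ℓ p₀ as (cyclePoint ℓ p a q) = cyclePoint ℓ p a ((q + 1) % (2*a)) := by
  induction as generalizing p₀ with
  | nil => exact hblk.elim
  | cons b bs ih =>
    have hbd := hblk.bounds hpos
    simp only [List.forall_mem_cons, List.sum_cons] at hpos hsum hbd
    rw [nPerm, Function.comp_apply]
    rcases hblk with ⟨rfl, rfl⟩ | hblk
    · rw [nPerm_eq_self hpos.2 (by omega), blockPerm_cyclePoint (by omega) hq]
      rw [mem_blockSupport (by omega)]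
      have := cyclePoint_cases (by omega : p + a ≤ ℓ) hq
      omega
    · have := hblk.bounds hpos.2
      have hq' := Nat.mod_lt (q + 1) (by omega : 2*a > 0)
      rw [ih hpos.2 (by omega) hblk, blockPerm_eq_self hpos.1 (by omega)]
      rw [mem_blockSupport (by omega)]
      have := cyclePoint_cases (by omega : p + a ≤ ℓ) hq'
      omega

lemma iterate_nPerm_cyclePoint {as : List ℕ} {p₀ p a q : ℕ} (hpos : ∀ b ∈ as, 0 < b)
    (hsum : p₀ + as.sum ≤ ℓ) (hblk : IsBlock p₀ as p a) (hq : q < 2*a) (m : ℕ) :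
    (nPerm ℓ p₀ as)^[m] (cyclePoint ℓ p a q) = cyclePoint ℓ p a ((q + m) % (2*a)) := by
  induction m with
  | zero => rw [Function.iterate_zero_apply, add_zero, Nat.mod_eq_of_lt hq]
  | succ m ih =>
    rw [Function.iterate_succ_apply', ih, nPerm_cyclePoint hpos hsum hblk (Nat.mod_lt _ (by omega)),
      Nat.mod_add_mod, add_assoc]

end CycleStructure

section Trace

open Finset

variable {ℓ : ℕ}

lemma card_fixedPoints_blockSupport {as : List ℕ} {p₀ p a : ℕ} (hpos : ∀ b ∈ as, 0 < b)
    (hsum : p₀ + as.sum ≤ ℓ) (hblk : IsBlock p₀ as p a) (m : ℕ) :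
    #{x ∈ blockSupport ℓ p a | (nPerm ℓ p₀ as)^[m] x = x} = if 2*a ∣ m then 2*a else 0 := by
  obtain ⟨-, ha, hpa⟩ := hblk.bounds hpos
  have hinj := cyclePoint_injOn (show p + a ≤ ℓ by omega)
  have hfix : ∀ q ∈ range (2*a),
      (nPerm ℓ p₀ as)^[m] (cyclePoint ℓ p a q) = cyclePoint ℓ p a q ↔ 2*a ∣ m := by
    intro q hq
    have hq' := mem_range.mp hq
    rw [iterate_nPerm_cyclePoint hpos hsum hblk hq',
      hinj.eq_iff (by simp [Nat.mod_lt _ (show 2*a > 0 by omega)]) hq, add_mod_eq_self_iff hq']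
  rw [← image_cyclePoint (by omega), filter_image,
    card_image_of_injOn (hinj.mono (coe_subset.mpr (filter_subset _ _)))]
  split_ifs with h
  · rw [filter_true_of_mem fun q hq => (hfix q hq).mpr h, card_range]
  · rw [filter_false_of_mem fun q hq => mt (hfix q hq).mp h, card_empty]

lemma blockSupport_add {p b s : ℕ} (h : p + b + s ≤ ℓ) :
    blockSupport ℓ p (b + s) = blockSupport ℓ p b ∪ blockSupport ℓ (p + b) s := by
  ext x
  rw [mem_union, mem_blockSupport (by omega), mem_blockSupport (by omega),
    mem_blockSupport (by omega)]
  omega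

lemma disjoint_blockSupport_add {p b s : ℕ} (h : p + b + s ≤ ℓ) :
    Disjoint (blockSupport ℓ p b) (blockSupport ℓ (p + b) s) := by
  rw [disjoint_left]
  intro x hx hx'
  rw [mem_blockSupport (by omega)] at hx hx'
  omega

lemma card_fixedPoints_blockSupport_sum {as₀ : List ℕ} {p₀ : ℕ} (hpos₀ : ∀ b ∈ as₀, 0 < b)
    (hsum₀ : p₀ + as₀.sum ≤ ℓ) (m : ℕ) {as : List ℕ} {p : ℕ} (hsum : p + as.sum ≤ ℓ)
    (hsub : ∀ p' a', IsBlock p as p' a' → IsBlock p₀ as₀ p' a') :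
    #{x ∈ blockSupport ℓ p as.sum | (nPerm ℓ p₀ as₀)^[m] x = x} =
      2 * (as.filter (2 * · ∣ m)).sum := by
  induction as generalizing p with
  | nil => simp [blockSupport]
  | cons b bs ih =>
    rw [List.sum_cons] at hsum ⊢
    rw [blockSupport_add (by omega), filter_union,
      card_union_of_disjoint (disjoint_filter_filter (disjoint_blockSupport_add (by omega))),
      card_fixedPoints_blockSupport hpos₀ hsum₀ (hsub p b (Or.inl ⟨rfl, rfl⟩)),
      ih (by omega) fun p' a' h => hsub p' a' (Or.inr h), List.filter_cons]
    split_ifs with h <;> simp_all [mul_add]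

lemma range_eq_insert_blockSupport : range (2*ℓ+1) = insert ℓ (blockSupport ℓ 0 ℓ) := by
  ext x
  rw [mem_insert, mem_range, mem_blockSupport (by omega)]
  omega

lemma trace_nProd_pow {as : List ℕ} (hpos : ∀ b ∈ as, 0 < b) (hsum : as.sum = ℓ) (m : ℕ) :
    ((nProd ℓ 0 as)^m).trace =
      ((-1) ^ as.length) ^ m + 2 * ((as.filter (2 * · ∣ m)).sum : ℂ) := by
  have hsum' : 0 + as.sum ≤ ℓ := by omega
  have hmid : ℓ ∉ blockSupport ℓ 0 ℓ := by rw [mem_blockSupport (p := 0) (by omega)]; omega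
  rw [nProd_eq_monomialMatrix hpos hsum',
    monomialMatrix_pow (nPerm_lt hsum') (fun x _ => by simp only [nPerm_eq_mid_iff hpos hsum']),
    trace_monomialMatrix, range_eq_insert_blockSupport, sum_insert hmid,
    Function.iterate_fixed ((nPerm_eq_mid_iff hpos hsum' ℓ).mpr rfl), if_pos rfl,
    if_pos rfl]
  congr 1
  have hcard : (#{x ∈ blockSupport ℓ 0 ℓ | (nPerm ℓ 0 as)^[m] x = x} : ℂ) =
      2 * ((as.filter (2 * · ∣ m)).sum : ℂ) := by
    have := card_fixedPoints_blockSupport_sum hpos hsum' m hsum' fun _ _ h => h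
    rw [hsum] at this
    exact_mod_cast this
  rw [← hcard, card_filter, Nat.cast_sum]
  refine sum_congr rfl fun x hx => ?_
  rw [if_neg (ne_of_mem_of_not_mem hx hmid), one_pow]
  simp only [eq_comm (a := x), Nat.cast_ite, Nat.cast_one, Nat.cast_zero]

lemma trace_nProd_pow_two_mul {as : List ℕ} (hpos : ∀ b ∈ as, 0 < b) (hsum : as.sum = ℓ)
    (k : ℕ) : ((nProd ℓ 0 as)^(2*k)).trace = 1 + 2 * ((as.filter (· ∣ k)).sum : ℂ) := by
  rw [trace_nProd_pow hpos hsum, ← pow_mul, (Even.mul_left (even_two_mul k) _).neg_one_pow]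
  simp only [Nat.mul_dvd_mul_iff_left two_pos]

end Trace

theorem stmt5_general (ℓ : ℕ) (μ μ' : ℕ) (L : Fin μ → ℕ) (L' : Fin μ' → ℕ)
    (hpos : ∀ ν, 0 < L ν) (hmono : Monotone L) (hsum : ∑ ν, L ν = ℓ)
    (hpos' : ∀ ν, 0 < L' ν) (hmono' : Monotone L') (hsum' : ∑ ν, L' ν = ℓ)
    (g : Matrix (Fin (2*ℓ+1)) (Fin (2*ℓ+1)) ℂ)
    (hgdet : g.det = 1)
    (hconj : g * n ℓ μ L * g⁻¹ = n ℓ μ' L') :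
    μ = μ' ∧ ∀ (ν : ℕ) (h1 : ν < μ) (h2 : ν < μ'), L ⟨ν, h1⟩ = L' ⟨ν, h2⟩ := by
  have hposL : ∀ b ∈ List.ofFn L, 0 < b := List.forall_mem_ofFn_iff.mpr hpos
  have hposL' : ∀ b ∈ List.ofFn L', 0 < b := List.forall_mem_ofFn_iff.mpr hpos'
  have hdiv (k : ℕ) :
      ((List.ofFn L).filter (· ∣ k)).sum = ((List.ofFn L').filter (· ∣ k)).sum := by
    have h := trace_conj_pow (hgdet ▸ isUnit_one) (n ℓ μ L) (2*k)
    rw [hconj, n_eq_nProd, n_eq_nProd,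
      trace_nProd_pow_two_mul hposL' (by rw [List.sum_ofFn, hsum']),
      trace_nProd_pow_two_mul hposL (by rw [List.sum_ofFn, hsum])] at h
    exact_mod_cast (mul_left_cancel₀ two_ne_zero (add_left_cancel h)).symm
  exact eq_and_apply_eq_of_ofFn_eq <| (perm_of_sum_filter_dvd_eq hposL hposL' hdiv).eq_of_sortedLE
    (List.sortedLE_ofFn_iff.mpr hmono) (List.sortedLE_ofFn_iff.mpr hmono')

/-- Let `ℓ ≥ 2` and let `ℓ⃗`, `ℓ⃗'` be partitions of `ℓ` into positive parts
with associated elements `n_{ℓ⃗}`, `n_{ℓ⃗'}` of `SO_{2ℓ+1}(ℂ)` (the `g ∈ SL_{2ℓ+1}(ℂ)` with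
`g = (K g⁻¹ K)ᵀ`).  If some `g ∈ SO_{2ℓ+1}(ℂ)` satisfies `g n_{ℓ⃗} g⁻¹ = n_{ℓ⃗'}`, then
`ℓ⃗ = ℓ⃗'`. -/
theorem stmt5 (ℓ : ℕ) (hℓ : 2 ≤ ℓ) (μ μ' : ℕ) (L : Fin μ → ℕ) (L' : Fin μ' → ℕ)
    (hpos : ∀ ν, 0 < L ν) (hmono : Monotone L) (hsum : ∑ ν, L ν = ℓ)
    (hpos' : ∀ ν, 0 < L' ν) (hmono' : Monotone L') (hsum' : ∑ ν, L' ν = ℓ)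
    (g : Matrix (Fin (2*ℓ+1)) (Fin (2*ℓ+1)) ℂ)
    (hgdet : g.det = 1) (hgSO : g = (K ℓ * g⁻¹ * K ℓ)ᵀ)
    (hconj : g * n ℓ μ L * g⁻¹ = n ℓ μ' L') :
    μ = μ' ∧ ∀ (ν : ℕ) (h1 : ν < μ) (h2 : ν < μ'), L ⟨ν, h1⟩ = L' ⟨ν, h2⟩ :=
  stmt5_general ℓ μ μ' L L' hpos hmono hsum hpos' hmono' hsum' g hgdet hconj

end Stmt5
end

section
/- Let ℓ ≥ 2 and let ℓ⃗ = (ℓ_μ ≥ ⋯ ≥ ℓ_1) be a partition of ℓ into μ positive parts; set ℓ'_ν = ℓ_1 + ⋯ + ℓ_{ν-1} and n_{ℓ⃗} = ∏_{ν=1}^{μ} ( s_{ℓ'_ν+1} s_{ℓ'_ν+2} ⋯ s_{ℓ'_ν+ℓ_ν-1} · t_{ℓ'_ν+ℓ_ν} ) in Sp_{2ℓ}(ℂ). Then the characteristic polynomial of n_{ℓ⃗} acting on ℂ^{2ℓ} is ∏_{ν=1}^{μ} (t^{2ℓ_ν} + 1). -/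
/-! Every `s_k` and `t_k` is a signed permutation matrix, hence so is `n_{ℓ⃗}`. Its permutation
is a product of disjoint cycles, one of length `2ℓ_ν` for each part, running through the positions
`ℓ'_ν + 1, …, ℓ'_ν + ℓ_ν` and their mirror images, and each cycle carries exactly one sign `-1`.
Reordering the basis along these cycles makes `n_{ℓ⃗}` block diagonal, and a signed cyclic shift of
length `m` whose signs multiply to `c` has characteristic polynomial `t^m - c`. -/

open Polynomial Matrix

namespace Stmt6

/-- The matrix `s_k ∈ Sp_{2ℓ}(ℂ)` (1-based indices): `(s_k)_{ij} = 1` if `i = j` and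
`i ∉ {k, k+1, 2ℓ-k, 2ℓ-k+1}`, or if `i ≠ j` and `{i,j} = {k, k+1}`, or if `i ≠ j` and
`{i,j} = {2ℓ-k, 2ℓ-k+1}`; all other entries are `0`. -/
noncomputable def s (ℓ k : ℕ) : Matrix (Fin (2*ℓ)) (Fin (2*ℓ)) ℂ :=
  Matrix.of fun i j =>
    if i = j ∧ i.val + 1 ≠ k ∧ i.val + 1 ≠ k + 1 ∧
        i.val + 1 ≠ 2*ℓ - k ∧ i.val + 1 ≠ 2*ℓ - k + 1 then 1
    else if i ≠ j ∧ ((i.val + 1 = k ∧ j.val + 1 = k + 1) ∨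
        (i.val + 1 = k + 1 ∧ j.val + 1 = k)) then 1
    else if i ≠ j ∧ ((i.val + 1 = 2*ℓ - k ∧ j.val + 1 = 2*ℓ - k + 1) ∨
        (i.val + 1 = 2*ℓ - k + 1 ∧ j.val + 1 = 2*ℓ - k)) then 1
    else 0

/-- The matrix `t_ℓ ∈ Sp_{2ℓ}(ℂ)`: `(t_ℓ)_{ij} = 1` if `1 ≤ i = j < ℓ` or
`ℓ+1 < i = j ≤ 2ℓ`; `(t_ℓ)_{ℓ,ℓ+1} = 1`; `(t_ℓ)_{ℓ+1,ℓ} = -1`; other entries `0`. -/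
noncomputable def tTop (ℓ : ℕ) : Matrix (Fin (2*ℓ)) (Fin (2*ℓ)) ℂ :=
  Matrix.of fun i j =>
    if i = j ∧ (i.val + 1 < ℓ ∨ ℓ + 1 < i.val + 1) then 1
    else if i.val + 1 = ℓ ∧ j.val + 1 = ℓ + 1 then 1
    else if i.val + 1 = ℓ + 1 ∧ j.val + 1 = ℓ then -1
    else 0

/-- `t_k = s_k s_{k+1} ⋯ s_{ℓ-1} · t_ℓ · s_{ℓ-1} ⋯ s_{k+1} s_k` (for `k = ℓ` this is `t_ℓ`). -/
noncomputable def t (ℓ k : ℕ) : Matrix (Fin (2*ℓ)) (Fin (2*ℓ)) ℂ :=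
  (List.ofFn fun a : Fin (ℓ - k) => s ℓ (k + a.val)).prod * tTop ℓ *
  (List.ofFn fun a : Fin (ℓ - k) => s ℓ (ℓ - 1 - a.val)).prod

/-- `n_{ℓ⃗} = ∏_{ν=1}^{μ} ( s_{ℓ'_ν+1} ⋯ s_{ℓ'_ν+ℓ_ν-1} · t_{ℓ'_ν+ℓ_ν} )`. -/
noncomputable def n (ℓ μ : ℕ) (L : Fin μ → ℕ) : Matrix (Fin (2*ℓ)) (Fin (2*ℓ)) ℂ :=
  (List.ofFn fun ν : Fin μ =>
    (List.ofFn fun a : Fin (L ν - 1) =>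
      s ℓ ((∑ j ∈ Finset.Iio ν, L j) + a.val + 1)).prod *
    t ℓ ((∑ j ∈ Finset.Iio ν, L j) + L ν)).prod

section MonomialMatrix

variable {ι R : Type*} [DecidableEq ι]

def monomialMatrix [Zero R] (f : ι → ι) (ε : ι → R) : Matrix ι ι R :=
  Matrix.of fun i j => if i = f j then ε j else 0

theorem monomialMatrix_mul [Fintype ι] [NonUnitalNonAssocSemiring R] (f g : ι → ι)
    (ε δ : ι → R) :
    monomialMatrix f ε * monomialMatrix g δ =
      monomialMatrix (f ∘ g) (fun j => ε (g j) * δ j) := by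
  ext i j
  simp only [monomialMatrix, Matrix.mul_apply, of_apply, Function.comp_apply, ite_mul, zero_mul,
    mul_ite, mul_zero]
  rw [Finset.sum_eq_single (g j)] <;> aesop

theorem monomialMatrix_mulVec_single [Fintype ι] [NonUnitalNonAssocSemiring R] (f : ι → ι)
    (ε : ι → R) (j : ι) (c : R) :
    monomialMatrix f ε *ᵥ Pi.single j c = Pi.single (f j) (ε j * c) := by
  ext i
  simp [monomialMatrix, Pi.single_apply]

theorem blockDiagonal'_monomialMatrix {α : Type*} [DecidableEq α] {κ : α → Type*}
    [∀ a, DecidableEq (κ a)] [Zero R] (f : ∀ a, κ a → κ a) (ε : ∀ a, κ a → R) :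
    blockDiagonal' (fun a => monomialMatrix (f a) (ε a)) =
      monomialMatrix (fun x => ⟨x.1, f x.1 x.2⟩) (fun x => ε x.1 x.2) := by
  ext ⟨a, i⟩ ⟨b, j⟩
  by_cases h : a = b
  · subst h
    simp [monomialMatrix, blockDiagonal'_apply_eq]
  · simp [monomialMatrix, blockDiagonal'_apply_ne _ _ _ h, h]

theorem charpoly_blockDiagonal' {α : Type*} [Fintype α] [LinearOrder α] {κ : α → Type*}
    [∀ a, Fintype (κ a)] [∀ a, DecidableEq (κ a)] [CommRing R]
    (d : ∀ a, Matrix (κ a) (κ a) R) :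
    (blockDiagonal' d).charpoly = ∏ a, (d a).charpoly := by
  have hblock : ∀ a, ((blockDiagonal' d).toSquareBlock Sigma.fst a).charpoly = (d a).charpoly := by
    intro a
    rw [← charpoly_reindex (Equiv.sigmaSubtype a)]
    congr 1
    ext i j
    exact blockDiagonal'_apply_eq d a i j
  rw [(blockTriangular_blockDiagonal' d).charpoly, Finset.prod_congr rfl fun a _ => hblock a]
  refine Finset.prod_subset (Finset.subset_univ _) fun a _ ha => ?_
  have : IsEmpty (κ a) :=
    ⟨fun i => ha (Finset.mem_image_of_mem Sigma.fst (Finset.mem_univ ⟨a, i⟩))⟩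
  exact charpoly_isEmpty

theorem list_prod_mulVec_of_forall [Fintype ι] [Semiring R] (l : List (Matrix ι ι R))
    (v : ι → R) (h : ∀ A ∈ l, A *ᵥ v = v) : l.prod *ᵥ v = v := by
  induction l with
  | nil => simp
  | cons A l ih =>
    rw [List.prod_cons, ← mulVec_mulVec, ih fun B hB => h B (List.mem_cons_of_mem A hB),
      h A List.mem_cons_self]

theorem prod_ofFn_mulVec_of_ne [Fintype ι] [Semiring R] {μ : ℕ} (g : Fin μ → Matrix ι ι R)
    (ν : Fin μ) {v w : ι → R} (hν : g ν *ᵥ v = w) (hv : ∀ ν' ≠ ν, g ν' *ᵥ v = v)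
    (hw : ∀ ν' ≠ ν, g ν' *ᵥ w = w) :
    (List.ofFn g).prod *ᵥ v = w := by
  induction μ with
  | zero => exact ν.elim0
  | succ μ ih =>
    rw [List.ofFn_succ, List.prod_cons, ← mulVec_mulVec]
    cases ν using Fin.cases with
    | zero =>
      rw [list_prod_mulVec_of_forall _ _ ?_, hν]
      simp only [List.mem_ofFn, forall_exists_index, forall_apply_eq_imp_iff]
      exact fun i => hv _ (Fin.succ_ne_zero i)
    | succ ν =>
      rw [ih (fun i => g i.succ) ν hν (fun i hi => hv _ (by simpa using hi))
        (fun i hi => hw _ (by simpa using hi)), hw 0 (Fin.succ_ne_zero ν).symm]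

end MonomialMatrix

open Fin.NatCast in
theorem perm_eq_one_or_eq_finRotate {m : ℕ} (σ : Equiv.Perm (Fin m))
    (h : ∀ i, σ i ≠ i → σ i = finRotate m i) : σ = 1 ∨ σ = finRotate m := by
  rcases m with _ | m
  · exact Or.inl (Equiv.ext fun i => i.elim0)
  by_cases hfix : ∀ i, σ i = i
  · exact Or.inl (Equiv.ext hfix)
  obtain ⟨i, hi⟩ := not_forall.mp hfix
  right
  -- once `σ` moves a point, injectivity forces it to move the next one as well
  have step : ∀ j, σ j = j + 1 → σ (j + 1) = j + 1 + 1 := by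
    intro j hj
    by_cases hj1 : σ (j + 1) = j + 1
    · have hj1' : j + 1 = j := σ.injective (hj1.trans hj.symm)
      rw [hj1]
      exact congrArg (· + 1) hj1'.symm
    · rw [h _ hj1, finRotate_apply]
  have hrun : ∀ k : ℕ, σ (i + k) = i + k + 1 := by
    intro k
    induction k with
    | zero => simpa [finRotate_apply] using h i hi
    | succ k ih => simpa [add_assoc] using step _ ih
  refine Equiv.ext fun j => ?_
  have := hrun (j - i).val
  rwa [Fin.cast_val_eq_self, add_sub_cancel, ← finRotate_apply] at this

theorem charpoly_monomialMatrix_finRotate {R : Type*} [CommRing R] {m : ℕ} (hm : 2 ≤ m)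
    (c : Fin m → R) :
    (monomialMatrix (finRotate m) c).charpoly = X ^ m - C (∏ j, c j) := by
  obtain ⟨m, rfl⟩ : ∃ k, m = k + 2 := ⟨m - 2, by omega⟩
  set M := monomialMatrix (finRotate (m + 2)) c
  have hrot : ∀ i, finRotate (m + 2) i ≠ i := by
    intro i h
    rw [finRotate_apply] at h
    simp at h
  -- only the identity and the rotation avoid the zero entries of `charmatrix M`
  have hvanish : ∀ σ : Equiv.Perm (Fin (m + 2)), σ ≠ 1 ∧ σ ≠ finRotate (m + 2) →
      Equiv.Perm.sign σ • ∏ i, charmatrix M (σ i) i = 0 := by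
    rintro σ ⟨h1, h2⟩
    obtain ⟨i, hi, hi'⟩ : ∃ i, σ i ≠ i ∧ σ i ≠ finRotate (m + 2) i := by
      by_contra! H
      exact (perm_eq_one_or_eq_finRotate σ H).elim h1 h2
    rw [Finset.prod_eq_zero (Finset.mem_univ i), smul_zero]
    rw [charmatrix_apply_ne _ _ _ hi]
    simp only [M, monomialMatrix, of_apply, if_neg hi', map_zero, neg_zero]
  have hid : ∏ i, charmatrix M i i = X ^ (m + 2) := by
    simp [charmatrix_apply_eq, M, monomialMatrix]
  have hcyc : ∏ i, charmatrix M (finRotate (m + 2) i) i = (-1) ^ (m + 2) * C (∏ j, c j) := by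
    simp [M, monomialMatrix, Finset.prod_neg]
  rw [charpoly, det_apply, Finset.sum_eq_add 1 (finRotate (m + 2))
    (fun h => hrot 0 (by rw [← h]; rfl)) (fun σ _ => hvanish σ) (by simp) (by simp),
    sign_finRotate, hcyc]
  simp only [Equiv.Perm.sign_one, one_smul, Equiv.Perm.one_apply]
  rw [hid, Units.smul_def, zsmul_eq_mul, ← mul_assoc]
  push_cast
  rw [← pow_add, Odd.neg_one_pow ⟨m + 1, by ring⟩]
  ring

theorem val_finRotate {m : ℕ} (b : Fin m) :
    (finRotate m b : ℕ) = if (b : ℕ) + 1 = m then 0 else (b : ℕ) + 1 := by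
  rcases m with _ | m
  · exact b.elim0
  rw [coe_finRotate]
  simp only [Fin.ext_iff, Fin.val_last]
  split_ifs <;> omega

/-- The self-map of `Fin N` induced by `f : ℕ → ℕ`, taken to be the identity where `f` leaves
the range. -/
def liftFin (N : ℕ) (f : ℕ → ℕ) (j : Fin N) : Fin N :=
  if h : f j < N then ⟨f j, h⟩ else j

theorem val_liftFin {N : ℕ} {f : ℕ → ℕ} {j : Fin N} (h : f j < N) :
    (liftFin N f j : ℕ) = f j := by
  rw [liftFin, dif_pos h]

theorem liftFin_comp {N : ℕ} {f g : ℕ → ℕ} (hf : ∀ j < N, f j < N) (hg : ∀ j < N, g j < N) :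
    liftFin N f ∘ liftFin N g = liftFin N (f ∘ g) := by
  funext j
  have hgj := hg j j.isLt
  have hgj' : (liftFin N g j : ℕ) = g j := val_liftFin hgj
  apply Fin.ext
  rw [Function.comp_apply, val_liftFin (hgj' ▸ hf _ hgj), hgj',
    val_liftFin (f := f ∘ g) (hf _ hgj), Function.comp_apply]

theorem liftFin_congr {N : ℕ} {f g : ℕ → ℕ} (h : ∀ j < N, f j = g j) :
    liftFin N f = liftFin N g := by
  funext j
  simp only [liftFin, h j j.isLt]

/-! Permutations of the positions `0, …, 2ℓ - 1` (0-based, so the paper's index `i` is `i - 1`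
here, and the mirror image of `j` is `2ℓ - 1 - j`). -/

section Positions

variable {ℓ : ℕ}

/-- `s_k` swaps `k - 1 ↔ k` and their mirror images `2ℓ - k - 1 ↔ 2ℓ - k`. -/
def sNat (ℓ k j : ℕ) : ℕ :=
  if j + 1 = k then j + 1
  else if j = k then j - 1
  else if j + k + 1 = 2 * ℓ then j + 1
  else if j + k = 2 * ℓ then j - 1
  else j

/-- `t_k` swaps `k - 1` with its mirror image `2ℓ - k`, with the sign `tSign` in column `k - 1`. -/
def tNat (ℓ k j : ℕ) : ℕ :=
  if j + 1 = k then 2 * ℓ - k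
  else if j + k = 2 * ℓ then k - 1
  else j

def tSign (ℓ k : ℕ) (j : Fin (2 * ℓ)) : ℂ :=
  if (j : ℕ) + 1 = k then -1 else 1

/-- The `2m`-cycle `p → p + 1 → ⋯ → p + m - 1 → 2ℓ - 1 - p → 2ℓ - 2 - p → ⋯ → 2ℓ - p - m → p`
through the positions `p, …, p + m - 1` and their mirror images. -/
def blockNat (ℓ p m j : ℕ) : ℕ :=
  if j < p then j
  else if j + 1 < p + m then j + 1
  else if j + 1 = p + m then 2 * ℓ - 1 - p
  else if j + p + m < 2 * ℓ then j
  else if j + p + m = 2 * ℓ then p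
  else if j + p < 2 * ℓ then j - 1
  else j

theorem sNat_lt {k : ℕ} (hk : 1 ≤ k) (hkℓ : k < ℓ) : ∀ j < 2 * ℓ, sNat ℓ k j < 2 * ℓ := by
  intro j hj
  unfold sNat
  split_ifs <;> omega

theorem tNat_lt {k : ℕ} (hk : 1 ≤ k) : ∀ j < 2 * ℓ, tNat ℓ k j < 2 * ℓ := by
  intro j hj
  unfold tNat
  split_ifs <;> omega

theorem blockNat_lt {p m : ℕ} (h : p + m ≤ ℓ) : ∀ j < 2 * ℓ, blockNat ℓ p m j < 2 * ℓ := by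
  intro j hj
  unfold blockNat
  split_ifs <;> omega

theorem sNat_tNat_sNat {k j : ℕ} (hk : 1 ≤ k) (hkℓ : k < ℓ) :
    sNat ℓ k (tNat ℓ (k + 1) (sNat ℓ k j)) = tNat ℓ k j := by
  generalize ha : sNat ℓ k j = a
  generalize hb : tNat ℓ (k + 1) a = b
  generalize hc : sNat ℓ k b = c
  generalize hd : tNat ℓ k j = d
  simp only [sNat, tNat, ite_eq_iff] at ha hb hc hd
  omega

theorem sNat_blockNat {p m j : ℕ} (hm : 1 ≤ m) (h : p + m + 1 ≤ ℓ) :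
    sNat ℓ (p + 1) (blockNat ℓ (p + 1) m j) = blockNat ℓ p (m + 1) j := by
  generalize ha : blockNat ℓ (p + 1) m j = a
  generalize hc : sNat ℓ (p + 1) a = c
  generalize hd : blockNat ℓ p (m + 1) j = d
  simp only [sNat, blockNat, ite_eq_iff] at ha hc hd
  omega

theorem s_eq_monomialMatrix {k : ℕ} (hk : 1 ≤ k) (hkℓ : k < ℓ) :
    s ℓ k = monomialMatrix (liftFin (2 * ℓ) (sNat ℓ k)) 1 := by
  ext i j
  simp only [s, monomialMatrix, of_apply, Pi.one_apply, Fin.ext_iff, ne_eq,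
    val_liftFin (sNat_lt hk hkℓ j j.isLt), sNat]
  split_ifs <;> first | rfl | omega

theorem tTop_eq_monomialMatrix (hℓ : 1 ≤ ℓ) :
    tTop ℓ = monomialMatrix (liftFin (2 * ℓ) (tNat ℓ ℓ)) (tSign ℓ ℓ) := by
  ext i j
  simp only [tTop, monomialMatrix, tSign, of_apply, Fin.ext_iff,
    val_liftFin (tNat_lt hℓ j j.isLt), tNat]
  split_ifs <;> first | rfl | omega

theorem t_self : t ℓ ℓ = tTop ℓ := by
  simp [t]

theorem t_eq_s_mul_t_mul_s {k : ℕ} (hkℓ : k < ℓ) : t ℓ k = s ℓ k * t ℓ (k + 1) * s ℓ k := by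
  obtain ⟨d, hd⟩ : ∃ d, ℓ - k = d + 1 := ⟨ℓ - k - 1, by omega⟩
  have hd' : ℓ - (k + 1) = d := by omega
  rw [t, t, List.ofFn_congr hd, List.ofFn_congr hd, List.ofFn_congr hd', List.ofFn_congr hd',
    List.ofFn_succ, List.ofFn_succ']
  simp only [Fin.val_cast, Fin.val_zero, Fin.val_succ, Fin.val_castSucc, Fin.val_last,
    List.prod_cons, List.concat_eq_append, List.prod_append, List.prod_nil, mul_one,
    Matrix.mul_assoc, show ℓ - 1 - d = k by omega]
  have hshift : (fun i : Fin d => s ℓ (k + (i + 1))) = fun i : Fin d => s ℓ (k + 1 + i) :=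
    funext fun i => by rw [add_comm (i : ℕ) 1, add_assoc]
  rw [hshift, add_zero]

theorem t_eq_monomialMatrix {k : ℕ} (hk : 1 ≤ k) (hkℓ : k ≤ ℓ) :
    t ℓ k = monomialMatrix (liftFin (2 * ℓ) (tNat ℓ k)) (tSign ℓ k) := by
  induction hd : ℓ - k generalizing k with
  | zero =>
    obtain rfl : k = ℓ := by omega
    rw [t_self, tTop_eq_monomialMatrix hk]
  | succ d ih =>
    rw [t_eq_s_mul_t_mul_s (by omega), ih (by omega) (by omega) (by omega),
      s_eq_monomialMatrix hk (by omega), monomialMatrix_mul, monomialMatrix_mul,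
      liftFin_comp (sNat_lt hk (by omega)) (tNat_lt (by omega)),
      liftFin_comp (f := sNat ℓ k ∘ tNat ℓ (k + 1))
        (fun j hj => sNat_lt hk (by omega) _ (tNat_lt (by omega) j hj)) (sNat_lt hk (by omega))]
    congr 1
    · exact liftFin_congr fun _ _ => sNat_tNat_sNat hk (by omega)
    · funext j
      simp only [tSign, Pi.one_apply, mul_one, one_mul,
        val_liftFin (sNat_lt hk (by omega) j j.isLt)]
      unfold sNat
      split_ifs <;> first | rfl | omega

/-- The factor `s_{p+1} ⋯ s_{p+m-1} t_{p+m}` of `n_{ℓ⃗}`. -/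
noncomputable def nFactor (ℓ p m : ℕ) : Matrix (Fin (2 * ℓ)) (Fin (2 * ℓ)) ℂ :=
  (List.ofFn fun a : Fin (m - 1) => s ℓ (p + a.val + 1)).prod * t ℓ (p + m)

theorem nFactor_one (p : ℕ) : nFactor ℓ p 1 = t ℓ (p + 1) := by
  simp [nFactor]

theorem nFactor_succ (p : ℕ) {m : ℕ} (hm : 1 ≤ m) :
    nFactor ℓ p (m + 1) = s ℓ (p + 1) * nFactor ℓ (p + 1) m := by
  obtain ⟨m, rfl⟩ : ∃ m', m = m' + 1 := ⟨m - 1, by omega⟩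
  simp only [nFactor, Nat.add_sub_cancel, List.ofFn_succ, List.prod_cons, Fin.val_cast,
    Fin.val_zero, Fin.val_succ, Matrix.mul_assoc, add_zero]
  have hshift : (fun i : Fin m => s ℓ (p + (i + 1) + 1)) =
      fun i : Fin m => s ℓ (p + 1 + i + 1) :=
    funext fun i => by rw [add_comm (i : ℕ) 1, add_assoc p 1]
  rw [hshift, show p + (m + 1 + 1) = p + 1 + (m + 1) by ring]

theorem nFactor_eq_monomialMatrix {p m : ℕ} (hm : 1 ≤ m) (h : p + m ≤ ℓ) :
    nFactor ℓ p m = monomialMatrix (liftFin (2 * ℓ) (blockNat ℓ p m)) (tSign ℓ (p + m)) := by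
  induction m, hm using Nat.le_induction generalizing p with
  | base =>
    rw [nFactor_one, t_eq_monomialMatrix (by omega) h]
    congr 1
    refine liftFin_congr fun j hj => ?_
    unfold tNat blockNat
    split_ifs <;> omega
  | succ m hm ih =>
    rw [nFactor_succ p hm, ih (by omega), s_eq_monomialMatrix (by omega) (by omega),
      monomialMatrix_mul, liftFin_comp (sNat_lt (by omega) (by omega)) (blockNat_lt (by omega))]
    congr 1
    · exact liftFin_congr fun _ _ => sNat_blockNat hm h
    · funext j
      simp only [tSign, Pi.one_apply, one_mul]
      rw [show p + 1 + m = p + (m + 1) by ring]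

end Positions

section Blocks

variable {ℓ μ : ℕ} {L : Fin μ → ℕ}

/-- The paper's `ℓ'_ν = ℓ_1 + ⋯ + ℓ_{ν-1}`. -/
def blockStart (L : Fin μ → ℕ) (ν : Fin μ) : ℕ :=
  ∑ j ∈ Finset.Iio ν, L j

theorem blockStart_add_self (L : Fin μ → ℕ) (ν : Fin μ) :
    blockStart L ν + L ν = ∑ j ∈ Finset.Iic ν, L j := by
  rw [Finset.Iic_eq_cons_Iio, Finset.sum_cons, add_comm]
  rfl

theorem blockStart_add_le_of_lt (L : Fin μ → ℕ) {ν ν' : Fin μ} (h : ν < ν') :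
    blockStart L ν + L ν ≤ blockStart L ν' := by
  rw [blockStart_add_self]
  exact Finset.sum_le_sum_of_subset fun x hx =>
    Finset.mem_Iio.mpr ((Finset.mem_Iic.mp hx).trans_lt h)

theorem blockStart_add_le_sum (L : Fin μ → ℕ) (ν : Fin μ) :
    blockStart L ν + L ν ≤ ∑ j, L j := by
  rw [blockStart_add_self]
  exact Finset.sum_le_sum_of_subset (Finset.subset_univ _)

/-- Position of the `b`-th point of the `ν`-th block: the block consists of the positions
`blockStart L ν, …, blockStart L ν + L ν - 1` followed by their mirror images. -/
def blockIndex (hL : ∑ ν, L ν = ℓ) (x : Σ ν, Fin (2 * L ν)) : Fin (2 * ℓ) :=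
  ⟨if (x.2 : ℕ) < L x.1 then blockStart L x.1 + x.2
    else 2 * ℓ - 1 - (blockStart L x.1 + (x.2 - L x.1)), by
    have := blockStart_add_le_sum L x.1
    have := x.2.isLt
    split_ifs <;> omega⟩

theorem blockIndex_injective (hL : ∑ ν, L ν = ℓ) : Function.Injective (blockIndex hL) := by
  rintro ⟨ν, a⟩ ⟨ν', b⟩ h
  have hv := congrArg Fin.val h
  simp only [blockIndex] at hv
  have := blockStart_add_le_sum L ν
  have := blockStart_add_le_sum L ν'
  have := a.isLt
  have := b.isLt
  obtain rfl : ν = ν' := by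
    by_contra hne
    rcases Ne.lt_or_gt hne with hlt | hlt <;>
    · have := blockStart_add_le_of_lt L hlt
      split_ifs at hv <;> omega
  obtain rfl : a = b := by
    apply Fin.ext
    split_ifs at hv <;> omega
  rfl

noncomputable def blockEquiv (hL : ∑ ν, L ν = ℓ) : (Σ ν, Fin (2 * L ν)) ≃ Fin (2 * ℓ) :=
  Equiv.ofBijective (blockIndex hL) <| (Fintype.bijective_iff_injective_and_card _).mpr
    ⟨blockIndex_injective hL, by simp [← Finset.mul_sum, hL]⟩

def cycleSign (m : ℕ) (b : Fin (2 * m)) : ℂ :=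
  if (b : ℕ) + 1 = m then -1 else 1

theorem prod_cycleSign {m : ℕ} (hm : 0 < m) : ∏ b, cycleSign m b = -1 := by
  rw [Finset.prod_eq_single_of_mem (⟨m - 1, by omega⟩ : Fin (2 * m)) (Finset.mem_univ _)]
  · simp [cycleSign, Nat.sub_add_cancel hm]
  · intro b _ hb
    simp only [cycleSign, ite_eq_right_iff]
    intro h
    exact absurd (Fin.ext (by simp; omega)) hb

variable (hL : ∑ ν, L ν = ℓ)

theorem nFactor_mulVec_single_blockIndex_self (ν : Fin μ) (b : Fin (2 * L ν)) (c : ℂ) :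
    nFactor ℓ (blockStart L ν) (L ν) *ᵥ Pi.single (blockIndex hL ⟨ν, b⟩) c =
      Pi.single (blockIndex hL ⟨ν, finRotate _ b⟩) (cycleSign (L ν) b * c) := by
  have := blockStart_add_le_sum L ν
  have := b.isLt
  rw [nFactor_eq_monomialMatrix (by omega) (by omega), monomialMatrix_mulVec_single]
  congr 1
  · apply Fin.ext
    rw [val_liftFin (blockNat_lt (by omega) _ (Fin.isLt _))]
    simp only [blockIndex, blockNat, val_finRotate]
    split_ifs <;> omega
  · simp only [tSign, cycleSign, blockIndex]
    split_ifs <;> first | rfl | omega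

theorem nFactor_mulVec_single_blockIndex_of_ne {ν ν' : Fin μ} (hν' : 0 < L ν') (hne : ν' ≠ ν)
    (b : Fin (2 * L ν)) (c : ℂ) :
    nFactor ℓ (blockStart L ν') (L ν') *ᵥ Pi.single (blockIndex hL ⟨ν, b⟩) c =
      Pi.single (blockIndex hL ⟨ν, b⟩) c := by
  have := blockStart_add_le_sum L ν
  have := blockStart_add_le_sum L ν'
  have := b.isLt
  have hdisj : blockStart L ν' + L ν' ≤ blockStart L ν ∨ blockStart L ν + L ν ≤ blockStart L ν' :=
    (Ne.lt_or_gt hne).imp (blockStart_add_le_of_lt L) (blockStart_add_le_of_lt L)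
  rw [nFactor_eq_monomialMatrix hν' (by omega), monomialMatrix_mulVec_single]
  congr 1
  · apply Fin.ext
    rw [val_liftFin (blockNat_lt (by omega) _ (Fin.isLt _))]
    simp only [blockIndex, blockNat]
    split_ifs <;> omega
  · simp only [tSign, blockIndex, ite_mul, one_mul]
    split_ifs <;> first | rfl | omega

theorem n_mulVec_single_blockIndex (hpos : ∀ ν, 0 < L ν) (ν : Fin μ) (b : Fin (2 * L ν)) :
    n ℓ μ L *ᵥ Pi.single (blockIndex hL ⟨ν, b⟩) 1 =
      Pi.single (blockIndex hL ⟨ν, finRotate _ b⟩) (cycleSign (L ν) b) := by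
  refine prod_ofFn_mulVec_of_ne (fun ν => nFactor ℓ (blockStart L ν) (L ν)) ν ?_
    (fun ν' hne => nFactor_mulVec_single_blockIndex_of_ne hL (hpos ν') hne _ _)
    (fun ν' hne => nFactor_mulVec_single_blockIndex_of_ne hL (hpos ν') hne _ _)
  rw [nFactor_mulVec_single_blockIndex_self, mul_one]

theorem reindex_n_eq_blockDiagonal' (hpos : ∀ ν, 0 < L ν) :
    reindex (blockEquiv hL).symm (blockEquiv hL).symm (n ℓ μ L) =
      blockDiagonal' fun ν => monomialMatrix (finRotate (2 * L ν)) (cycleSign (L ν)) := by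
  rw [blockDiagonal'_monomialMatrix]
  ext x ⟨ν, b⟩
  have hcol := congrFun (n_mulVec_single_blockIndex hL hpos ν b) (blockIndex hL x)
  simp only [mulVec_single_one, col_apply, Pi.single_apply,
    (blockIndex_injective hL).eq_iff] at hcol
  simpa [monomialMatrix, blockEquiv] using hcol

end Blocks

theorem stmt6_general (ℓ μ : ℕ) (L : Fin μ → ℕ)
    (hpos : ∀ ν, 0 < L ν) (hsum : ∑ ν, L ν = ℓ) :
    (n ℓ μ L).charpoly = ∏ ν : Fin μ, (X ^ (2 * L ν) + 1) := by
  rw [← charpoly_reindex (blockEquiv hsum).symm, reindex_n_eq_blockDiagonal' hsum hpos,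
    charpoly_blockDiagonal']
  refine Finset.prod_congr rfl fun ν _ => ?_
  rw [charpoly_monomialMatrix_finRotate (by linarith [hpos ν]), prod_cycleSign (hpos ν), map_neg,
    map_one, sub_neg_eq_add]

/-- For `ℓ ≥ 2` and a partition `ℓ⃗ = (ℓ_μ ≥ ⋯ ≥ ℓ_1)` of `ℓ` into `μ`
positive parts, the characteristic polynomial of `n_{ℓ⃗}` acting on `ℂ^{2ℓ}` is
`∏_{ν=1}^{μ} (t^{2ℓ_ν} + 1)`. -/
theorem stmt6 (ℓ μ : ℕ) (hℓ : 2 ≤ ℓ) (L : Fin μ → ℕ)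
    (hpos : ∀ ν, 0 < L ν) (hmono : Monotone L) (hsum : ∑ ν, L ν = ℓ) :
    (n ℓ μ L).charpoly = ∏ ν : Fin μ, (X ^ (2 * L ν) + 1) :=
  stmt6_general ℓ μ L hpos hsum

end Stmt6
end

section
/- Let ℓ⃗ = (ℓ_μ ≥ ⋯ ≥ ℓ_1) and ℓ⃗' = (ℓ'_{μ'} ≥ ⋯ ≥ ℓ'_1) be partitions of the same integer ℓ ≥ 1 into positive parts. If ∏_{ν=1}^{μ} (t^{2ℓ_ν} + 1) = ∏_{ν=1}^{μ'} (t^{2ℓ'_ν} + 1) as polynomials in ℂ[t], then μ = μ' and ℓ_ν = ℓ'_ν for all ν. -/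
open Polynomial

/-!
Write `P s = ∏_{a ∈ s} (X ^ a + 1)` for a multiset `s` of positive integers. If every element of
`s` is at least `m`, then `P s ≡ 1 + (count m s) X ^ m (mod X ^ (m + 1))`. Hence the multiplicity
of each `k` in `s` can be read off `P s` by strong induction on `k`: once the elements below `k`
are known, their (nonzero) product can be cancelled, and the coefficient of `X ^ k` in what
remains is the multiplicity of `k`. Taking the exponents `2 ℓ_ν`, the product determines the
multiset of parts, and a multiset has only one monotone enumeration.
-/

section ProdXPowAddOne

variable {R : Type*} [CommRing R]

lemma eval_zero_prod_X_pow_add_one {s : Multiset ℕ} (hs : ∀ a ∈ s, 0 < a) :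
    ((s.map fun a => (X : R[X]) ^ a + 1).prod).eval 0 = 1 := by
  rw [eval_multiset_prod, Multiset.map_map]
  refine Multiset.prod_eq_one fun x hx => ?_
  obtain ⟨a, ha, rfl⟩ := Multiset.mem_map.mp hx
  simp [zero_pow (hs a ha).ne']

lemma coeff_prod_X_pow_add_one_of_le {s : Multiset ℕ} {m k : ℕ} (hs : ∀ a ∈ s, m ≤ a)
    (hk : 0 < k) (hkm : k ≤ m) :
    ((s.map fun a => (X : R[X]) ^ a + 1).prod).coeff k = (s.count k : R) := by
  induction s using Multiset.induction with
  | empty => simp [coeff_one, hk.ne']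
  | cons a s ih =>
    have hma : m ≤ a := hs a (Multiset.mem_cons_self a s)
    have hs' : ∀ b ∈ s, m ≤ b := fun b hb => hs b (Multiset.mem_cons_of_mem hb)
    rw [Multiset.map_cons, Multiset.prod_cons, add_mul, one_mul, coeff_add, coeff_X_pow_mul',
      ih hs']
    by_cases hak : a ≤ k
    · obtain rfl : a = k := by omega
      have hpos : ∀ b ∈ s, 0 < b := fun b hb => by have := hs' b hb; omega
      rw [if_pos le_rfl, Nat.sub_self, coeff_zero_eq_eval_zero,
        eval_zero_prod_X_pow_add_one hpos, Multiset.count_cons_self]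
      push_cast
      ring
    · rw [if_neg hak, zero_add, Multiset.count_cons_of_ne (by omega)]

theorem Multiset.eq_of_prod_X_pow_add_one_eq [IsDomain R] [CharZero R] {s t : Multiset ℕ}
    (hs : ∀ a ∈ s, 0 < a) (ht : ∀ a ∈ t, 0 < a)
    (h : (s.map fun a => (X : R[X]) ^ a + 1).prod = (t.map fun a => (X : R[X]) ^ a + 1).prod) :
    s = t := by
  ext k
  induction k using Nat.strong_induction_on with
  | _ k ih =>
  rcases k.eq_zero_or_pos with rfl | hk
  · rw [Multiset.count_eq_zero.mpr fun h0 => (hs 0 h0).false,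
      Multiset.count_eq_zero.mpr fun h0 => (ht 0 h0).false]
  have hlow : s.filter (· < k) = t.filter (· < k) := by
    ext j
    simp only [Multiset.count_filter]
    split_ifs with hj
    exacts [ih j hj, rfl]
  have hlow_ne_zero : ((s.filter (· < k)).map fun a => (X : R[X]) ^ a + 1).prod ≠ 0 := by
    refine fun h0 => one_ne_zero (α := R) ?_
    rw [← eval_zero_prod_X_pow_add_one (s := s.filter (· < k))
      fun a ha => hs a (Multiset.mem_of_mem_filter ha), h0, eval_zero]
  rw [← Multiset.filter_add_not (· < k) s, ← Multiset.filter_add_not (· < k) t,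
    Multiset.map_add, Multiset.map_add, Multiset.prod_add, Multiset.prod_add, ← hlow] at h
  have hhigh := congrArg (coeff · k) (mul_left_cancel₀ hlow_ne_zero h)
  have hge : ∀ u : Multiset ℕ, ∀ a ∈ u.filter fun a : ℕ => ¬ a < k, k ≤ a := fun u a ha =>
    not_lt.mp (Multiset.mem_filter.mp ha).2
  rwa [coeff_prod_X_pow_add_one_of_le (hge s) hk le_rfl,
    coeff_prod_X_pow_add_one_of_le (hge t) hk le_rfl, Nat.cast_inj,
    Multiset.count_filter_of_pos (p := fun a : ℕ => ¬ a < k) (lt_irrefl k),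
    Multiset.count_filter_of_pos (p := fun a : ℕ => ¬ a < k) (lt_irrefl k)]
    at hhigh

end ProdXPowAddOne

lemma Monotone.eq_of_map_univ_eq {α : Type*} [LinearOrder α] {μ μ' : ℕ} {L : Fin μ → α}
    {L' : Fin μ' → α} (hL : Monotone L) (hL' : Monotone L')
    (h : Finset.univ.val.map L = Finset.univ.val.map L') :
    μ = μ' ∧ ∀ (ν : ℕ) (h1 : ν < μ) (h2 : ν < μ'), L ⟨ν, h1⟩ = L' ⟨ν, h2⟩ := by
  rw [Fin.univ_val_map, Fin.univ_val_map, Multiset.coe_eq_coe] at h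
  have hlist := h.eq_of_sortedLE hL.sortedLE_ofFn hL'.sortedLE_ofFn
  obtain rfl : μ = μ' := by simpa using congrArg List.length hlist
  exact ⟨rfl, fun ν h1 _ => congrFun (List.ofFn_injective hlist) ⟨ν, h1⟩⟩

theorem stmt7_general (μ μ' : ℕ) (L : Fin μ → ℕ) (L' : Fin μ' → ℕ)
    (hpos : ∀ ν, 0 < L ν) (hmono : Monotone L)
    (hpos' : ∀ ν, 0 < L' ν) (hmono' : Monotone L')
    (heq : ∏ ν : Fin μ, ((X : ℂ[X]) ^ (2 * L ν) + 1) =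
           ∏ ν : Fin μ', ((X : ℂ[X]) ^ (2 * L' ν) + 1)) :
    μ = μ' ∧ ∀ (ν : ℕ) (h1 : ν < μ) (h2 : ν < μ'), L ⟨ν, h1⟩ = L' ⟨ν, h2⟩ := by
  have hdouble : (Finset.univ.val.map L).map (2 * ·) = (Finset.univ.val.map L').map (2 * ·) := by
    refine Multiset.eq_of_prod_X_pow_add_one_eq (R := ℂ) ?_ ?_ ?_
    · simpa using hpos
    · simpa using hpos'
    · simpa [Finset.prod_eq_multiset_prod, Multiset.map_map, Function.comp_def] using heq
  exact hmono.eq_of_map_univ_eq hmono'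
    (Multiset.map_injective (mul_right_injective₀ two_ne_zero) hdouble)

/-- If `ℓ⃗ = (ℓ_μ ≥ ⋯ ≥ ℓ_1)` and `ℓ⃗' = (ℓ'_{μ'} ≥ ⋯ ≥ ℓ'_1)` are partitions
of the same integer `ℓ ≥ 1` into positive parts and
`∏_ν (t^{2ℓ_ν} + 1) = ∏_ν (t^{2ℓ'_ν} + 1)` in `ℂ[t]`, then `μ = μ'` and `ℓ_ν = ℓ'_ν` for
all `ν`. -/
theorem stmt7 (ℓ μ μ' : ℕ) (hℓ : 1 ≤ ℓ) (L : Fin μ → ℕ) (L' : Fin μ' → ℕ)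
    (hpos : ∀ ν, 0 < L ν) (hmono : Monotone L) (hsum : ∑ ν, L ν = ℓ)
    (hpos' : ∀ ν, 0 < L' ν) (hmono' : Monotone L') (hsum' : ∑ ν, L' ν = ℓ)
    (heq : ∏ ν : Fin μ, ((X : ℂ[X]) ^ (2 * L ν) + 1) =
           ∏ ν : Fin μ', ((X : ℂ[X]) ^ (2 * L' ν) + 1)) :
    μ = μ' ∧ ∀ (ν : ℕ) (h1 : ν < μ) (h2 : ν < μ'), L ⟨ν, h1⟩ = L' ⟨ν, h2⟩ :=
  stmt7_general μ μ' L L' hpos hmono hpos' hmono' heq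
end

section
/- Let ℓ ≥ 3 and let ℓ⃗ = (ℓ_μ ≥ ⋯ ≥ ℓ_1) be a partition of ℓ into an even number μ of positive parts; set ℓ'_ν = ℓ_1 + ⋯ + ℓ_{ν-1} and n_{ℓ⃗} = ∏_{ν=1}^{μ} ( s_{ℓ'_ν+1} s_{ℓ'_ν+2} ⋯ s_{ℓ'_ν+ℓ_ν-1} · t_{ℓ'_ν+ℓ_ν} ). Then n_{ℓ⃗} ∈ SO_{2ℓ}(ℂ) and the characteristic polynomial of n_{ℓ⃗} acting on ℂ^{2ℓ} is ∏_{ν=1}^{μ} (t^{2ℓ_ν} - 1). -/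
open Polynomial Matrix

namespace Stmt9

/-- The anti-diagonal matrix `K` with ones on the anti-diagonal. -/
noncomputable def K (ℓ : ℕ) : Matrix (Fin (2*ℓ)) (Fin (2*ℓ)) ℂ :=
  Matrix.of fun i j => if (i.val + 1) + (j.val + 1) = 2*ℓ + 1 then 1 else 0

/-- The matrix `t_k ∈ O_{2ℓ}(ℂ)` (1-based indices): `(t_k)_{ij} = 1` if `i = j` and
`i ∉ {k, 2ℓ-k+1}`, or if `i ≠ j` and `{i,j} = {k, 2ℓ-k+1}`; other entries `0`. -/
noncomputable def t (ℓ k : ℕ) : Matrix (Fin (2*ℓ)) (Fin (2*ℓ)) ℂ :=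
  Matrix.of fun i j =>
    if i = j ∧ i.val + 1 ≠ k ∧ i.val + 1 ≠ 2*ℓ - k + 1 then 1
    else if i ≠ j ∧ ((i.val + 1 = k ∧ j.val + 1 = 2*ℓ - k + 1) ∨
        (i.val + 1 = 2*ℓ - k + 1 ∧ j.val + 1 = k)) then 1
    else 0

/-- The matrix `s_k ∈ SO_{2ℓ}(ℂ)` (1-based indices): `(s_k)_{ij} = 1` if `i = j` and
`i ∉ {k, k+1, 2ℓ-k, 2ℓ-k+1}`, or if `i ≠ j` and `{i,j} = {k, k+1}`, or if `i ≠ j` and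
`{i,j} = {2ℓ-k, 2ℓ-k+1}`; other entries `0`. -/
noncomputable def s (ℓ k : ℕ) : Matrix (Fin (2*ℓ)) (Fin (2*ℓ)) ℂ :=
  Matrix.of fun i j =>
    if i = j ∧ i.val + 1 ≠ k ∧ i.val + 1 ≠ k + 1 ∧
        i.val + 1 ≠ 2*ℓ - k ∧ i.val + 1 ≠ 2*ℓ - k + 1 then 1
    else if i ≠ j ∧ ((i.val + 1 = k ∧ j.val + 1 = k + 1) ∨
        (i.val + 1 = k + 1 ∧ j.val + 1 = k)) then 1
    else if i ≠ j ∧ ((i.val + 1 = 2*ℓ - k ∧ j.val + 1 = 2*ℓ - k + 1) ∨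
        (i.val + 1 = 2*ℓ - k + 1 ∧ j.val + 1 = 2*ℓ - k)) then 1
    else 0

/-- `n_{ℓ⃗} = ∏_{ν=1}^{μ} ( s_{ℓ'_ν+1} ⋯ s_{ℓ'_ν+ℓ_ν-1} · t_{ℓ'_ν+ℓ_ν} )`. -/
noncomputable def n (ℓ μ : ℕ) (L : Fin μ → ℕ) : Matrix (Fin (2*ℓ)) (Fin (2*ℓ)) ℂ :=
  (List.ofFn fun ν : Fin μ =>
    (List.ofFn fun a : Fin (L ν - 1) =>
      s ℓ ((∑ j ∈ Finset.Iio ν, L j) + a.val + 1)).prod *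
    t ℓ ((∑ j ∈ Finset.Iio ν, L j) + L ν)).prod

/-!
Every generator is a permutation matrix: `s_k` is the matrix of `(k k+1)(2ℓ-k 2ℓ-k+1)` and `t_k`
that of `(k 2ℓ+1-k)`. These permutations are involutions commuting with the reversal
`v ↦ 2ℓ+1-v` represented by `K`, so each generator, and hence `n_ℓ⃗`, satisfies `gᵀ K g = K`,
which is the defining condition of `SO_{2ℓ}` written without inverses.

The `ν`-th factor of `n_ℓ⃗` is the single cycle
`ℓ'_ν+1 → ⋯ → ℓ'_ν+ℓ_ν → 2ℓ-ℓ'_ν → ⋯ → 2ℓ+1-ℓ'_ν-ℓ_ν → ℓ'_ν+1` of length `2ℓ_ν`, and these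
cycles have disjoint supports tiling `{1, …, 2ℓ}`. After reindexing along the cycles, `n_ℓ⃗`
becomes block diagonal with cyclic shift blocks `C` of sizes `2ℓ_ν`. Since `C^{2ℓ_ν} = 1` and the
first column of `C^d` is the `d`-th basis vector, Cayley–Hamilton forces `χ_C = t^{2ℓ_ν} - 1`.
The determinant is then `(-1)^{2ℓ+μ} = 1`.
-/

section CyclicShift

open Fin.NatCast

def cyclicShift (R : Type*) [Zero R] [One R] (m : ℕ) [NeZero m] : Matrix (Fin m) (Fin m) R :=
  of fun i j => if i = j + 1 then 1 else 0

variable {R : Type*} [CommRing R] {m : ℕ} [NeZero m]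

lemma cyclicShift_pow_apply (r : ℕ) (i j : Fin m) :
    (cyclicShift R m ^ r) i j = if i = j + (r : Fin m) then 1 else 0 := by
  induction r generalizing i j with
  | zero => simp [one_apply]
  | succ r ih =>
    rw [pow_succ, mul_apply, Finset.sum_eq_single (j + 1), ih]
    · simp [cyclicShift, add_assoc, add_comm (1 : Fin m)]
    · intro k _ hk
      simp [cyclicShift, hk]
    · simp

lemma cyclicShift_pow_self : cyclicShift R m ^ m = 1 := by
  ext i j
  simp [cyclicShift_pow_apply, one_apply]

lemma aeval_cyclicShift_apply_zero {q : R[X]} (hq : q.natDegree < m) (d : Fin m) :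
    aeval (cyclicShift R m) q d 0 = q.coeff d := by
  rw [aeval_eq_sum_range' hq, Matrix.sum_apply, Finset.sum_eq_single d.val]
  · simp [cyclicShift_pow_apply]
  · intro k hk hkd
    have : d ≠ (k : Fin m) := by
      rintro rfl
      exact hkd (Fin.val_cast_of_lt (Finset.mem_range.mp hk)).symm
    simp [cyclicShift_pow_apply, this]
  · simp

lemma charpoly_cyclicShift [Nontrivial R] : (cyclicShift R m).charpoly = X ^ m - 1 := by
  set q := (cyclicShift R m).charpoly - X ^ m with hq_def
  have hdeg : q.natDegree < m :=
    IsMonicOfDegree.natDegree_sub_X_pow (NeZero.ne m) ⟨by simp, charpoly_monic _⟩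
  have haeval : aeval (cyclicShift R m) q = -1 := by
    simp [q, aeval_self_charpoly, cyclicShift_pow_self]
  have hq : q = -1 := by
    ext d
    by_cases hd : d < m
    · have := aeval_cyclicShift_apply_zero hdeg ⟨d, hd⟩
      rw [haeval] at this
      simp [← this, one_apply, coeff_one, Fin.ext_iff]
    · rw [coeff_eq_zero_of_natDegree_lt (by omega)]
      simp [coeff_one]
      omega
  rw [hq_def] at hq
  linear_combination hq

end CyclicShift

section BlockDiagonal

variable {R : Type*} [CommRing R] {κ : Type*} [Fintype κ] [LinearOrder κ]

lemma charpoly_blockDiagonal' {m : κ → Type*} [∀ i, Fintype (m i)] [∀ i, DecidableEq (m i)]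
    (d : ∀ i, Matrix (m i) (m i) R) :
    (blockDiagonal' d).charpoly = ∏ i, (d i).charpoly := by
  rw [(blockTriangular_blockDiagonal' d).charpoly]
  refine Finset.prod_subset (Finset.subset_univ _) (fun i _ hi => ?_) |>.trans
    (Finset.prod_congr rfl fun i _ => ?_)
  · have : IsEmpty {a : Σ i, m i // a.1 = i} :=
      ⟨fun a => hi (Finset.mem_image.mpr ⟨a.1, Finset.mem_univ _, a.2⟩)⟩
    simp [charpoly]
  · have : toSquareBlock (blockDiagonal' d) Sigma.fst i =
        reindex (Equiv.sigmaSubtype i).symm (Equiv.sigmaSubtype i).symm (d i) := by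
      ext ⟨⟨j, b⟩, hj⟩ ⟨⟨j', b'⟩, hj'⟩
      dsimp only at hj hj'
      subst hj hj'
      simp [toSquareBlock_def, blockDiagonal'_apply_eq]
    rw [this, charpoly_reindex]

lemma charpoly_eq_prod_of_cycles [Nontrivial R] {ι : Type*} [Fintype ι] [DecidableEq ι]
    {m : κ → ℕ} [∀ i, NeZero (m i)] (e : (Σ i, Fin (m i)) ≃ ι) {P : Matrix ι ι R}
    (hP : ∀ p i (b : Fin (m i)), P (e p) (e ⟨i, b⟩) = if p = ⟨i, b + 1⟩ then 1 else 0) :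
    P.charpoly = ∏ i, (X ^ m i - 1) := by
  have hPe : P = reindex e e (blockDiagonal' fun i => cyclicShift R (m i)) := by
    ext x y
    obtain ⟨⟨j, c⟩, rfl⟩ := e.surjective x
    obtain ⟨⟨i, b⟩, rfl⟩ := e.surjective y
    rw [hP, reindex_apply, submatrix_apply, e.symm_apply_apply, e.symm_apply_apply]
    by_cases h : j = i
    · subst h
      simp [blockDiagonal'_apply_eq, cyclicShift]
    · simp [blockDiagonal'_apply_ne _ _ _ h, h]
  rw [hPe, charpoly_reindex, charpoly_blockDiagonal']
  simp [charpoly_cyclicShift]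

end BlockDiagonal

lemma det_eq_neg_one_pow_of_charpoly_eq_prod {R : Type*} [CommRing R] {ι κ : Type*} [Fintype ι]
    [DecidableEq ι] [Fintype κ] {M : Matrix ι ι R} {m : κ → ℕ} (hm : ∀ i, m i ≠ 0)
    (h : M.charpoly = ∏ i, (X ^ m i - 1)) :
    M.det = (-1) ^ (Fintype.card ι + Fintype.card κ) := by
  rw [det_eq_sign_charpoly_coeff, h, coeff_zero_eq_eval_zero, eval_prod, pow_add]
  simp [hm]

section FormPreserving

variable {R : Type*} [CommRing R] {ι : Type*} [Fintype ι] [DecidableEq ι]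

def formPreserving (J : Matrix ι ι R) : Submonoid (Matrix ι ι R) where
  carrier := {g | gᵀ * J * g = J}
  mul_mem' {g h} (hg : gᵀ * J * g = J) (hh : hᵀ * J * h = J) :=
    calc (g * h)ᵀ * J * (g * h) = hᵀ * (gᵀ * J * g) * h := by
          simp only [transpose_mul, Matrix.mul_assoc]
      _ = J := by rw [hg, hh]
  one_mem' := by simp

lemma mem_formPreserving {J g : Matrix ι ι R} : g ∈ formPreserving J ↔ gᵀ * J * g = J :=
  Iff.rfl

lemma eq_transpose_mul_inv_mul {J g : Matrix ι ι R} (hJ : J * J = 1)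
    (hg : g ∈ formPreserving J) : g = (J * g⁻¹ * J)ᵀ := by
  have hinv : g⁻¹ = J * gᵀ * J := by
    refine inv_eq_left_inv ?_
    rw [Matrix.mul_assoc, Matrix.mul_assoc, ← Matrix.mul_assoc gᵀ, mem_formPreserving.mp hg, hJ]
  rw [hinv, ← Matrix.mul_assoc, ← Matrix.mul_assoc, hJ, Matrix.one_mul, Matrix.mul_assoc, hJ,
    Matrix.mul_one, transpose_transpose]

end FormPreserving

open Set Equiv

lemma mapsTo_list_prod {α : Type*} {l : List (Perm α)} {S : Set α}
    (hl : ∀ σ ∈ l, MapsTo σ S S) : MapsTo l.prod S S := by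
  induction l with
  | nil => exact mapsTo_id S
  | cons σ l ih =>
    rw [List.prod_cons, Perm.coe_mul]
    exact (hl σ (by simp)).comp (ih fun τ hτ => hl τ (by simp [hτ]))

lemma list_prod_apply_eq_getElem_apply {α : Type*} {l : List (Perm α)} {k : ℕ}
    (hk : k < l.length) {S : Set α} (hS : MapsTo l[k] S S)
    (hfix : ∀ i (hi : i < l.length), i ≠ k → ∀ x ∈ S, l[i] x = x) {x : α} (hx : x ∈ S) :
    l.prod x = l[k] x := by
  induction l generalizing k with
  | nil => simp at hk
  | cons σ l ih =>
    rcases k with _ | k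
    · have hl : l.prod ∈ fixingSubgroup (Perm α) S :=
        Subgroup.list_prod_mem _ fun τ hτ => (mem_fixingSubgroup_iff _).mpr fun y hy => by
          obtain ⟨i, hi, rfl⟩ := List.getElem_of_mem hτ
          exact hfix (i + 1) (by simpa using hi) (by omega) y hy
      have hlx : l.prod x = x := (mem_fixingSubgroup_iff _).mp hl x hx
      rw [List.prod_cons, Perm.mul_apply, hlx]
      rfl
    · rw [List.prod_cons, Perm.mul_apply, ih (by simpa using hk) hS
        (fun i hi hik => hfix (i + 1) (by simpa using hi) (by omega))]
      exact hfix 0 (by simp) (by omega) _ (hS hx)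

section MapMatrix

def mapMatrix (R : Type*) [Zero R] [One R] (N : ℕ) (f : ℕ → ℕ) : Matrix (Fin N) (Fin N) R :=
  of fun i j => if i.val = f j.val then 1 else 0

variable {R : Type*} {N : ℕ} {f g : ℕ → ℕ}

section ZeroOne

variable [Zero R] [One R]

lemma mapMatrix_congr (h : ∀ v < N, f v = g v) : mapMatrix R N f = mapMatrix R N g := by
  ext i j
  simp [mapMatrix, h j j.isLt]

lemma mapMatrix_id : mapMatrix R N id = 1 := by
  ext i j
  simp [mapMatrix, one_apply, Fin.ext_iff]

lemma mapMatrix_transpose (hff : ∀ v < N, f (f v) = v) :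
    (mapMatrix R N f)ᵀ = mapMatrix R N f := by
  ext i j
  refine if_congr ⟨fun h => ?_, fun h => ?_⟩ rfl rfl
  · rw [h, hff _ i.isLt]
  · rw [h, hff _ j.isLt]

end ZeroOne

lemma mapMatrix_mul [Semiring R] (hg : MapsTo g (Iio N) (Iio N)) :
    mapMatrix R N f * mapMatrix R N g = mapMatrix R N (f ∘ g) := by
  ext i j
  rw [mul_apply, Finset.sum_eq_single ⟨g j, hg j.isLt⟩]
  · simp [mapMatrix]
  · intro k _ hk
    simp [mapMatrix, Fin.ext_iff.not.mp hk]
  · simp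

lemma mapMatrix_list_prod [Semiring R] {l : List (Perm ℕ)}
    (hl : ∀ σ ∈ l, MapsTo σ (Iio N) (Iio N)) :
    (l.map fun σ : Perm ℕ => mapMatrix R N ⇑σ).prod = mapMatrix R N l.prod := by
  induction l with
  | nil => exact mapMatrix_id.symm
  | cons σ l ih =>
    have hl' : ∀ τ ∈ l, MapsTo τ (Iio N) (Iio N) := fun τ hτ => hl τ (by simp [hτ])
    rw [List.map_cons, List.prod_cons, ih hl', mapMatrix_mul (mapsTo_list_prod hl'),
      List.prod_cons, Perm.coe_mul]

lemma mapMatrix_mem_formPreserving [CommRing R] {σ j : ℕ → ℕ} (hσ : MapsTo σ (Iio N) (Iio N))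
    (hσσ : ∀ v < N, σ (σ v) = v) (hj : MapsTo j (Iio N) (Iio N))
    (hσj : ∀ v < N, σ (j v) = j (σ v)) :
    mapMatrix R N σ ∈ formPreserving (mapMatrix R N j) := by
  rw [mem_formPreserving, mapMatrix_transpose hσσ, mapMatrix_mul hj, mapMatrix_mul hσ]
  exact mapMatrix_congr fun v hv => by simp [hσj _ (hσ hv), hσσ v hv]

end MapMatrix

/-! The permutations below act on 0-based positions `0, …, 2ℓ-1`, whereas the index `k` of
`s ℓ k` and `t ℓ k` is 1-based. The `…_cases` lemmas are stated as disjunctions over disjoint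
ranges so that `omega` can use them. -/

section Generators

variable {ℓ k : ℕ}

def mirror (ℓ v : ℕ) : ℕ := 2 * ℓ - 1 - v

def sPerm (ℓ k : ℕ) : Perm ℕ := swap (k - 1) k * swap (2 * ℓ - k - 1) (2 * ℓ - k)

def tPerm (ℓ k : ℕ) : Perm ℕ := swap (k - 1) (2 * ℓ - k)

lemma sPerm_apply_cases (hkℓ : k < ℓ) (v : ℕ) :
    v = k - 1 ∧ sPerm ℓ k v = k ∨ v = k ∧ sPerm ℓ k v = k - 1 ∨
    v = 2 * ℓ - k - 1 ∧ sPerm ℓ k v = 2 * ℓ - k ∨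
    v = 2 * ℓ - k ∧ sPerm ℓ k v = 2 * ℓ - k - 1 ∨
    (v < k - 1 ∨ k < v ∧ v < 2 * ℓ - k - 1 ∨ 2 * ℓ - k < v) ∧ sPerm ℓ k v = v := by
  simp only [sPerm, Perm.mul_apply, swap_apply_def]
  split_ifs <;> omega

lemma tPerm_apply_cases (hkℓ : k ≤ ℓ) (v : ℕ) :
    v = k - 1 ∧ tPerm ℓ k v = 2 * ℓ - k ∨ v = 2 * ℓ - k ∧ tPerm ℓ k v = k - 1 ∨
    (v < k - 1 ∨ k - 1 < v ∧ v < 2 * ℓ - k ∨ 2 * ℓ - k < v) ∧ tPerm ℓ k v = v := by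
  simp only [tPerm, swap_apply_def]
  split_ifs <;> omega

lemma mirror_mapsTo : MapsTo (mirror ℓ) (Iio (2 * ℓ)) (Iio (2 * ℓ)) :=
  fun v (_ : v < 2 * ℓ) => show 2 * ℓ - 1 - v < 2 * ℓ by omega

lemma sPerm_mapsTo (hk : 1 ≤ k) (hkℓ : k < ℓ) :
    MapsTo (sPerm ℓ k) (Iio (2 * ℓ)) (Iio (2 * ℓ)) := by
  intro v (hv : v < 2 * ℓ)
  have := sPerm_apply_cases hkℓ v
  rw [mem_Iio]
  omega

lemma tPerm_mapsTo (hk : 1 ≤ k) (hkℓ : k ≤ ℓ) :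
    MapsTo (tPerm ℓ k) (Iio (2 * ℓ)) (Iio (2 * ℓ)) := by
  intro v (hv : v < 2 * ℓ)
  have := tPerm_apply_cases hkℓ v
  rw [mem_Iio]
  omega

lemma K_eq_mapMatrix : K ℓ = mapMatrix ℂ (2 * ℓ) (mirror ℓ) := by
  ext ⟨i, hi⟩ ⟨j, hj⟩
  exact if_congr (by simp only [mirror]; omega) rfl rfl

lemma s_eq_mapMatrix (hk : 1 ≤ k) (hkℓ : k < ℓ) :
    s ℓ k = mapMatrix ℂ (2 * ℓ) (sPerm ℓ k) := by
  ext ⟨i, hi⟩ ⟨j, hj⟩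
  have := sPerm_apply_cases hkℓ j
  simp only [s, mapMatrix, of_apply, Fin.mk.injEq, ne_eq]
  split_ifs <;> first | rfl | omega

lemma t_eq_mapMatrix (hk : 1 ≤ k) (hkℓ : k ≤ ℓ) :
    t ℓ k = mapMatrix ℂ (2 * ℓ) (tPerm ℓ k) := by
  ext ⟨i, hi⟩ ⟨j, hj⟩
  have := tPerm_apply_cases hkℓ j
  simp only [t, mapMatrix, of_apply, Fin.mk.injEq, ne_eq]
  split_ifs <;> first | rfl | omega

lemma K_mul_self : K ℓ * K ℓ = 1 := by
  rw [K_eq_mapMatrix, mapMatrix_mul mirror_mapsTo, ← mapMatrix_id]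
  exact mapMatrix_congr fun v hv => by simp only [mirror, Function.comp_apply, id_eq]; omega

lemma s_mem_formPreserving (hk : 1 ≤ k) (hkℓ : k < ℓ) : s ℓ k ∈ formPreserving (K ℓ) := by
  rw [s_eq_mapMatrix hk hkℓ, K_eq_mapMatrix]
  refine mapMatrix_mem_formPreserving (sPerm_mapsTo hk hkℓ) (fun v _ => ?_) mirror_mapsTo
    (fun v hv => ?_)
  · have := sPerm_apply_cases hkℓ v
    have := sPerm_apply_cases hkℓ (sPerm ℓ k v)
    omega
  · have := sPerm_apply_cases hkℓ v
    have := sPerm_apply_cases hkℓ (mirror ℓ v)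
    simp only [mirror] at *
    omega

lemma t_mem_formPreserving (hk : 1 ≤ k) (hkℓ : k ≤ ℓ) : t ℓ k ∈ formPreserving (K ℓ) := by
  rw [t_eq_mapMatrix hk hkℓ, K_eq_mapMatrix]
  refine mapMatrix_mem_formPreserving (tPerm_mapsTo hk hkℓ) (fun v _ => ?_) mirror_mapsTo
    (fun v hv => ?_)
  · have := tPerm_apply_cases hkℓ v
    have := tPerm_apply_cases hkℓ (tPerm ℓ k v)
    omega
  · have := tPerm_apply_cases hkℓ v
    have := tPerm_apply_cases hkℓ (mirror ℓ v)
    simp only [mirror] at *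
    omega

end Generators

section Blocks

variable {ℓ a r m : ℕ}

/-- The product `s_{a+1} ⋯ s_{a+r}`: the cycle `a → a+1 → ⋯ → a+r → a` together with its mirror
image `2ℓ-1-a → 2ℓ-2-a → ⋯ → 2ℓ-1-a-r → 2ℓ-1-a`. -/
def partialCycle (ℓ a r v : ℕ) : ℕ :=
  if v < a then v
  else if v < a + r then v + 1
  else if v = a + r then a
  else if v < 2 * ℓ - a - r - 1 then v
  else if v = 2 * ℓ - a - r - 1 then 2 * ℓ - 1 - a
  else if v < 2 * ℓ - a then v - 1
  else v

lemma partialCycle_cases (ℓ a r v : ℕ) :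
    v < a ∧ partialCycle ℓ a r v = v ∨
    a ≤ v ∧ v < a + r ∧ partialCycle ℓ a r v = v + 1 ∨
    v = a + r ∧ partialCycle ℓ a r v = a ∨
    a + r < v ∧ v < 2 * ℓ - a - r - 1 ∧ partialCycle ℓ a r v = v ∨
    v = 2 * ℓ - a - r - 1 ∧ partialCycle ℓ a r v = 2 * ℓ - 1 - a ∨
    2 * ℓ - a - r - 1 < v ∧ v < 2 * ℓ - a ∧ partialCycle ℓ a r v = v - 1 ∨
    2 * ℓ - a ≤ v ∧ partialCycle ℓ a r v = v := by
  unfold partialCycle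
  split_ifs with h₁ h₂ h₃ h₄ h₅ h₆
  · exact .inl ⟨h₁, rfl⟩
  · exact .inr <| .inl ⟨by omega, h₂, rfl⟩
  · exact .inr <| .inr <| .inl ⟨h₃, rfl⟩
  · exact .inr <| .inr <| .inr <| .inl ⟨by omega, h₄, rfl⟩
  · exact .inr <| .inr <| .inr <| .inr <| .inl ⟨h₅, rfl⟩
  · exact .inr <| .inr <| .inr <| .inr <| .inr <| .inl ⟨by omega, h₆, rfl⟩
  · exact .inr <| .inr <| .inr <| .inr <| .inr <| .inr ⟨by omega, rfl⟩

lemma sPerm_prod_apply (h : a + r < ℓ) (v : ℕ) :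
    (List.ofFn fun x : Fin r => sPerm ℓ (a + x + 1)).prod v = partialCycle ℓ a r v := by
  induction r generalizing v with
  | zero =>
    have := partialCycle_cases ℓ a 0 v
    simp only [List.ofFn_zero, List.prod_nil, Perm.coe_one, id_eq]
    omega
  | succ r ih =>
    rw [List.ofFn_succ', List.concat_eq_append, List.prod_append, List.prod_singleton,
      Perm.mul_apply]
    simp only [Fin.val_castSucc, Fin.val_last]
    rw [ih (by omega)]
    have := sPerm_apply_cases (k := a + r + 1) h v
    have := partialCycle_cases ℓ a r (sPerm ℓ (a + r + 1) v)
    have := partialCycle_cases ℓ a (r + 1) v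
    omega

def blockPerm (ℓ a m : ℕ) : Perm ℕ :=
  (List.ofFn fun x : Fin (m - 1) => sPerm ℓ (a + x + 1)).prod * tPerm ℓ (a + m)

def cycleBlock (ℓ a m : ℕ) : Set ℕ :=
  {v | a ≤ v ∧ v < a + m ∨ 2 * ℓ - a - m ≤ v ∧ v < 2 * ℓ - a}

/-- The `b`-th point, in cycle order, of the cycle `blockPerm ℓ a m`. -/
def blockIndex (ℓ a m b : ℕ) : ℕ := if b < m then a + b else 2 * ℓ - 1 - a - (b - m)

lemma blockPerm_apply (hm : 0 < m) (h : a + m ≤ ℓ) (v : ℕ) :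
    blockPerm ℓ a m v = partialCycle ℓ a (m - 1) (tPerm ℓ (a + m) v) := by
  rw [blockPerm, Perm.mul_apply, sPerm_prod_apply (by omega)]

lemma blockPerm_mapsTo (hm : 0 < m) (h : a + m ≤ ℓ) :
    MapsTo (blockPerm ℓ a m) (Iio (2 * ℓ)) (Iio (2 * ℓ)) := by
  intro v (hv : v < 2 * ℓ)
  rw [mem_Iio, blockPerm_apply hm h]
  have := tPerm_apply_cases (k := a + m) h v
  have := partialCycle_cases ℓ a (m - 1) (tPerm ℓ (a + m) v)
  omega

lemma blockPerm_mapsTo_cycleBlock (hm : 0 < m) (h : a + m ≤ ℓ) :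
    MapsTo (blockPerm ℓ a m) (cycleBlock ℓ a m) (cycleBlock ℓ a m) := by
  intro v hv
  simp only [cycleBlock, mem_ofPred_eq, blockPerm_apply hm h] at hv ⊢
  have := tPerm_apply_cases (k := a + m) h v
  have := partialCycle_cases ℓ a (m - 1) (tPerm ℓ (a + m) v)
  omega

lemma blockPerm_apply_of_notMem (hm : 0 < m) (h : a + m ≤ ℓ) {v : ℕ}
    (hv : v ∉ cycleBlock ℓ a m) : blockPerm ℓ a m v = v := by
  simp only [cycleBlock, mem_ofPred_eq] at hv
  rw [blockPerm_apply hm h]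
  have := tPerm_apply_cases (k := a + m) h v
  have := partialCycle_cases ℓ a (m - 1) (tPerm ℓ (a + m) v)
  omega

lemma blockIndex_lt (h : a + m ≤ ℓ) {b : ℕ} (hb : b < 2 * m) : blockIndex ℓ a m b < 2 * ℓ := by
  unfold blockIndex
  split_ifs <;> omega

lemma blockIndex_mem_cycleBlock (h : a + m ≤ ℓ) {b : ℕ} (hb : b < 2 * m) :
    blockIndex ℓ a m b ∈ cycleBlock ℓ a m := by
  simp only [blockIndex, cycleBlock, mem_ofPred_eq]
  split_ifs <;> omega

lemma blockPerm_apply_blockIndex [NeZero m] (h : a + m ≤ ℓ) (b : Fin (2 * m)) :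
    blockPerm ℓ a m (blockIndex ℓ a m b) = blockIndex ℓ a m ↑(b + 1) := by
  have hm : 0 < m := Nat.pos_of_neZero m
  have hb1 : ((b + 1 : Fin (2 * m)) : ℕ) = if 2 * m ≤ b + 1 then b + 1 - 2 * m else b + 1 := by
    rw [Fin.val_add_eq_ite, Fin.val_one', Nat.one_mod_eq_one.mpr (by omega)]
  rw [blockPerm_apply hm h]
  have := tPerm_apply_cases (k := a + m) h (blockIndex ℓ a m b)
  have := partialCycle_cases ℓ a (m - 1) (tPerm ℓ (a + m) (blockIndex ℓ a m b))
  have := b.isLt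
  simp only [blockIndex] at *
  split_ifs at * <;> omega

lemma blockFactor_eq_mapMatrix (hm : 0 < m) (h : a + m ≤ ℓ) :
    (List.ofFn fun x : Fin (m - 1) => s ℓ (a + x + 1)).prod * t ℓ (a + m) =
      mapMatrix ℂ (2 * ℓ) (blockPerm ℓ a m) := by
  have hs : (List.ofFn fun x : Fin (m - 1) => s ℓ (a + x + 1)) =
      (List.ofFn fun x : Fin (m - 1) => sPerm ℓ (a + x + 1)).map
        fun σ : Perm ℕ => mapMatrix ℂ (2 * ℓ) ⇑σ := by
    rw [List.map_ofFn]
    exact List.ofFn_inj.mpr (funext fun x => s_eq_mapMatrix (by omega) (by omega))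
  rw [hs, mapMatrix_list_prod, t_eq_mapMatrix (by omega) h,
    mapMatrix_mul (tPerm_mapsTo (by omega) h)]
  · rfl
  · simp only [List.mem_ofFn, forall_exists_index]
    rintro _ x rfl
    exact sPerm_mapsTo (by omega) (by omega)

end Blocks

section Partition

variable {μ : ℕ}

def offset (L : Fin μ → ℕ) (ν : Fin μ) : ℕ := ∑ j ∈ Finset.Iio ν, L j

def nPerm (ℓ : ℕ) (L : Fin μ → ℕ) : Perm ℕ :=
  (List.ofFn fun ν => blockPerm ℓ (offset L ν) (L ν)).prod

variable {ℓ : ℕ} {L : Fin μ → ℕ}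

lemma offset_add_le_offset {ν ν' : Fin μ} (h : ν < ν') : offset L ν + L ν ≤ offset L ν' := by
  rw [offset, Finset.sum_Iio_add_eq_sum_Iic]
  exact Finset.sum_le_sum_of_subset fun j hj =>
    Finset.mem_Iio.mpr ((Finset.mem_Iic.mp hj).trans_lt h)

lemma offset_add_le_of_sum_eq (hsum : ∑ j, L j = ℓ) (ν : Fin μ) : offset L ν + L ν ≤ ℓ := by
  rw [← hsum, offset, Finset.sum_Iio_add_eq_sum_Iic]
  exact Finset.sum_le_sum_of_subset (Finset.subset_univ _)

lemma n_eq_mapMatrix (hpos : ∀ ν, 0 < L ν) (hle : ∀ ν, offset L ν + L ν ≤ ℓ) :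
    n ℓ μ L = mapMatrix ℂ (2 * ℓ) (nPerm ℓ L) := by
  have hn : n ℓ μ L = ((List.ofFn fun ν => blockPerm ℓ (offset L ν) (L ν)).map
      fun σ : Perm ℕ => mapMatrix ℂ (2 * ℓ) ⇑σ).prod := by
    rw [n, List.map_ofFn]
    exact congrArg List.prod
      (List.ofFn_inj.mpr (funext fun ν => blockFactor_eq_mapMatrix (hpos ν) (hle ν)))
  rw [hn, mapMatrix_list_prod, nPerm]
  simp only [List.mem_ofFn, forall_exists_index]
  rintro _ ν rfl
  exact blockPerm_mapsTo (hpos ν) (hle ν)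

lemma n_mem_formPreserving (hpos : ∀ ν, 0 < L ν) (hle : ∀ ν, offset L ν + L ν ≤ ℓ) :
    n ℓ μ L ∈ formPreserving (K ℓ) := by
  refine Submonoid.list_prod_mem _ fun g hg => ?_
  obtain ⟨ν, rfl⟩ := List.mem_ofFn.mp hg
  have := hpos ν
  have := hle ν
  refine Submonoid.mul_mem _ (Submonoid.list_prod_mem _ fun g hg => ?_)
    (t_mem_formPreserving (by omega) (hle ν))
  obtain ⟨x, rfl⟩ := List.mem_ofFn.mp hg
  exact s_mem_formPreserving (by omega) (by change offset L ν + x + 1 < ℓ; omega)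

lemma notMem_cycleBlock_of_ne (hle : ∀ ν, offset L ν + L ν ≤ ℓ) {ν ν' : Fin μ} (h : ν ≠ ν')
    {v : ℕ} (hv : v ∈ cycleBlock ℓ (offset L ν) (L ν)) :
    v ∉ cycleBlock ℓ (offset L ν') (L ν') := by
  simp only [cycleBlock, mem_ofPred_eq] at hv ⊢
  have := hle ν
  have := hle ν'
  rcases h.lt_or_gt with h | h
  · have := offset_add_le_offset (L := L) h
    omega
  · have := offset_add_le_offset (L := L) h
    omega

lemma nPerm_apply_of_mem (hpos : ∀ ν, 0 < L ν) (hle : ∀ ν, offset L ν + L ν ≤ ℓ) (ν : Fin μ)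
    {v : ℕ} (hv : v ∈ cycleBlock ℓ (offset L ν) (L ν)) :
    nPerm ℓ L v = blockPerm ℓ (offset L ν) (L ν) v := by
  simpa [nPerm] using list_prod_apply_eq_getElem_apply
    (l := List.ofFn fun ν => blockPerm ℓ (offset L ν) (L ν)) (k := ν) (by simp)
    (by simpa using blockPerm_mapsTo_cycleBlock (hpos ν) (hle ν))
    (fun i hi hiν x hx => by
      simp only [List.getElem_ofFn]
      exact blockPerm_apply_of_notMem (hpos _) (hle _)
        (notMem_cycleBlock_of_ne hle (fun h => hiν (by rw [h])) hx)) hv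

lemma blockIndex_injective (hle : ∀ ν, offset L ν + L ν ≤ ℓ) {ν ν' : Fin μ}
    {b : Fin (2 * L ν)} {b' : Fin (2 * L ν')}
    (h : blockIndex ℓ (offset L ν) (L ν) b = blockIndex ℓ (offset L ν') (L ν') b') :
    (⟨ν, b⟩ : Σ ν, Fin (2 * L ν)) = ⟨ν', b'⟩ := by
  obtain rfl : ν = ν' := by
    by_contra hne
    exact notMem_cycleBlock_of_ne hle hne (blockIndex_mem_cycleBlock (hle ν) b.isLt)
      (h ▸ blockIndex_mem_cycleBlock (hle ν') b'.isLt)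
  have := b.isLt
  have := b'.isLt
  have := hle ν
  unfold blockIndex at h
  rw [Fin.ext (by split_ifs at h <;> omega : b.val = b'.val)]

variable (L) in
noncomputable def blockEquiv (hsum : ∑ ν, L ν = ℓ) :
    (Σ ν : Fin μ, Fin (2 * L ν)) ≃ Fin (2 * ℓ) :=
  Equiv.ofBijective
    (fun p => ⟨blockIndex ℓ (offset L p.1) (L p.1) p.2,
      blockIndex_lt (offset_add_le_of_sum_eq hsum p.1) p.2.isLt⟩)
    ((Fintype.bijective_iff_injective_and_card _).mpr
      ⟨fun ⟨_, _⟩ ⟨_, _⟩ h => blockIndex_injective (offset_add_le_of_sum_eq hsum)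
        (Fin.val_eq_of_eq h), by simp [← hsum, Finset.mul_sum]⟩)

lemma blockEquiv_val (hsum : ∑ ν, L ν = ℓ) (p : Σ ν : Fin μ, Fin (2 * L ν)) :
    (blockEquiv L hsum p : ℕ) = blockIndex ℓ (offset L p.1) (L p.1) p.2 :=
  rfl

lemma mapMatrix_nPerm_blockEquiv [∀ ν, NeZero (L ν)] (hsum : ∑ ν, L ν = ℓ)
    (p : Σ ν : Fin μ, Fin (2 * L ν)) (ν : Fin μ) (b : Fin (2 * L ν)) :
    mapMatrix ℂ (2 * ℓ) (nPerm ℓ L) (blockEquiv L hsum p) (blockEquiv L hsum ⟨ν, b⟩) =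
      if p = ⟨ν, b + 1⟩ then 1 else 0 := by
  have hle := offset_add_le_of_sum_eq hsum
  have hcycle : nPerm ℓ L (blockEquiv L hsum ⟨ν, b⟩) = blockEquiv L hsum ⟨ν, b + 1⟩ := by
    rw [blockEquiv_val, blockEquiv_val, nPerm_apply_of_mem (fun ν => Nat.pos_of_neZero (L ν))
      hle ν (blockIndex_mem_cycleBlock (hle ν) b.isLt)]
    exact blockPerm_apply_blockIndex (hle ν) b
  simp only [mapMatrix, of_apply, hcycle, ← Fin.ext_iff, (blockEquiv L hsum).injective.eq_iff]

end Partition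

theorem stmt9_general (ℓ μ : ℕ) (hμ : Even μ) (L : Fin μ → ℕ)
    (hpos : ∀ ν, 0 < L ν) (hsum : ∑ ν, L ν = ℓ) :
    (n ℓ μ L).det = 1 ∧ n ℓ μ L = (K ℓ * (n ℓ μ L)⁻¹ * K ℓ)ᵀ ∧
    (n ℓ μ L).charpoly = ∏ ν : Fin μ, (X ^ (2 * L ν) - 1) := by
  have : ∀ ν, NeZero (L ν) := fun ν => ⟨(hpos ν).ne'⟩
  have hle := offset_add_le_of_sum_eq hsum
  have hchar : (n ℓ μ L).charpoly = ∏ ν, (X ^ (2 * L ν) - 1) := by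
    rw [n_eq_mapMatrix hpos hle]
    exact charpoly_eq_prod_of_cycles (blockEquiv L hsum) (mapMatrix_nPerm_blockEquiv hsum)
  refine ⟨?_, eq_transpose_mul_inv_mul K_mul_self (n_mem_formPreserving hpos hle), hchar⟩
  rw [det_eq_neg_one_pow_of_charpoly_eq_prod (fun ν => by have := hpos ν; omega) hchar]
  simpa using ((even_two_mul ℓ).add hμ).neg_one_pow

/-- For `ℓ ≥ 3` and a partition `ℓ⃗ = (ℓ_μ ≥ ⋯ ≥ ℓ_1)` of `ℓ` into an even
number `μ` of positive parts, the element `n_{ℓ⃗}` lies in `SO_{2ℓ}(ℂ)` (i.e. it satisfies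
`g = (K g⁻¹ K)ᵀ` and `det g = 1`) and its characteristic polynomial acting on `ℂ^{2ℓ}` is
`∏_{ν=1}^{μ} (t^{2ℓ_ν} - 1)`. -/
theorem stmt9 (ℓ μ : ℕ) (hℓ : 3 ≤ ℓ) (hμ : Even μ) (L : Fin μ → ℕ)
    (hpos : ∀ ν, 0 < L ν) (hmono : Monotone L) (hsum : ∑ ν, L ν = ℓ) :
    (n ℓ μ L).det = 1 ∧ n ℓ μ L = (K ℓ * (n ℓ μ L)⁻¹ * K ℓ)ᵀ ∧
    (n ℓ μ L).charpoly = ∏ ν : Fin μ, (X ^ (2 * L ν) - 1) :=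
  stmt9_general ℓ μ hμ L hpos hsum

end Stmt9
end

section
/- Let ℓ⃗ = (ℓ_μ ≥ ⋯ ≥ ℓ_1) and ℓ⃗' = (ℓ'_{μ'} ≥ ⋯ ≥ ℓ'_1) be partitions of the same integer ℓ ≥ 1 into positive parts. If ∏_{ν=1}^{μ} (t^{2ℓ_ν} - 1) = ∏_{ν=1}^{μ'} (t^{2ℓ'_ν} - 1) as polynomials in ℂ[t], then μ = μ' and ℓ_ν = ℓ'_ν for all ν. -/
/-!
Every root of `∏ (t ^ n - 1)` is a root of unity, and the largest order of such a root is the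
largest exponent `n`. Hence two such products with positive exponents share their largest factor;
cancelling it and inducting shows that the multisets of exponents agree. Sorted sequences with the
same multiset of entries coincide.
-/

open Polynomial

namespace Polynomial

variable {K : Type*} [Field K]

noncomputable def prodXPowSubOne (s : Multiset ℕ) : K[X] :=
  (s.map fun n => X ^ n - 1).prod

theorem prodXPowSubOne_cons (n : ℕ) (s : Multiset ℕ) :
    (prodXPowSubOne (n ::ₘ s) : K[X]) = (X ^ n - 1) * prodXPowSubOne s := by
  simp only [prodXPowSubOne, Multiset.map_cons, Multiset.prod_cons]

theorem eval_prodXPowSubOne_eq_zero_iff (s : Multiset ℕ) (z : K) :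
    (prodXPowSubOne s).eval z = 0 ↔ ∃ n ∈ s, z ^ n = 1 := by
  simp [prodXPowSubOne, eval_multiset_prod, Multiset.prod_eq_zero_iff, sub_eq_zero]

theorem prod_X_pow_sub_one_eq_prodXPowSubOne {ι : Type*} [Fintype ι] (f : ι → ℕ) :
    ∏ i, ((X : K[X]) ^ f i - 1) = prodXPowSubOne (Finset.univ.val.map f) := by
  simp only [prodXPowSubOne, Finset.prod_eq_multiset_prod, Multiset.map_map, Function.comp_def]

variable [IsAlgClosed K] [CharZero K]

/-- A primitive `m`-th root of unity is a root of `X ^ n - 1` only when `m ∣ n`. -/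
theorem exists_dvd_of_prodXPowSubOne_eq {s s' : Multiset ℕ} {m : ℕ} (hm : m ∈ s) (hm0 : 0 < m)
    (h : (prodXPowSubOne s : K[X]) = prodXPowSubOne s') : ∃ n ∈ s', m ∣ n := by
  have : NeZero (m : K) := ⟨by exact_mod_cast hm0.ne'⟩
  obtain ⟨ζ, hζ⟩ := HasEnoughRootsOfUnity.exists_primitiveRoot K m
  have hroot : (prodXPowSubOne s).eval ζ = 0 :=
    (eval_prodXPowSubOne_eq_zero_iff s ζ).2 ⟨m, hm, hζ.pow_eq_one⟩
  rw [h, eval_prodXPowSubOne_eq_zero_iff] at hroot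
  obtain ⟨n, hn, hζn⟩ := hroot
  exact ⟨n, hn, hζ.pow_eq_one_iff_dvd n |>.1 hζn⟩

theorem mem_of_prodXPowSubOne_eq {s s' : Multiset ℕ} (hs : ∀ n ∈ s, 0 < n)
    (hs' : ∀ n ∈ s', 0 < n) (h : (prodXPowSubOne s : K[X]) = prodXPowSubOne s') {m : ℕ}
    (hm : m ∈ s) (hmax : ∀ k ∈ s, k ≤ m) : m ∈ s' := by
  obtain ⟨n, hn, hmn⟩ := exists_dvd_of_prodXPowSubOne_eq hm (hs m hm) h
  obtain ⟨k, hk, hnk⟩ := exists_dvd_of_prodXPowSubOne_eq hn (hs' n hn) h.symm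
  have : n = m := le_antisymm ((Nat.le_of_dvd (hs k hk) hnk).trans (hmax k hk))
    (Nat.le_of_dvd (hs' n hn) hmn)
  exact this ▸ hn

theorem eq_of_prodXPowSubOne_eq {s s' : Multiset ℕ} (hs : ∀ n ∈ s, 0 < n) (hs' : ∀ n ∈ s', 0 < n)
    (h : (prodXPowSubOne s : K[X]) = prodXPowSubOne s') : s = s' := by
  induction s using Multiset.strongInductionOn generalizing s' with
  | ih s ih =>
  rcases eq_or_ne s 0 with rfl | hne
  · rw [eq_comm, Multiset.eq_zero_iff_forall_notMem]
    intro n hn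
    obtain ⟨k, hk, -⟩ := exists_dvd_of_prodXPowSubOne_eq hn (hs' n hn) h.symm
    exact Multiset.notMem_zero k hk
  obtain ⟨m, hm, hmax⟩ := Multiset.exists_max_image id hne
  have hm' := mem_of_prodXPowSubOne_eq hs hs' h hm hmax
  rw [← Multiset.cons_erase hm, ← Multiset.cons_erase hm', prodXPowSubOne_cons,
    prodXPowSubOne_cons] at h
  rw [← Multiset.cons_erase hm, ← Multiset.cons_erase hm',
    ih _ (Multiset.erase_lt.2 hm) (fun n hn => hs n (Multiset.mem_of_mem_erase hn))
      (fun n hn => hs' n (Multiset.mem_of_mem_erase hn))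
      (mul_left_cancel₀ (X_pow_sub_C_ne_zero (hs m hm) 1) h)]

end Polynomial

theorem stmt10_general (μ μ' : ℕ) (L : Fin μ → ℕ) (L' : Fin μ' → ℕ)
    (hpos : ∀ ν, 0 < L ν) (hmono : Monotone L)
    (hpos' : ∀ ν, 0 < L' ν) (hmono' : Monotone L')
    (heq : ∏ ν : Fin μ, ((X : ℂ[X]) ^ (2 * L ν) - 1) =
           ∏ ν : Fin μ', ((X : ℂ[X]) ^ (2 * L' ν) - 1)) :
    μ = μ' ∧ ∀ (ν : ℕ) (h1 : ν < μ) (h2 : ν < μ'), L ⟨ν, h1⟩ = L' ⟨ν, h2⟩ := by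
  have hmset : Finset.univ.val.map L = Finset.univ.val.map L' := by
    refine Multiset.map_injective (f := (2 * ·)) (mul_right_injective₀ two_ne_zero) ?_
    refine eq_of_prodXPowSubOne_eq (K := ℂ) ?_ ?_ ?_
    · simp [hpos]
    · simp [hpos']
    · simpa only [prod_X_pow_sub_one_eq_prodXPowSubOne, Multiset.map_map, Function.comp_def]
        using heq
  rw [Fin.univ_val_map, Fin.univ_val_map] at hmset
  have hlist : List.ofFn L = List.ofFn L' :=
    (Multiset.coe_eq_coe.1 hmset).eq_of_sortedLE hmono.sortedLE_ofFn hmono'.sortedLE_ofFn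
  obtain rfl : μ = μ' := by simpa using congrArg List.length hlist
  obtain rfl := List.ofFn_injective hlist
  exact ⟨rfl, fun _ _ _ => rfl⟩

/-- If `ℓ⃗ = (ℓ_μ ≥ ⋯ ≥ ℓ_1)` and `ℓ⃗' = (ℓ'_{μ'} ≥ ⋯ ≥ ℓ'_1)` are
partitions of the same integer `ℓ ≥ 1` into positive parts and
`∏_ν (t^{2ℓ_ν} - 1) = ∏_ν (t^{2ℓ'_ν} - 1)` in `ℂ[t]`, then `μ = μ'` and `ℓ_ν = ℓ'_ν` for
all `ν`. -/
theorem stmt10 (ℓ μ μ' : ℕ) (hℓ : 1 ≤ ℓ) (L : Fin μ → ℕ) (L' : Fin μ' → ℕ)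
    (hpos : ∀ ν, 0 < L ν) (hmono : Monotone L) (hsum : ∑ ν, L ν = ℓ)
    (hpos' : ∀ ν, 0 < L' ν) (hmono' : Monotone L') (hsum' : ∑ ν, L' ν = ℓ)
    (heq : ∏ ν : Fin μ, ((X : ℂ[X]) ^ (2 * L ν) - 1) =
           ∏ ν : Fin μ', ((X : ℂ[X]) ^ (2 * L' ν) - 1)) :
    μ = μ' ∧ ∀ (ν : ℕ) (h1 : ν < μ) (h2 : ν < μ'), L ⟨ν, h1⟩ = L' ⟨ν, h2⟩ :=
  stmt10_general μ μ' L L' hpos hmono hpos' hmono' heq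
end

section
/- Let ℓ ≥ 3 and let ℓ⃗ and ℓ⃗' be partitions of ℓ, each into an even number of positive parts, with associated elements n_{ℓ⃗} and n_{ℓ⃗'} of SO_{2ℓ}(ℂ). If there exists g ∈ SO_{2ℓ}(ℂ) with g n_{ℓ⃗} g⁻¹ = n_{ℓ⃗'}, then ℓ⃗ = ℓ⃗'. -/
/-!
Reading indices from `0`, `n_{ℓ⃗}` is the permutation matrix of a permutation of
`{0, …, 2ℓ-1}` whose cycles are the blocks
`[ℓ'_ν, ℓ'_ν + ℓ_ν) ∪ [2ℓ - ℓ'_ν - ℓ_ν, 2ℓ - ℓ'_ν)`, of length `2ℓ_ν`: the factor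
`s_{ℓ'_ν+1} ⋯ s_{ℓ'_ν+ℓ_ν-1}` shifts both halves of a block and `t_{ℓ'_ν+ℓ_ν}` closes them
into one cycle. Conjugate matrices have equal traces of powers, and `tr (n_{ℓ⃗}^k)` counts the
fixed points of the `k`-th power, namely `∑_{2ℓ_ν ∣ k} 2ℓ_ν`. By Möbius inversion these counts
determine the multiset of the `ℓ_ν`, and a sorted tuple is determined by its multiset.
-/
open Matrix

namespace Stmt11

/-- The anti-diagonal matrix `K` with ones on the anti-diagonal. -/
noncomputable def K (ℓ : ℕ) : Matrix (Fin (2*ℓ)) (Fin (2*ℓ)) ℂ :=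
  Matrix.of fun i j => if (i.val + 1) + (j.val + 1) = 2*ℓ + 1 then 1 else 0

/-- The matrix `t_k ∈ O_{2ℓ}(ℂ)` (1-based indices). -/
noncomputable def t (ℓ k : ℕ) : Matrix (Fin (2*ℓ)) (Fin (2*ℓ)) ℂ :=
  Matrix.of fun i j =>
    if i = j ∧ i.val + 1 ≠ k ∧ i.val + 1 ≠ 2*ℓ - k + 1 then 1
    else if i ≠ j ∧ ((i.val + 1 = k ∧ j.val + 1 = 2*ℓ - k + 1) ∨
        (i.val + 1 = 2*ℓ - k + 1 ∧ j.val + 1 = k)) then 1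
    else 0

/-- The matrix `s_k ∈ SO_{2ℓ}(ℂ)` (1-based indices). -/
noncomputable def s (ℓ k : ℕ) : Matrix (Fin (2*ℓ)) (Fin (2*ℓ)) ℂ :=
  Matrix.of fun i j =>
    if i = j ∧ i.val + 1 ≠ k ∧ i.val + 1 ≠ k + 1 ∧
        i.val + 1 ≠ 2*ℓ - k ∧ i.val + 1 ≠ 2*ℓ - k + 1 then 1
    else if i ≠ j ∧ ((i.val + 1 = k ∧ j.val + 1 = k + 1) ∨
        (i.val + 1 = k + 1 ∧ j.val + 1 = k)) then 1
    else if i ≠ j ∧ ((i.val + 1 = 2*ℓ - k ∧ j.val + 1 = 2*ℓ - k + 1) ∨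
        (i.val + 1 = 2*ℓ - k + 1 ∧ j.val + 1 = 2*ℓ - k)) then 1
    else 0

/-- `n_{ℓ⃗} = ∏_{ν=1}^{μ} ( s_{ℓ'_ν+1} ⋯ s_{ℓ'_ν+ℓ_ν-1} · t_{ℓ'_ν+ℓ_ν} )`. -/
noncomputable def n (ℓ μ : ℕ) (L : Fin μ → ℕ) : Matrix (Fin (2*ℓ)) (Fin (2*ℓ)) ℂ :=
  (List.ofFn fun ν : Fin μ =>
    (List.ofFn fun a : Fin (L ν - 1) =>
      s ℓ ((∑ j ∈ Finset.Iio ν, L j) + a.val + 1)).prod *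
    t ℓ ((∑ j ∈ Finset.Iio ν, L j) + L ν)).prod

open Finset Function

lemma eqOn_iterate {α : Type*} {f g : α → α} {s : Set α} (h : Set.EqOn f g s)
    (hg : Set.MapsTo g s s) (k : ℕ) : Set.EqOn f^[k] g^[k] s := by
  induction k with
  | zero => exact Set.eqOn_refl _ _
  | succ k ih =>
    intro x hx
    rw [iterate_succ_apply, iterate_succ_apply, h hx, ih (hg hx)]

lemma Multiset.sum_filter_dvd_eq_sum_divisors (s : Multiset ℕ) {k : ℕ} (hk : 0 < k) :
    (s.filter (· ∣ k)).sum = ∑ d ∈ k.divisors, s.count d * d := by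
  classical
  rw [sum_multiset_count_of_subset _ k.divisors fun d hd => by
    simp only [Multiset.mem_toFinset, Multiset.mem_filter] at hd
    exact Nat.mem_divisors.2 ⟨hd.2, hk.ne'⟩]
  refine sum_congr rfl fun d hd => ?_
  rw [Multiset.count_filter, if_pos (Nat.dvd_of_mem_divisors hd), smul_eq_mul]

lemma Multiset.eq_of_sum_filter_dvd_eq {s t : Multiset ℕ} (hs : 0 ∉ s) (ht : 0 ∉ t)
    (h : ∀ k, 0 < k → (s.filter (· ∣ k)).sum = (t.filter (· ∣ k)).sum) : s = t := by
  -- Möbius inversion recovers `d * count d u` from its divisor sums `(u.filter (· ∣ k)).sum`.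
  have hinv : ∀ u : Multiset ℕ, (∀ k, 0 < k → (u.filter (· ∣ k)).sum = (s.filter (· ∣ k)).sum) →
      ∀ d, 0 < d → ∑ x ∈ d.divisorsAntidiagonal,
        ArithmeticFunction.moebius x.1 • ((s.filter (· ∣ x.2)).sum : ℤ) = u.count d * d :=
    fun u hu => ArithmeticFunction.sum_eq_iff_sum_smul_moebius_eq
      (f := fun d => (u.count d * d : ℤ)) (g := fun k => ((s.filter (· ∣ k)).sum : ℤ)).1
      fun k hk => by
        rw [← hu k hk, Multiset.sum_filter_dvd_eq_sum_divisors u hk]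
        push_cast
        rfl
  ext d
  rcases Nat.eq_zero_or_pos d with rfl | hd
  · rw [Multiset.count_eq_zero.2 hs, Multiset.count_eq_zero.2 ht]
  · have := (hinv s (fun _ _ => rfl) d hd).symm.trans (hinv t (fun k hk => (h k hk).symm) d hd)
    exact Nat.eq_of_mul_eq_mul_right hd (by exact_mod_cast this)

lemma eq_of_map_univ_eq {μ μ' : ℕ} {L : Fin μ → ℕ} {L' : Fin μ' → ℕ} (hmono : Monotone L)
    (hmono' : Monotone L') (h : univ.val.map L = univ.val.map L') :
    μ = μ' ∧ ∀ (ν : ℕ) (h1 : ν < μ) (h2 : ν < μ'), L ⟨ν, h1⟩ = L' ⟨ν, h2⟩ := by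
  rw [Fin.univ_val_map, Fin.univ_val_map, Multiset.coe_eq_coe] at h
  have hL := h.eq_of_sortedLE hmono.sortedLE_ofFn hmono'.sortedLE_ofFn
  refine ⟨by simpa using congrArg List.length hL, fun ν h1 h2 => ?_⟩
  have := List.getElem_of_eq hL (by simpa using h1)
  rwa [List.getElem_ofFn, List.getElem_ofFn] at this

lemma trace_conj_pow {m R : Type*} [Fintype m] [DecidableEq m] [CommRing R]
    {g : Matrix m m R} (hg : IsUnit g.det) (A : Matrix m m R) (k : ℕ) :
    ((g * A * g⁻¹) ^ k).trace = (A ^ k).trace := by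
  set u := ((Matrix.isUnit_iff_isUnit_det g).2 hg).unit
  have hu : (↑u⁻¹ : Matrix m m R) = g⁻¹ := Matrix.coe_units_inv u
  rw [← hu, show g = u from rfl, Units.conj_pow, Matrix.trace_units_conj]

section MapMatrix

variable (R : Type*) [Semiring R] (N : ℕ)

/-- Maps of `Fin N` are modelled by self-maps of `ℕ` that preserve `[0, N)`, so that index
arithmetic can be left to `omega`. Note that `mapMatrix` reverses composition. -/
def mapMatrix (f : ℕ → ℕ) : Matrix (Fin N) (Fin N) R :=
  Matrix.of fun i j => if f i = j then 1 else 0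

variable {R N}

lemma mapMatrix_congr {f g : ℕ → ℕ} (h : Set.EqOn f g (Set.Iio N)) :
    mapMatrix R N f = mapMatrix R N g := by
  ext i j
  simp only [mapMatrix, Matrix.of_apply, h i.isLt]

@[simp] lemma mapMatrix_id : mapMatrix R N id = 1 := by
  ext i j
  simp [mapMatrix, Matrix.one_apply, Fin.val_eq_val]

lemma mapMatrix_mul {f g : ℕ → ℕ} (hf : Set.MapsTo f (Set.Iio N) (Set.Iio N)) :
    mapMatrix R N f * mapMatrix R N g = mapMatrix R N (g ∘ f) := by
  ext i j
  simp only [mapMatrix, Matrix.mul_apply, Matrix.of_apply]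
  rw [sum_eq_single ⟨f i, hf i.isLt⟩
    (fun k _ hk => by rw [if_neg fun h => hk (Fin.ext h.symm), zero_mul]) (by simp)]
  simp

lemma mapMatrix_pow {f : ℕ → ℕ} (hf : Set.MapsTo f (Set.Iio N) (Set.Iio N)) (k : ℕ) :
    mapMatrix R N f ^ k = mapMatrix R N f^[k] := by
  induction k with
  | zero => exact mapMatrix_id.symm
  | succ k ih => rw [pow_succ, ih, mapMatrix_mul (hf.iterate k), iterate_succ']

lemma trace_mapMatrix (f : ℕ → ℕ) :
    (mapMatrix R N f).trace = #{x ∈ range N | f x = x} := by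
  rw [card_filter, Nat.cast_sum, ← Fin.sum_univ_eq_sum_range]
  simp [Matrix.trace, mapMatrix]

end MapMatrix

section CompRange

variable {b : ℕ → ℕ → ℕ}

def compRange (b : ℕ → ℕ → ℕ) : ℕ → ℕ → ℕ
  | 0 => id
  | p + 1 => b p ∘ compRange b p

lemma compRange_mapsTo {s : Set ℕ} {p : ℕ} (hb : ∀ q < p, Set.MapsTo (b q) s s) :
    Set.MapsTo (compRange b p) s s := by
  induction p with
  | zero => exact Set.mapsTo_id s
  | succ p ih => exact (hb p p.lt_succ_self).comp (ih fun q hq => hb q (by omega))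

lemma list_prod_mapMatrix {R : Type*} [Semiring R] {N p : ℕ}
    (hb : ∀ q < p, Set.MapsTo (b q) (Set.Iio N) (Set.Iio N)) :
    (List.ofFn fun q : Fin p => mapMatrix R N (b q)).prod = mapMatrix R N (compRange b p) := by
  induction p with
  | zero => simp [compRange]
  | succ p ih =>
    rw [List.ofFn_succ', List.concat_eq_append, List.prod_append, List.prod_singleton]
    simp only [Fin.val_castSucc, Fin.val_last]
    rw [ih fun q hq => hb q (by omega),
      mapMatrix_mul (compRange_mapsTo fun q hq => hb q (by omega))]
    rfl

variable {S : ℕ → Set ℕ} (hdisj : Pairwise (Disjoint on S)) (hfix : ∀ q x, x ∉ S q → b q x = x)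

include hfix in
lemma compRange_apply_of_forall_notMem {p x : ℕ} (hx : ∀ q < p, x ∉ S q) :
    compRange b p x = x := by
  induction p with
  | zero => rfl
  | succ p ih =>
    simp only [compRange, Function.comp_apply]
    rw [ih fun q hq => hx q (by omega), hfix p x (hx p p.lt_succ_self)]

include hdisj hfix in
lemma compRange_eqOn {ν p : ℕ} (hmaps : Set.MapsTo (b ν) (S ν) (S ν)) (hν : ν < p) :
    Set.EqOn (compRange b p) (b ν) (S ν) := by
  intro x hx
  induction p with
  | zero => omega
  | succ p ih =>
    simp only [compRange, Function.comp_apply]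
    rcases Nat.lt_succ_iff_lt_or_eq.1 hν with hlt | rfl
    · rw [ih hlt]
      exact hfix p _ (Set.disjoint_left.1 (hdisj hlt.ne) (hmaps hx))
    · rw [compRange_apply_of_forall_notMem hfix fun q hq =>
        Set.disjoint_left.1 (hdisj hq.ne') hx]

end CompRange

section Blocks

variable {ℓ : ℕ}

/-- `s ℓ k` and `t ℓ k` act on `0`-based indices by `sMap ℓ k` and `tMap ℓ k`. -/
def sMap (ℓ k : ℕ) (x : ℕ) : ℕ :=
  if x + 1 = k then x + 1
  else if x + 1 = k + 1 then x - 1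
  else if x + 1 = 2*ℓ - k then x + 1
  else if x + 1 = 2*ℓ - k + 1 then x - 1
  else x

def tMap (ℓ k : ℕ) (x : ℕ) : ℕ :=
  if x + 1 = k then 2*ℓ - k
  else if x + 1 = 2*ℓ - k + 1 then k - 1
  else x

lemma s_eq_mapMatrix {k : ℕ} (h1 : 1 ≤ k) (h2 : k < ℓ) : s ℓ k = mapMatrix ℂ (2*ℓ) (sMap ℓ k) := by
  ext i j
  have := i.isLt
  have := j.isLt
  simp only [s, mapMatrix, sMap, Matrix.of_apply, Fin.ext_iff, ne_eq]
  split_ifs <;> first | rfl | omega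

lemma t_eq_mapMatrix {k : ℕ} (h1 : 1 ≤ k) (h2 : k ≤ ℓ) : t ℓ k = mapMatrix ℂ (2*ℓ) (tMap ℓ k) := by
  ext i j
  have := i.isLt
  have := j.isLt
  simp only [t, mapMatrix, tMap, Matrix.of_apply, Fin.ext_iff, ne_eq]
  split_ifs <;> first | rfl | omega

def shiftMap (ℓ a j : ℕ) (x : ℕ) : ℕ :=
  if a ≤ x ∧ x ≤ a + j then (if x = a then a + j else x - 1)
  else if 2*ℓ - a - 1 - j ≤ x ∧ x ≤ 2*ℓ - a - 1 then
    (if x = 2*ℓ - a - 1 then 2*ℓ - a - 1 - j else x + 1)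
  else x

lemma compRange_sMap {a j : ℕ} (h : a + j < ℓ) :
    Set.EqOn (compRange (fun i => sMap ℓ (a + i + 1)) j) (shiftMap ℓ a j) (Set.Iio (2*ℓ)) := by
  intro x (hx : x < 2*ℓ)
  induction j with
  | zero => simp only [compRange, shiftMap, id]; split_ifs <;> omega
  | succ j ih =>
    simp only [compRange, Function.comp_apply, ih (by omega), sMap, shiftMap]
    split_ifs <;> omega

lemma list_prod_s {a j : ℕ} (h : a + j < ℓ) :
    (List.ofFn fun i : Fin j => s ℓ (a + i + 1)).prod = mapMatrix ℂ (2*ℓ) (shiftMap ℓ a j) := by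
  have hs : ∀ i : Fin j, s ℓ (a + i + 1) = mapMatrix ℂ (2*ℓ) (sMap ℓ (a + i + 1)) :=
    fun i => s_eq_mapMatrix (by omega) (by omega)
  simp only [hs]
  rw [list_prod_mapMatrix (b := fun i => sMap ℓ (a + i + 1)) fun i hi x (hx : x < 2*ℓ) => by
    simp only [sMap, Set.mem_Iio]; split_ifs <;> omega]
  exact mapMatrix_congr (compRange_sMap h)

/-- The `2m`-cycle `a+m-1 ↦ ⋯ ↦ a ↦ 2ℓ-a-m ↦ ⋯ ↦ 2ℓ-a-1 ↦ a+m-1`; `blockPoint` enumerates it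
in this order. -/
def blockMap (ℓ a m : ℕ) (x : ℕ) : ℕ :=
  if a ≤ x ∧ x < a + m then (if x = a then 2*ℓ - a - m else x - 1)
  else if 2*ℓ - a - m ≤ x ∧ x < 2*ℓ - a then (if x = 2*ℓ - a - 1 then a + m - 1 else x + 1)
  else x

lemma block_eq_mapMatrix {a m : ℕ} (hm : 1 ≤ m) (h : a + m ≤ ℓ) :
    (List.ofFn fun i : Fin (m - 1) => s ℓ (a + i + 1)).prod * t ℓ (a + m)
      = mapMatrix ℂ (2*ℓ) (blockMap ℓ a m) := by
  rw [list_prod_s (by omega), t_eq_mapMatrix (by omega) h,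
    mapMatrix_mul fun x (hx : x < 2*ℓ) => by simp only [shiftMap, Set.mem_Iio]; split_ifs <;> omega]
  exact mapMatrix_congr fun x (hx : x < 2*ℓ) => by
    simp only [Function.comp_apply, shiftMap, tMap, blockMap]; split_ifs <;> omega

def blockSupport (ℓ a m : ℕ) : Finset ℕ := Ico a (a + m) ∪ Ico (2*ℓ - a - m) (2*ℓ - a)

def blockPoint (ℓ a m r : ℕ) : ℕ := if r < m then a + m - 1 - r else 2*ℓ - a - m + (r - m)

def blockCoord (ℓ a m x : ℕ) : ℕ := if x < ℓ then a + m - 1 - x else x - (2*ℓ - a - m) + m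

variable {a m : ℕ} (h : a + m ≤ ℓ)
include h

lemma card_blockSupport : #(blockSupport ℓ a m) = 2 * m := by
  rw [blockSupport, card_union_of_disjoint (disjoint_left.2 fun x hx hx' => by
    simp only [mem_Ico] at hx hx'; omega)]
  simp only [Nat.card_Ico]
  omega

lemma blockSupport_subset_range : blockSupport ℓ a m ⊆ range (2*ℓ) := by
  intro x hx
  simp only [blockSupport, mem_union, mem_Ico, mem_range] at hx ⊢
  omega

lemma blockMap_mapsTo : Set.MapsTo (blockMap ℓ a m) (blockSupport ℓ a m) (blockSupport ℓ a m) := by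
  intro x hx
  simp only [blockSupport, coe_union, coe_Ico, Set.mem_union, Set.mem_Ico, blockMap] at hx ⊢
  split_ifs <;> omega

lemma blockMap_mapsTo_Iio : Set.MapsTo (blockMap ℓ a m) (Set.Iio (2*ℓ)) (Set.Iio (2*ℓ)) := by
  intro x (hx : x < 2*ℓ)
  simp only [Set.mem_Iio, blockMap]
  split_ifs <;> omega

omit h in
lemma blockMap_of_notMem {x : ℕ} (hx : x ∉ blockSupport ℓ a m) : blockMap ℓ a m x = x := by
  simp only [blockSupport, mem_union, mem_Ico] at hx
  simp only [blockMap]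
  split_ifs <;> omega

lemma blockCoord_lt {x : ℕ} (hx : x ∈ blockSupport ℓ a m) : blockCoord ℓ a m x < 2 * m := by
  simp only [blockSupport, mem_union, mem_Ico, blockCoord] at hx ⊢
  split_ifs <;> omega

lemma blockPoint_blockCoord {x : ℕ} (hx : x ∈ blockSupport ℓ a m) :
    blockPoint ℓ a m (blockCoord ℓ a m x) = x := by
  simp only [blockSupport, mem_union, mem_Ico, blockCoord, blockPoint] at hx ⊢
  split_ifs <;> omega

lemma blockCoord_blockPoint {r : ℕ} (hr : r < 2 * m) :
    blockCoord ℓ a m (blockPoint ℓ a m r) = r := by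
  simp only [blockCoord, blockPoint]
  split_ifs <;> omega

lemma blockMap_blockPoint {r : ℕ} (hr : r < 2 * m) :
    blockMap ℓ a m (blockPoint ℓ a m r) = blockPoint ℓ a m ((r + 1) % (2 * m)) := by
  rcases Nat.lt_or_ge (r + 1) (2 * m) with hlt | hge
  · rw [Nat.mod_eq_of_lt hlt]
    simp only [blockMap, blockPoint]
    split_ifs <;> omega
  · rw [show r + 1 = 2 * m by omega, Nat.mod_self]
    simp only [blockMap, blockPoint]
    split_ifs <;> omega

lemma blockMap_iterate {x : ℕ} (hx : x ∈ blockSupport ℓ a m) (k : ℕ) :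
    (blockMap ℓ a m)^[k] x = blockPoint ℓ a m ((blockCoord ℓ a m x + k) % (2 * m)) := by
  have hm : 0 < 2 * m := (Nat.zero_le _).trans_lt (blockCoord_lt h hx)
  induction k with
  | zero => rw [iterate_zero_apply, add_zero, Nat.mod_eq_of_lt (blockCoord_lt h hx),
      blockPoint_blockCoord h hx]
  | succ k ih =>
    rw [iterate_succ_apply', ih, blockMap_blockPoint h (Nat.mod_lt _ hm), ← add_assoc,
      Nat.add_mod _ 1, Nat.mod_mod, ← Nat.add_mod]

lemma blockMap_iterate_eq_self_iff {x : ℕ} (hx : x ∈ blockSupport ℓ a m) (k : ℕ) :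
    (blockMap ℓ a m)^[k] x = x ↔ 2 * m ∣ k := by
  have hc := blockCoord_lt h hx
  have hm : 0 < 2 * m := (Nat.zero_le _).trans_lt hc
  have hpoint : ∀ r < 2 * m, blockPoint ℓ a m r = x ↔ r = blockCoord ℓ a m x := fun r hr =>
    ⟨fun he => he ▸ (blockCoord_blockPoint h hr).symm, fun he => he ▸ blockPoint_blockCoord h hx⟩
  rw [blockMap_iterate h hx, hpoint _ (Nat.mod_lt _ hm), ← Nat.add_modEq_left_iff, Nat.ModEq,
    Nat.mod_eq_of_lt hc]

end Blocks

section Partition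

variable {ℓ μ : ℕ} {L : Fin μ → ℕ}

/-- `L` extended by `0`, so that blocks can be indexed by `ℕ`. -/
def part (L : Fin μ → ℕ) (q : ℕ) : ℕ := if h : q < μ then L ⟨q, h⟩ else 0

def partOffset (L : Fin μ → ℕ) (p : ℕ) : ℕ := ∑ q ∈ range p, part L q

abbrev partSupport (ℓ : ℕ) (L : Fin μ → ℕ) (q : ℕ) : Finset ℕ :=
  blockSupport ℓ (partOffset L q) (part L q)

def nMap (ℓ : ℕ) (L : Fin μ → ℕ) : ℕ → ℕ :=
  compRange (fun q => blockMap ℓ (partOffset L q) (part L q)) μ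

@[simp] lemma part_val (ν : Fin μ) : part L ν = L ν := by simp [part]

lemma part_of_le {q : ℕ} (hq : μ ≤ q) : part L q = 0 := dif_neg (by omega)

lemma sum_Iio_eq_partOffset (ν : Fin μ) : ∑ j ∈ Iio ν, L j = partOffset L ν := by
  rw [partOffset, ← Nat.Iio_eq_range, ← Fin.map_valEmbedding_Iio, sum_map]
  simp

lemma partOffset_succ (p : ℕ) : partOffset L (p + 1) = partOffset L p + part L p :=
  sum_range_succ _ _

lemma partOffset_mono : Monotone (partOffset L) :=
  fun _ _ h => sum_le_sum_of_subset (range_subset_range.2 h)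

variable (hsum : ∑ ν, L ν = ℓ)
include hsum

lemma partOffset_self : partOffset L μ = ℓ := by
  simp [← hsum, partOffset, ← Fin.sum_univ_eq_sum_range]

lemma partOffset_add_part_le {q : ℕ} (hq : q < μ) : partOffset L q + part L q ≤ ℓ := by
  rw [← partOffset_succ, ← partOffset_self hsum]
  exact partOffset_mono hq

lemma disjoint_partSupport_of_lt {q q' : ℕ} (hlt : q < q') :
    Disjoint (partSupport ℓ L q) (partSupport ℓ L q') := by
  rcases Nat.lt_or_ge q' μ with hq' | hq'
  · have h1 : partOffset L q + part L q ≤ partOffset L q' := partOffset_succ q ▸ partOffset_mono hlt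
    have h2 := partOffset_add_part_le hsum hq'
    refine disjoint_left.2 fun x hx hx' => ?_
    simp only [blockSupport, mem_union, mem_Ico] at hx hx'
    omega
  · simp [blockSupport, part_of_le hq']

lemma pairwise_disjoint_partSupport : Pairwise (Disjoint on partSupport ℓ L) := by
  intro q q' hne
  rcases Nat.lt_or_gt_of_ne hne with hlt | hgt
  · exact disjoint_partSupport_of_lt hsum hlt
  · exact (disjoint_partSupport_of_lt hsum hgt).symm

lemma range_eq_biUnion_partSupport : range (2*ℓ) = (range μ).biUnion (partSupport ℓ L) := by
  refine (eq_of_subset_of_card_le (biUnion_subset.2 fun q hq =>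
    blockSupport_subset_range (partOffset_add_part_le hsum (mem_range.1 hq))) ?_).symm
  rw [card_biUnion ((pairwise_disjoint_partSupport hsum).set_pairwise _), card_range]
  rw [sum_congr rfl fun q hq => card_blockSupport (partOffset_add_part_le hsum (mem_range.1 hq)),
    ← mul_sum, ← partOffset, partOffset_self hsum]

lemma nMap_mapsTo_Iio : Set.MapsTo (nMap ℓ L) (Set.Iio (2*ℓ)) (Set.Iio (2*ℓ)) :=
  compRange_mapsTo fun _ hq => blockMap_mapsTo_Iio (partOffset_add_part_le hsum hq)

lemma nMap_iterate_eq_self_iff {q x : ℕ} (hq : q < μ) (hx : x ∈ partSupport ℓ L q) (k : ℕ) :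
    (nMap ℓ L)^[k] x = x ↔ 2 * part L q ∣ k := by
  have hle := partOffset_add_part_le hsum hq
  have hmaps := blockMap_mapsTo hle
  rw [nMap, eqOn_iterate (compRange_eqOn (S := fun q => partSupport ℓ L q)
      (fun q q' hne => disjoint_coe.2 (pairwise_disjoint_partSupport hsum hne))
      (fun _ _ hx => blockMap_of_notMem hx) hmaps hq) hmaps k hx,
    blockMap_iterate_eq_self_iff hle hx]

lemma card_fixedPoints_nMap_iterate (k : ℕ) :
    #{x ∈ range (2*ℓ) | (nMap ℓ L)^[k] x = x}
      = ∑ q ∈ range μ, if 2 * part L q ∣ k then 2 * part L q else 0 := by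
  rw [range_eq_biUnion_partSupport hsum, filter_biUnion, card_biUnion
    (Set.PairwiseDisjoint.mono ((pairwise_disjoint_partSupport hsum).set_pairwise _)
      fun _ => filter_subset _ _)]
  refine sum_congr rfl fun q hq => ?_
  have hiff := fun x (hx : x ∈ partSupport ℓ L q) =>
    nMap_iterate_eq_self_iff hsum (mem_range.1 hq) hx k
  split_ifs with hk
  · rw [filter_true_of_mem fun x hx => (hiff x hx).2 hk,
      card_blockSupport (partOffset_add_part_le hsum (mem_range.1 hq))]
  · rw [filter_false_of_mem fun x hx => mt (hiff x hx).1 hk, card_empty]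

lemma n_eq_mapMatrix (hpos : ∀ ν, 0 < L ν) : n ℓ μ L = mapMatrix ℂ (2*ℓ) (nMap ℓ L) := by
  have hblock : ∀ ν : Fin μ,
      (List.ofFn fun a : Fin (L ν - 1) => s ℓ ((∑ j ∈ Iio ν, L j) + a.val + 1)).prod *
        t ℓ ((∑ j ∈ Iio ν, L j) + L ν)
      = mapMatrix ℂ (2*ℓ) (blockMap ℓ (partOffset L ν) (part L ν)) := fun ν => by
    have hle := partOffset_add_part_le hsum ν.isLt
    rw [part_val] at hle ⊢
    rw [sum_Iio_eq_partOffset]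
    exact block_eq_mapMatrix (hpos ν) hle
  rw [n]
  simp only [hblock]
  exact list_prod_mapMatrix fun _ hq => blockMap_mapsTo_Iio (partOffset_add_part_le hsum hq)

lemma trace_n_pow (hpos : ∀ ν, 0 < L ν) (k : ℕ) :
    (n ℓ μ L ^ k).trace = (((univ.val.map fun ν => 2 * L ν).filter (· ∣ k)).sum : ℕ) := by
  rw [n_eq_mapMatrix hsum hpos, mapMatrix_pow (nMap_mapsTo_Iio hsum), trace_mapMatrix,
    card_fixedPoints_nMap_iterate hsum,
    ← Fin.sum_univ_eq_sum_range fun q => if 2 * part L q ∣ k then 2 * part L q else 0]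
  congr 1
  simp only [part_val]
  rw [← sum_filter, Multiset.filter_map]
  rfl

end Partition

theorem stmt11_general (ℓ : ℕ) (μ μ' : ℕ)
    (L : Fin μ → ℕ) (L' : Fin μ' → ℕ)
    (hpos : ∀ ν, 0 < L ν) (hmono : Monotone L) (hsum : ∑ ν, L ν = ℓ)
    (hpos' : ∀ ν, 0 < L' ν) (hmono' : Monotone L') (hsum' : ∑ ν, L' ν = ℓ)
    (g : Matrix (Fin (2*ℓ)) (Fin (2*ℓ)) ℂ)
    (hgdet : g.det = 1)
    (hconj : g * n ℓ μ L * g⁻¹ = n ℓ μ' L') :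
    μ = μ' ∧ ∀ (ν : ℕ) (h1 : ν < μ) (h2 : ν < μ'), L ⟨ν, h1⟩ = L' ⟨ν, h2⟩ := by
  have hcycles : univ.val.map (fun ν => 2 * L ν) = univ.val.map (fun ν => 2 * L' ν) := by
    refine Multiset.eq_of_sum_filter_dvd_eq (by simpa using fun ν => (hpos ν).ne')
      (by simpa using fun ν => (hpos' ν).ne') fun k _ => ?_
    have htrace := trace_conj_pow (hgdet ▸ isUnit_one) (n ℓ μ L) k
    rw [hconj, trace_n_pow hsum' hpos', trace_n_pow hsum hpos] at htrace
    exact_mod_cast htrace.symm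
  refine eq_of_map_univ_eq hmono hmono'
    (Multiset.map_injective (mul_right_injective₀ two_ne_zero) ?_)
  rwa [Multiset.map_map, Multiset.map_map]

/-- Let `ℓ ≥ 3` and let `ℓ⃗`, `ℓ⃗'` be partitions of `ℓ`, each into an even
number of positive parts, with associated elements `n_{ℓ⃗}`, `n_{ℓ⃗'}` of `SO_{2ℓ}(ℂ)` (the
`g ∈ GL_{2ℓ}(ℂ)` with `g = (K g⁻¹ K)ᵀ` and `det g = 1`).  If some `g ∈ SO_{2ℓ}(ℂ)` satisfies
`g n_{ℓ⃗} g⁻¹ = n_{ℓ⃗'}`, then `ℓ⃗ = ℓ⃗'`. -/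
theorem stmt11 (ℓ : ℕ) (hℓ : 3 ≤ ℓ) (μ μ' : ℕ) (hμ : Even μ) (hμ' : Even μ')
    (L : Fin μ → ℕ) (L' : Fin μ' → ℕ)
    (hpos : ∀ ν, 0 < L ν) (hmono : Monotone L) (hsum : ∑ ν, L ν = ℓ)
    (hpos' : ∀ ν, 0 < L' ν) (hmono' : Monotone L') (hsum' : ∑ ν, L' ν = ℓ)
    (g : Matrix (Fin (2*ℓ)) (Fin (2*ℓ)) ℂ)
    (hgdet : g.det = 1) (hgSO : g = (K ℓ * g⁻¹ * K ℓ)ᵀ)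
    (hconj : g * n ℓ μ L * g⁻¹ = n ℓ μ' L') :
    μ = μ' ∧ ∀ (ν : ℕ) (h1 : ν < μ) (h2 : ν < μ'), L ⟨ν, h1⟩ = L' ⟨ν, h2⟩ :=
  stmt11_general ℓ μ μ' L L' hpos hmono hsum hpos' hmono' hsum' g hgdet hconj

end Stmt11
end

section
/- Let ℓ⃗ = (ℓ_μ ≥ ⋯ ≥ ℓ_1) and ℓ⃗' = (ℓ'_{μ'} ≥ ⋯ ≥ ℓ'_1) be partitions of the same integer ℓ ≥ 1 into odd positive parts. Define q_{ℓ⃗}(t) ∈ ℂ[t] by (t+1) · q_{ℓ⃗}(t) = ( ∏_{ν=1}^{μ} (t^{ℓ_ν} + 1) ) · ( ∏_{τ=1}^{μ} (t^{2ℓ_τ} - 1)^{(ℓ_τ-1)/2} ) · ( ∏_{1 ≤ ρ < σ ≤ μ} (t^{2·lcm(ℓ_ρ,ℓ_σ)} - 1)^{gcd(ℓ_ρ,ℓ_σ)} ), and similarly q_{ℓ⃗'} from ℓ⃗'. If q_{ℓ⃗} = q_{ℓ⃗'}, then μ = μ' and ℓ_ν = ℓ'_ν for all ν. -/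
/-!
Both sides are read through root multiplicities. If `ζ` is a primitive `2d`-th root of unity
with `d` odd, then `ζ` and `ζ²` are annihilated by exactly the same factors `t^{2a} - 1`, while
`ζ` is a root of `t^{ℓ_ν} + 1` exactly when `d ∣ ℓ_ν` and `ζ²` is a root of none of them.
Hence the difference of the multiplicities of `ζ` and `ζ²` in `(t+1) q_ℓ⃗` is the number of parts
divisible by `d` (for `d = 1`, with `ζ = -1`, it is `μ`). These numbers, known for every `d`,
determine the multiset of parts: at the largest value whose multiplicities in the two multisets
differ, the other multiples of that value are larger and so agree. A sorted sequence is
determined by its multiset.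
-/

open Polynomial Finset

section RootMultiplicity
variable {R : Type*} [CommRing R] [IsDomain R]

theorem Polynomial.rootMultiplicity_prod {ι : Type*} (s : Finset ι) (f : ι → R[X])
    (h : ∏ i ∈ s, f i ≠ 0) (z : R) :
    rootMultiplicity z (∏ i ∈ s, f i) = ∑ i ∈ s, rootMultiplicity z (f i) := by
  classical
  simp only [← count_roots, roots_prod f s h, Multiset.count_bind]
  rfl

theorem Polynomial.rootMultiplicity_pow (p : R[X]) (n : ℕ) (z : R) :
    rootMultiplicity z (p ^ n) = n * rootMultiplicity z p := by
  classical
  rcases eq_or_ne p 0 with rfl | hp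
  · rcases n with _ | n <;> simp
  simp only [← count_roots, roots_pow, Multiset.count_nsmul]

end RootMultiplicity

theorem Polynomial.rootMultiplicity_X_pow_sub_C_of_ne_zero {K : Type*} [Field K] [CharZero K]
    [DecidableEq K] {n : ℕ} (hn : n ≠ 0) {a : K} (ha : a ≠ 0) (z : K) :
    rootMultiplicity z (X ^ n - C a) = if z ^ n = a then 1 else 0 := by
  rw [← count_roots, Multiset.count_eq_of_nodup
    (nodup_roots (separable_X_pow_sub_C a (Nat.cast_ne_zero.2 hn) ha))]
  exact if_congr (mem_nthRoots (Nat.pos_of_ne_zero hn)) rfl rfl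

namespace IsPrimitiveRoot

theorem pow_two_mul_eq_one_iff_sq {M : Type*} [CommMonoid M] {ζ : M} {d : ℕ}
    (hζ : IsPrimitiveRoot ζ (2 * d)) (hd : Odd d) (n : ℕ) :
    ζ ^ (2 * n) = 1 ↔ (ζ ^ 2) ^ (2 * n) = 1 := by
  rw [← pow_mul, hζ.pow_eq_one_iff_dvd, hζ.pow_eq_one_iff_dvd, Nat.mul_dvd_mul_iff_left two_pos,
    Nat.mul_dvd_mul_iff_left two_pos, hd.coprime_two_right.dvd_mul_left]

variable {R : Type*} [CommRing R] [IsDomain R] {ζ : R} {d : ℕ}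

theorem pow_eq_neg_one (hζ : IsPrimitiveRoot ζ (2 * d)) (hd : d ≠ 0) : ζ ^ d = -1 :=
  (by simpa [hd] using hζ.pow_of_dvd hd (dvd_mul_left d 2) :
    IsPrimitiveRoot (ζ ^ d) 2).eq_neg_one_of_two_right

theorem pow_odd_eq_neg_one_iff (hζ : IsPrimitiveRoot ζ (2 * d)) {m : ℕ} (hm : Odd m) :
    ζ ^ m = -1 ↔ d ∣ m := by
  constructor
  · intro h
    rw [← Nat.mul_dvd_mul_iff_left two_pos, ← hζ.pow_eq_one_iff_dvd, pow_mul', h, neg_one_sq]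
  · rintro ⟨k, rfl⟩
    rw [pow_mul, hζ.pow_eq_neg_one (by rintro rfl; simp at hm),
      (Nat.Odd.of_mul_right hm).neg_one_pow]

theorem sq_pow_ne_neg_one (hζ : IsPrimitiveRoot ζ (2 * d)) (hd : Odd d) (m : ℕ) :
    (ζ ^ 2) ^ m ≠ -1 := by
  intro h
  have hd0 : d ≠ 0 := by rintro rfl; simp at hd
  have h1 : ((ζ ^ 2) ^ m) ^ d = 1 := by
    rw [← pow_mul, ← pow_mul, mul_left_comm, pow_mul', hζ.pow_eq_one, one_pow]
  rw [h, hd.neg_one_pow, ← hζ.pow_eq_neg_one hd0] at h1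
  exact hζ.pow_ne_one_of_pos_of_lt hd0 (by omega) h1

end IsPrimitiveRoot

theorem Multiset.card_filter_eq_count_add {α : Type*} [DecidableEq α] (p : α → Prop)
    [DecidablePred p] (s : Multiset α) {a : α} (ha : p a) :
    card (s.filter p) = count a s + card (s.filter fun x => ¬x = a ∧ p x) := by
  rw [← filter_add_not (· = a) (s.filter p), card_add, filter_filter, filter_filter,
    filter_congr (p := fun x => x = a ∧ p x) (q := (· = a)) fun x _ => and_iff_left_of_imp (· ▸ ha),
    filter_eq', card_replicate]

theorem Multiset.eq_of_card_filter_dvd_eq {s t : Multiset ℕ} (hs : 0 ∉ s) (ht : 0 ∉ t)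
    (h : ∀ d, 0 < d → card (s.filter (d ∣ ·)) = card (t.filter (d ∣ ·))) : s = t := by
  by_contra hne
  set S := {e | count e s ≠ count e t}
  have hfin : S.Finite := (s + t).toFinset.finite_toSet.subset fun e he => by
    by_contra h'
    simp_all [S]
  have hnon : S.Nonempty := by
    by_contra h'
    exact hne (ext.2 fun e => by_contra fun he => h' ⟨e, he⟩)
  obtain ⟨e, he, hmax⟩ := Set.exists_max_image S id hfin hnon
  have he0 : 0 < e := Nat.pos_of_ne_zero <| by
    rintro rfl
    exact he (by rw [count_eq_zero.2 hs, count_eq_zero.2 ht])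
  have hmul : s.filter (fun x => ¬x = e ∧ e ∣ x) = t.filter (fun x => ¬x = e ∧ e ∣ x) := by
    ext x
    rw [count_filter, count_filter]
    split_ifs with hx
    · rcases Nat.eq_zero_or_pos x with rfl | hx0
      · rw [count_eq_zero.2 hs, count_eq_zero.2 ht]
      · by_contra hx'
        exact hx.1 (le_antisymm (hmax x hx') (Nat.le_of_dvd hx0 hx.2))
    · rfl
  have := h e he0
  rw [card_filter_eq_count_add _ s (dvd_refl e), card_filter_eq_count_add _ t (dvd_refl e),
    hmul] at this
  exact he (by simpa using this)

/-- The right-hand side `(t + 1) q_ℓ⃗(t)` of the identity defining `q_ℓ⃗`. -/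
noncomputable def qNumerator (K : Type*) [CommRing K] {μ : ℕ} (L : Fin μ → ℕ) : K[X] :=
  (∏ ν : Fin μ, ((X : K[X]) ^ (L ν) + 1)) *
    (∏ τ : Fin μ, ((X : K[X]) ^ (2 * L τ) - 1) ^ ((L τ - 1) / 2)) *
    ∏ p ∈ Finset.univ.filter (fun p : Fin μ × Fin μ => p.1 < p.2),
      ((X : K[X]) ^ (2 * Nat.lcm (L p.1) (L p.2)) - 1) ^ Nat.gcd (L p.1) (L p.2)

section qNumerator
variable {K : Type*} [Field K] {μ : ℕ} {L : Fin μ → ℕ}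

theorem qNumerator_monic (hL : ∀ ν, L ν ≠ 0) : (qNumerator K L).Monic := by
  refine ((monic_prod_of_monic _ _ fun ν _ => ?_).mul
    (monic_prod_of_monic _ _ fun τ _ => ?_)).mul (monic_prod_of_monic _ _ fun p _ => ?_)
  · simpa using monic_X_pow_add_C (1 : K) (hL ν)
  · exact (monic_X_pow_sub_C 1 (mul_ne_zero two_ne_zero (hL τ))).pow _
  · exact (monic_X_pow_sub_C 1
      (mul_ne_zero two_ne_zero (Nat.lcm_ne_zero (hL p.1) (hL p.2)))).pow _

variable [CharZero K] [DecidableEq K]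

theorem rootMultiplicity_qNumerator (hL : ∀ ν, L ν ≠ 0) (z : K) :
    rootMultiplicity z (qNumerator K L) =
      #{ν | z ^ L ν = -1} + ((∑ τ, if z ^ (2 * L τ) = 1 then (L τ - 1) / 2 else 0) +
        ∑ p ∈ univ.filter (fun p : Fin μ × Fin μ => p.1 < p.2),
          if z ^ (2 * (L p.1).lcm (L p.2)) = 1 then (L p.1).gcd (L p.2) else 0) := by
  have hplus {n : ℕ} (hn : n ≠ 0) :
      rootMultiplicity z (X ^ n + 1) = if z ^ n = -1 then 1 else 0 := by
    simpa [sub_eq_add_neg] using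
      rootMultiplicity_X_pow_sub_C_of_ne_zero hn (neg_ne_zero.2 one_ne_zero) z
  have hminus {n : ℕ} (hn : n ≠ 0) :
      rootMultiplicity z (X ^ n - 1) = if z ^ n = 1 then 1 else 0 := by
    simpa using rootMultiplicity_X_pow_sub_C_of_ne_zero hn one_ne_zero z
  have h := (qNumerator_monic (K := K) hL).ne_zero
  rw [qNumerator] at h ⊢
  rw [rootMultiplicity_mul h, rootMultiplicity_mul (left_ne_zero_of_mul h),
    rootMultiplicity_prod _ _ (left_ne_zero_of_mul (left_ne_zero_of_mul h)),
    rootMultiplicity_prod _ _ (right_ne_zero_of_mul (left_ne_zero_of_mul h)),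
    rootMultiplicity_prod _ _ (right_ne_zero_of_mul h), card_filter, add_assoc]
  simp only [rootMultiplicity_pow, hplus (hL _), hminus (mul_ne_zero two_ne_zero (hL _)),
    hminus (mul_ne_zero two_ne_zero (Nat.lcm_ne_zero (hL _) (hL _))), mul_ite, mul_one, mul_zero]

theorem rootMultiplicity_qNumerator_add_card (hL : ∀ ν, L ν ≠ 0) {z w : K}
    (hzw : ∀ n, z ^ (2 * n) = 1 ↔ w ^ (2 * n) = 1) :
    rootMultiplicity z (qNumerator K L) + #{ν | w ^ L ν = -1} =
      rootMultiplicity w (qNumerator K L) + #{ν | z ^ L ν = -1} := by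
  rw [rootMultiplicity_qNumerator hL, rootMultiplicity_qNumerator hL]
  simp only [hzw]
  ring

theorem rootMultiplicity_qNumerator_eq_add_card_dvd (hL : ∀ ν, Odd (L ν)) {ζ : K} {d : ℕ}
    (hζ : IsPrimitiveRoot ζ (2 * d)) (hd : Odd d) :
    rootMultiplicity ζ (qNumerator K L) =
      rootMultiplicity (ζ ^ 2) (qNumerator K L) + #{ν | d ∣ L ν} := by
  have h := rootMultiplicity_qNumerator_add_card (fun ν => (hL ν).pos.ne')
    (hζ.pow_two_mul_eq_one_iff_sq hd)
  rwa [filter_false_of_mem fun ν _ => hζ.sq_pow_ne_neg_one hd (L ν), card_empty, add_zero,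
    filter_congr fun ν _ => hζ.pow_odd_eq_neg_one_iff (hL ν)] at h

end qNumerator

theorem card_filter_dvd_eq_of_qNumerator_eq {μ μ' : ℕ} {L : Fin μ → ℕ} {L' : Fin μ' → ℕ}
    (hL : ∀ ν, Odd (L ν)) (hL' : ∀ ν, Odd (L' ν)) (h : qNumerator ℂ L = qNumerator ℂ L')
    (d : ℕ) : #{ν | d ∣ L ν} = #{ν | d ∣ L' ν} := by
  rcases Nat.even_or_odd d with hd | hd
  · have hnot {n : ℕ} (hn : Odd n) : ¬d ∣ n := fun hdn =>
      Nat.not_even_iff_odd.2 hn (even_iff_two_dvd.2 (hd.two_dvd.trans hdn))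
    rw [filter_false_of_mem fun ν _ => hnot (hL ν), filter_false_of_mem fun ν _ => hnot (hL' ν),
      card_empty, card_empty]
  · have hζ := Complex.isPrimitiveRoot_exp (2 * d) (by simp [hd.pos.ne'])
    have h₁ := rootMultiplicity_qNumerator_eq_add_card_dvd hL hζ hd
    have h₂ := rootMultiplicity_qNumerator_eq_add_card_dvd hL' hζ hd
    rw [h] at h₁
    omega

theorem ofFn_eq_of_qNumerator_eq {μ μ' : ℕ} {L : Fin μ → ℕ} {L' : Fin μ' → ℕ}
    (hL : ∀ ν, Odd (L ν)) (hmono : Monotone L) (hL' : ∀ ν, Odd (L' ν)) (hmono' : Monotone L')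
    (h : qNumerator ℂ L = qNumerator ℂ L') : List.ofFn L = List.ofFn L' := by
  have hzero {n : ℕ} {f : Fin n → ℕ} (hf : ∀ ν, Odd (f ν)) : 0 ∉ Multiset.map f univ.val := by
    simpa [eq_comm] using fun ν => (hf ν).pos.ne'
  have hmultiset : Multiset.map L univ.val = Multiset.map L' univ.val :=
    Multiset.eq_of_card_filter_dvd_eq (hzero hL) (hzero hL') fun d _ => by
      rw [Multiset.filter_map, Multiset.filter_map, Multiset.card_map, Multiset.card_map]
      exact card_filter_dvd_eq_of_qNumerator_eq hL hL' h d
  rw [Fin.univ_val_map, Fin.univ_val_map, Multiset.coe_eq_coe] at hmultiset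
  exact hmultiset.eq_of_sortedLE hmono.sortedLE_ofFn hmono'.sortedLE_ofFn

theorem stmt13_general (μ μ' : ℕ) (L : Fin μ → ℕ) (L' : Fin μ' → ℕ)
    (hodd : ∀ ν, Odd (L ν)) (hmono : Monotone L)
    (hodd' : ∀ ν, Odd (L' ν)) (hmono' : Monotone L')
    (q q' : ℂ[X])
    (hq : (X + 1) * q =
      (∏ ν : Fin μ, ((X : ℂ[X]) ^ (L ν) + 1)) *
      (∏ τ : Fin μ, ((X : ℂ[X]) ^ (2 * L τ) - 1) ^ ((L τ - 1) / 2)) *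
      ∏ p ∈ Finset.univ.filter (fun p : Fin μ × Fin μ => p.1 < p.2),
        ((X : ℂ[X]) ^ (2 * Nat.lcm (L p.1) (L p.2)) - 1) ^ Nat.gcd (L p.1) (L p.2))
    (hq' : (X + 1) * q' =
      (∏ ν : Fin μ', ((X : ℂ[X]) ^ (L' ν) + 1)) *
      (∏ τ : Fin μ', ((X : ℂ[X]) ^ (2 * L' τ) - 1) ^ ((L' τ - 1) / 2)) *
      ∏ p ∈ Finset.univ.filter (fun p : Fin μ' × Fin μ' => p.1 < p.2),
        ((X : ℂ[X]) ^ (2 * Nat.lcm (L' p.1) (L' p.2)) - 1) ^ Nat.gcd (L' p.1) (L' p.2))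
    (heq : q = q') :
    μ = μ' ∧ ∀ (ν : ℕ) (h1 : ν < μ) (h2 : ν < μ'), L ⟨ν, h1⟩ = L' ⟨ν, h2⟩ := by
  have hP : qNumerator ℂ L = qNumerator ℂ L' := by
    rw [qNumerator, qNumerator, ← hq, ← hq', heq]
  have hlist := ofFn_eq_of_qNumerator_eq hodd hmono hodd' hmono' hP
  obtain rfl : μ = μ' := by simpa using congrArg List.length hlist
  obtain rfl : L = L' := List.ofFn_injective hlist
  exact ⟨rfl, fun _ _ _ => rfl⟩

/-- Let `ℓ⃗ = (ℓ_μ ≥ ⋯ ≥ ℓ_1)` and `ℓ⃗' = (ℓ'_{μ'} ≥ ⋯ ≥ ℓ'_1)` be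
partitions of the same integer `ℓ ≥ 1` into odd positive parts, and define `q_{ℓ⃗}` by
`(t+1)·q_{ℓ⃗}(t) = (∏_ν (t^{ℓ_ν}+1)) · (∏_τ (t^{2ℓ_τ}-1)^{(ℓ_τ-1)/2}) ·
(∏_{ρ<σ} (t^{2·lcm(ℓ_ρ,ℓ_σ)}-1)^{gcd(ℓ_ρ,ℓ_σ)})`, similarly `q_{ℓ⃗'}`.
If `q_{ℓ⃗} = q_{ℓ⃗'}` then `μ = μ'` and `ℓ_ν = ℓ'_ν` for all `ν`. -/
theorem stmt13 (ℓ μ μ' : ℕ) (hℓ : 1 ≤ ℓ) (L : Fin μ → ℕ) (L' : Fin μ' → ℕ)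
    (hpos : ∀ ν, 0 < L ν) (hodd : ∀ ν, Odd (L ν)) (hmono : Monotone L)
    (hsum : ∑ ν, L ν = ℓ)
    (hpos' : ∀ ν, 0 < L' ν) (hodd' : ∀ ν, Odd (L' ν)) (hmono' : Monotone L')
    (hsum' : ∑ ν, L' ν = ℓ)
    (q q' : ℂ[X])
    (hq : (X + 1) * q =
      (∏ ν : Fin μ, ((X : ℂ[X]) ^ (L ν) + 1)) *
      (∏ τ : Fin μ, ((X : ℂ[X]) ^ (2 * L τ) - 1) ^ ((L τ - 1) / 2)) *
      ∏ p ∈ Finset.univ.filter (fun p : Fin μ × Fin μ => p.1 < p.2),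
        ((X : ℂ[X]) ^ (2 * Nat.lcm (L p.1) (L p.2)) - 1) ^ Nat.gcd (L p.1) (L p.2))
    (hq' : (X + 1) * q' =
      (∏ ν : Fin μ', ((X : ℂ[X]) ^ (L' ν) + 1)) *
      (∏ τ : Fin μ', ((X : ℂ[X]) ^ (2 * L' τ) - 1) ^ ((L' τ - 1) / 2)) *
      ∏ p ∈ Finset.univ.filter (fun p : Fin μ' × Fin μ' => p.1 < p.2),
        ((X : ℂ[X]) ^ (2 * Nat.lcm (L' p.1) (L' p.2)) - 1) ^ Nat.gcd (L' p.1) (L' p.2))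
    (heq : q = q') :
    μ = μ' ∧ ∀ (ν : ℕ) (h1 : ν < μ) (h2 : ν < μ'), L ⟨ν, h1⟩ = L' ⟨ν, h2⟩ :=
  stmt13_general μ μ' L L' hodd hmono hodd' hmono' q q' hq hq' heq
end

section
/- Let ℓ ≥ 2 and let ℓ⃗ and ℓ⃗' be partitions of ℓ+1, each into an odd number of positive parts, with associated elements n_{ℓ⃗} and n_{ℓ⃗'} of SO_{2ℓ+2}(ℂ). If there exists h ∈ SO_{2ℓ+2}(ℂ) with n_{ℓ⃗'} = h · n_{ℓ⃗} · θ(h)⁻¹, where θ(g) = J g J, then ℓ⃗ = ℓ⃗'. -/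
/-!
Since `J² = 1`, the hypothesis says exactly that `ñ_{ℓ⃗'} = n_{ℓ⃗'} J` is conjugate to
`ñ_{ℓ⃗} = n_{ℓ⃗} J` by `h`. All of `s_k`, `t_k`, `J` are permutation matrices (`t_k` is the
transposition of the mirror positions `k` and `2ℓ+3-k`), and `ñ_{ℓ⃗}` is the permutation matrix of
a permutation with one cycle of length `2ℓ_ν` for each part, supported on the positions
`ℓ'_ν+1, …, ℓ'_ν+ℓ_ν` and their mirror images. Conjugate matrices have equal traces of all powers,
and the trace of the `m`-th power of a permutation matrix counts fixed points, which here is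
`∑_{2ℓ_ν ∣ m} 2ℓ_ν`. These divisor sums determine the multiset of parts (by strong induction
on `m`), and a partition is determined by its multiset of parts once the parts are sorted.
-/

open Matrix

namespace Stmt19

/-- The anti-diagonal matrix `K` with ones on the anti-diagonal. -/
noncomputable def K (ℓ : ℕ) : Matrix (Fin (2*ℓ+2)) (Fin (2*ℓ+2)) ℂ :=
  Matrix.of fun i j => if (i.val + 1) + (j.val + 1) = (2*ℓ+2) + 1 then 1 else 0

/-- The matrix `J ∈ O_{2ℓ+2}(ℂ)` (1-based indices). -/
noncomputable def J (ℓ : ℕ) : Matrix (Fin (2*ℓ+2)) (Fin (2*ℓ+2)) ℂ :=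
  Matrix.of fun i j =>
    if i = j ∧ i.val + 1 ≠ ℓ + 1 ∧ i.val + 1 ≠ ℓ + 2 then 1
    else if (i.val + 1 = ℓ + 1 ∧ j.val + 1 = ℓ + 2) ∨
        (i.val + 1 = ℓ + 2 ∧ j.val + 1 = ℓ + 1) then 1
    else 0

/-- The matrix `s_k ∈ SO_{2ℓ+2}(ℂ)` (1-based indices). -/
noncomputable def s (ℓ k : ℕ) : Matrix (Fin (2*ℓ+2)) (Fin (2*ℓ+2)) ℂ :=
  Matrix.of fun i j =>
    if i = j ∧ i.val + 1 ≠ k ∧ i.val + 1 ≠ k + 1 ∧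
        i.val + 1 ≠ 2*ℓ - k + 2 ∧ i.val + 1 ≠ 2*ℓ - k + 3 then 1
    else if i ≠ j ∧ ((i.val + 1 = k ∧ j.val + 1 = k + 1) ∨
        (i.val + 1 = k + 1 ∧ j.val + 1 = k)) then 1
    else if i ≠ j ∧ ((i.val + 1 = 2*ℓ - k + 2 ∧ j.val + 1 = 2*ℓ - k + 3) ∨
        (i.val + 1 = 2*ℓ - k + 3 ∧ j.val + 1 = 2*ℓ - k + 2)) then 1
    else 0

/-- `t_k = s_k s_{k+1} ⋯ s_{ℓ-1} s_ℓ · J · s_ℓ s_{ℓ-1} ⋯ s_{k+1} s_k` (so `t_{ℓ+1} = J`). -/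
noncomputable def t (ℓ k : ℕ) : Matrix (Fin (2*ℓ+2)) (Fin (2*ℓ+2)) ℂ :=
  (List.ofFn fun a : Fin (ℓ + 1 - k) => s ℓ (k + a.val)).prod * J ℓ *
  (List.ofFn fun a : Fin (ℓ + 1 - k) => s ℓ (ℓ - a.val)).prod

/-- `n_{ℓ⃗} = ñ_{ℓ⃗} · J` with
`ñ_{ℓ⃗} = ∏_{ν=1}^{μ} ( s_{ℓ'_ν+1} ⋯ s_{ℓ'_ν+ℓ_ν-1} · t_{ℓ'_ν+ℓ_ν} )`. -/
noncomputable def n (ℓ μ : ℕ) (L : Fin μ → ℕ) : Matrix (Fin (2*ℓ+2)) (Fin (2*ℓ+2)) ℂ :=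
  (List.ofFn fun ν : Fin μ =>
    (List.ofFn fun a : Fin (L ν - 1) =>
      s ℓ ((∑ j ∈ Finset.Iio ν, L j) + a.val + 1)).prod *
    t ℓ ((∑ j ∈ Finset.Iio ν, L j) + L ν)).prod * J ℓ

end Stmt19

open Equiv Fin.NatCast

section PermMatrix

variable {n R : Type*} [DecidableEq n]

theorem Equiv.Perm.permMatrix_apply [Zero R] [One R] (σ : Perm n) (i j : n) :
    σ.permMatrix R i j = if σ i = j then 1 else 0 := by
  simp [Equiv.toPEquiv_apply, PEquiv.toMatrix_apply]

variable [Fintype n] [Semiring R]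

theorem List.prod_map_permMatrix (l : List (Equiv.Perm n)) :
    (l.map (·.permMatrix R)).prod = l.reverse.prod.permMatrix R := by
  induction l with
  | nil => simp
  | cons σ l ih => simp [ih]

theorem Equiv.Perm.permMatrix_pow (σ : Perm n) (m : ℕ) :
    (σ ^ m).permMatrix R = σ.permMatrix R ^ m := by
  induction m with
  | zero => simp
  | succ m ih => rw [pow_succ', permMatrix_mul, ih, pow_succ]

end PermMatrix

theorem ncard_fixedPoints_pow_eq_of_permMatrix_eq_conj {n : Type*} [DecidableEq n] [Fintype n]
    {σ τ : Perm n} {h : Matrix n n ℂ} (hh : IsUnit h)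
    (hconj : τ.permMatrix ℂ = h * σ.permMatrix ℂ * h⁻¹) (m : ℕ) :
    (Function.fixedPoints (τ ^ m)).ncard = (Function.fixedPoints (σ ^ m)).ncard := by
  have hpow : (τ ^ m).permMatrix ℂ = h * (σ ^ m).permMatrix ℂ * h⁻¹ := by
    rw [Perm.permMatrix_pow, Perm.permMatrix_pow, hconj, ← hh.unit_spec, ← coe_units_inv,
      Units.conj_pow]
  have htrace := congrArg trace hpow
  rw [trace_conj hh, trace_permutation, trace_permutation] at htrace
  exact_mod_cast htrace

theorem mul_eq_conj_of_eq_twistedConj {m α : Type*} [Fintype m] [DecidableEq m] [CommRing α]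
    {A A' h J : Matrix m m α} (hJ : J * J = 1) (hA : A' = h * A * (J * h * J)⁻¹) :
    A' * J = h * (A * J) * h⁻¹ := by
  rw [hA, Matrix.mul_inv_rev, Matrix.mul_inv_rev, Matrix.inv_eq_left_inv hJ]
  simp only [mul_assoc, hJ, mul_one]

theorem List.prod_apply_eq_self {α : Type*} {l : List (Equiv.Perm α)} {x : α}
    (h : ∀ g ∈ l, g x = x) : l.prod x = x := by
  induction l with
  | nil => rfl
  | cons g l ih =>
    rw [List.prod_cons, Equiv.Perm.mul_apply, ih fun g' hg' => h g' (List.mem_cons_of_mem g hg'),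
      h g List.mem_cons_self]

theorem List.prod_reverse_ofFn_apply_of_fixed {α : Type*} {m : ℕ} (f : Fin m → Equiv.Perm α)
    (ν : Fin m) {x : α} (hfix : ∀ i ≠ ν, f i x = x ∧ f i (f ν x) = f ν x) :
    (List.ofFn f).reverse.prod x = f ν x := by
  induction m with
  | zero => exact ν.elim0
  | succ m ih =>
    rw [List.ofFn_succ, List.reverse_cons, List.prod_append, List.prod_singleton,
      Equiv.Perm.mul_apply]
    rcases Fin.eq_zero_or_eq_succ ν with rfl | ⟨j, rfl⟩
    · refine List.prod_apply_eq_self fun g hg => ?_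
      obtain ⟨i, rfl⟩ := List.mem_ofFn.mp (List.mem_reverse.mp hg)
      exact (hfix i.succ (Fin.succ_ne_zero i)).2
    · rw [(hfix 0 (Fin.succ_ne_zero j).symm).1]
      exact ih (fun i => f i.succ) j fun i hi => hfix i.succ (by simpa using hi)

theorem Fin.val_swap_apply {m : ℕ} (a b x : Fin m) :
    (swap a b x).val = if x.val = a.val then b.val else if x.val = b.val then a.val else x.val := by
  simp only [swap_apply_def, ← Fin.val_inj]
  split_ifs <;> rfl

theorem Multiset.eq_of_forall_sum_filter_dvd_eq {A B : Multiset ℕ} (hA : 0 ∉ A) (hB : 0 ∉ B)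
    (h : ∀ d, 0 < d → (A.filter (· ∣ d)).sum = (B.filter (· ∣ d)).sum) : A = B := by
  have sum_filter_dvd : ∀ (C : Multiset ℕ) {d : ℕ}, 0 < d →
      (C.filter (· ∣ d)).sum = ∑ e ∈ d.divisors, C.count e * e := by
    intro C d hd
    rw [Finset.sum_multiset_count_of_subset _ d.divisors]
    · refine Finset.sum_congr rfl fun e he => ?_
      rw [Multiset.count_filter, if_pos (Nat.dvd_of_mem_divisors he), smul_eq_mul]
    · intro e he
      simp only [Multiset.mem_toFinset, Multiset.mem_filter] at he
      exact Nat.mem_divisors.mpr ⟨he.2, hd.ne'⟩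
  ext d
  induction d using Nat.strong_induction_on with
  | _ d ih =>
    rcases Nat.eq_zero_or_pos d with rfl | hd
    · rw [Multiset.count_eq_zero_of_notMem hA, Multiset.count_eq_zero_of_notMem hB]
    have hd_sum := h d hd
    rw [sum_filter_dvd A hd, sum_filter_dvd B hd, ← Nat.cons_self_properDivisors hd.ne',
      Finset.sum_cons, Finset.sum_cons, Finset.sum_congr rfl fun e he =>
        by rw [ih e (Nat.mem_properDivisors.mp he).2]] at hd_sum
    exact Nat.eq_of_mul_eq_mul_right hd (Nat.add_right_cancel hd_sum)

theorem eq_of_monotone_of_map_univ_eq {α : Type*} [PartialOrder α] {μ μ' : ℕ}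
    {L : Fin μ → α} {L' : Fin μ' → α} (hmono : Monotone L) (hmono' : Monotone L')
    (h : Finset.univ.val.map L = Finset.univ.val.map L') :
    μ = μ' ∧ ∀ (ν : ℕ) (h1 : ν < μ) (h2 : ν < μ'), L ⟨ν, h1⟩ = L' ⟨ν, h2⟩ := by
  rw [Fin.univ_val_map, Fin.univ_val_map, Multiset.coe_eq_coe] at h
  have hL := h.eq_of_sortedLE (List.sortedLE_ofFn_iff.mpr hmono)
    (List.sortedLE_ofFn_iff.mpr hmono')
  refine ⟨by simpa using congrArg List.length hL, fun ν h1 h2 => ?_⟩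
  simpa [h1, h2] using congrArg (·[ν]?) hL

namespace Stmt19

variable (ℓ : ℕ)

-- Positions in `Fin (2ℓ+2)` are 0-based, while `s`, `t`, `J` are written with 1-based indices.
def sPerm (k : ℕ) : Perm (Fin (2*ℓ+2)) :=
  swap ((k - 1 : ℕ) : Fin (2*ℓ+2)) (k : ℕ) *
    swap ((2*ℓ+1-k : ℕ) : Fin (2*ℓ+2)) ((2*ℓ+2-k : ℕ) : Fin (2*ℓ+2))

def tPerm (k : ℕ) : Perm (Fin (2*ℓ+2)) :=
  swap ((k - 1 : ℕ) : Fin (2*ℓ+2)) ((2*ℓ+2-k : ℕ) : Fin (2*ℓ+2))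

variable {ℓ}

theorem sPerm_apply_val {k : ℕ} (hk1 : 1 ≤ k) (hk : k ≤ ℓ) (x : Fin (2*ℓ+2)) :
    (sPerm ℓ k x).val =
      if x.val = k - 1 then k else if x.val = k then k - 1
      else if x.val = 2*ℓ+1-k then 2*ℓ+2-k else if x.val = 2*ℓ+2-k then 2*ℓ+1-k else x.val := by
  have := x.isLt
  simp only [sPerm, Perm.mul_apply, Fin.val_swap_apply,
    Fin.val_cast_of_lt (show k - 1 < 2*ℓ+2 by omega), Fin.val_cast_of_lt (show k < 2*ℓ+2 by omega),
    Fin.val_cast_of_lt (show 2*ℓ+1-k < 2*ℓ+2 by omega),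
    Fin.val_cast_of_lt (show 2*ℓ+2-k < 2*ℓ+2 by omega)]
  split_ifs <;> omega

theorem tPerm_apply_val {k : ℕ} (hk1 : 1 ≤ k) (hk : k ≤ ℓ + 1) (x : Fin (2*ℓ+2)) :
    (tPerm ℓ k x).val =
      if x.val = k - 1 then 2*ℓ+2-k else if x.val = 2*ℓ+2-k then k - 1 else x.val := by
  simp only [tPerm, Fin.val_swap_apply, Fin.val_cast_of_lt (show k - 1 < 2*ℓ+2 by omega),
    Fin.val_cast_of_lt (show 2*ℓ+2-k < 2*ℓ+2 by omega)]

theorem s_eq_permMatrix {k : ℕ} (hk1 : 1 ≤ k) (hk : k ≤ ℓ) : s ℓ k = (sPerm ℓ k).permMatrix ℂ := by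
  ext i j
  rw [Perm.permMatrix_apply, s, of_apply]
  simp only [ne_eq, ← Fin.val_inj, sPerm_apply_val hk1 hk]
  split_ifs <;> first | rfl | (exfalso; omega)

theorem J_eq_permMatrix : J ℓ = (tPerm ℓ (ℓ + 1)).permMatrix ℂ := by
  ext i j
  rw [Perm.permMatrix_apply, J, of_apply]
  simp only [ne_eq, ← Fin.val_inj, tPerm_apply_val (by omega : 1 ≤ ℓ + 1) le_rfl]
  split_ifs <;> first | rfl | (exfalso; omega)

theorem t_eq_s_mul_t_mul_s {k : ℕ} (hk : k ≤ ℓ) : t ℓ k = s ℓ k * t ℓ (k + 1) * s ℓ k := by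
  have hlen : ℓ + 1 - k = (ℓ + 1 - (k + 1)) + 1 := by omega
  rw [t, t, List.ofFn_congr hlen, List.ofFn_succ, List.ofFn_congr hlen, List.ofFn_succ',
    List.prod_cons, List.prod_concat]
  simp only [Fin.val_cast, Fin.val_zero, Fin.val_succ, Fin.val_last, Fin.val_castSucc,
    show ℓ - (ℓ + 1 - (k + 1)) = k by omega, add_zero, ← add_assoc, Nat.add_right_comm k, mul_assoc]

theorem t_self : t ℓ (ℓ + 1) = J ℓ := by
  simp [t]

theorem sPerm_mul_tPerm_mul_sPerm {k : ℕ} (hk1 : 1 ≤ k) (hk : k ≤ ℓ) :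
    sPerm ℓ k * (tPerm ℓ (k + 1) * sPerm ℓ k) = tPerm ℓ k := by
  ext x
  have := x.isLt
  have h1 := sPerm_apply_val hk1 hk x
  have h2 := tPerm_apply_val (by omega : 1 ≤ k + 1) (by omega : k + 1 ≤ ℓ + 1) (sPerm ℓ k x)
  have h3 := sPerm_apply_val hk1 hk (tPerm ℓ (k + 1) (sPerm ℓ k x))
  have h4 := tPerm_apply_val hk1 (by omega : k ≤ ℓ + 1) x
  rw [Perm.mul_apply, Perm.mul_apply, h3, h4]
  split_ifs at h1 h2 ⊢ <;> omega

theorem t_eq_permMatrix {k : ℕ} (hk1 : 1 ≤ k) (hk : k ≤ ℓ + 1) :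
    t ℓ k = (tPerm ℓ k).permMatrix ℂ := by
  induction hk using Nat.decreasingInduction with
  | self => rw [t_self, J_eq_permMatrix]
  | of_succ k hk ih =>
    rw [t_eq_s_mul_t_mul_s (by omega), ih (by omega), s_eq_permMatrix hk1 (by omega),
      ← permMatrix_mul, ← permMatrix_mul, sPerm_mul_tPerm_mul_sPerm hk1 (by omega)]

variable (ℓ) in
def chainPerm (p r : ℕ) : Perm (Fin (2*ℓ+2)) :=
  (List.ofFn fun a : Fin r => sPerm ℓ (p + a + 1)).reverse.prod

theorem chainPerm_succ (p r : ℕ) :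
    chainPerm ℓ p (r + 1) = sPerm ℓ (p + r + 1) * chainPerm ℓ p r := by
  rw [chainPerm, chainPerm, List.ofFn_succ', List.concat_eq_append, List.reverse_append]
  simp

theorem chainPerm_apply_val {p r : ℕ} (hpr : p + r ≤ ℓ) (x : Fin (2*ℓ+2)) :
    (chainPerm ℓ p r x).val =
      if x.val = p then p + r
      else if p < x.val ∧ x.val ≤ p + r then x.val - 1
      else if x.val = 2*ℓ+1-p then 2*ℓ+1-p-r
      else if 2*ℓ+1-p-r ≤ x.val ∧ x.val < 2*ℓ+1-p then x.val + 1
      else x.val := by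
  have := x.isLt
  induction r with
  | zero =>
    simp only [chainPerm, List.ofFn_zero, List.reverse_nil, List.prod_nil, Perm.one_apply]
    split_ifs <;> omega
  | succ r ih =>
    have ih := ih (by omega)
    rw [chainPerm_succ, Perm.mul_apply, sPerm_apply_val (by omega) (by omega : p + r + 1 ≤ ℓ)]
    generalize (chainPerm ℓ p r x).val = y at ih ⊢
    split_ifs at ih ⊢ <;> omega

theorem prod_s_eq_permMatrix {p r : ℕ} (hpr : p + r ≤ ℓ) :
    (List.ofFn fun a : Fin r => s ℓ (p + a + 1)).prod = (chainPerm ℓ p r).permMatrix ℂ := by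
  rw [chainPerm, ← List.prod_map_permMatrix, List.map_ofFn]
  exact congrArg _ (List.ofFn_inj.mpr (funext fun a => s_eq_permMatrix (by omega) (by omega)))

variable (ℓ) in
def blockPerm (p L : ℕ) : Perm (Fin (2*ℓ+2)) := tPerm ℓ (p + L) * chainPerm ℓ p (L - 1)

theorem block_eq_permMatrix {p L : ℕ} (hL : 0 < L) (hpL : p + L ≤ ℓ + 1) :
    (List.ofFn fun a : Fin (L - 1) => s ℓ (p + a + 1)).prod * t ℓ (p + L) =
      (blockPerm ℓ p L).permMatrix ℂ := by
  rw [prod_s_eq_permMatrix (by omega), t_eq_permMatrix (by omega) hpL, ← permMatrix_mul, blockPerm]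

theorem blockPerm_apply_val {p L : ℕ} (hL : 0 < L) (hpL : p + L ≤ ℓ + 1) (x : Fin (2*ℓ+2)) :
    (blockPerm ℓ p L x).val =
      if x.val = p then 2*ℓ+2-p-L
      else if p < x.val ∧ x.val < p + L then x.val - 1
      else if x.val = 2*ℓ+1-p then p+L-1
      else if 2*ℓ+2-p-L ≤ x.val ∧ x.val < 2*ℓ+1-p then x.val + 1
      else x.val := by
  have h := chainPerm_apply_val (by omega : p + (L - 1) ≤ ℓ) x
  rw [blockPerm, Perm.mul_apply, tPerm_apply_val (by omega) hpL]
  generalize (chainPerm ℓ p (L - 1) x).val = y at h ⊢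
  split_ifs at h ⊢ <;> omega

variable (ℓ) in
/-- The positions `p, …, p+L-1` and their mirror images, which `blockPerm ℓ p L` permutes
cyclically. -/
def InBlock (p L x : ℕ) : Prop :=
  p ≤ x ∧ x < p + L ∨ 2*ℓ+2-p-L ≤ x ∧ x < 2*ℓ+2-p

theorem blockPerm_apply_of_not_inBlock {p L : ℕ} (hL : 0 < L) (hpL : p + L ≤ ℓ + 1)
    {x : Fin (2*ℓ+2)} (hx : ¬ InBlock ℓ p L x) : blockPerm ℓ p L x = x := by
  have := x.isLt
  unfold InBlock at hx
  ext
  rw [blockPerm_apply_val hL hpL]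
  split_ifs <;> omega

variable (ℓ) in
/-- `orbitPt ℓ p L z` runs through the `2L`-cycle of `blockPerm ℓ p L`, periodically in `z`. -/
def orbitPt (p L z : ℕ) : Fin (2*ℓ+2) :=
  if z % (2 * L) < L then ((p + L - 1 - z % (2 * L) : ℕ) : Fin (2*ℓ+2))
  else ((2*ℓ+2-p-2*L + z % (2 * L) : ℕ) : Fin (2*ℓ+2))

theorem orbitPt_val {p L : ℕ} (hL : 0 < L) (hpL : p + L ≤ ℓ + 1) (z : ℕ) :
    (orbitPt ℓ p L z).val =
      if z % (2 * L) < L then p + L - 1 - z % (2 * L) else 2*ℓ+2-p-2*L + z % (2 * L) := by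
  have := Nat.mod_lt z (show 0 < 2 * L by omega)
  unfold orbitPt
  split_ifs <;> exact Fin.val_cast_of_lt (by omega)

theorem inBlock_orbitPt {p L : ℕ} (hL : 0 < L) (hpL : p + L ≤ ℓ + 1) (z : ℕ) :
    InBlock ℓ p L (orbitPt ℓ p L z) := by
  have := Nat.mod_lt z (show 0 < 2 * L by omega)
  unfold InBlock
  rw [orbitPt_val hL hpL]
  split_ifs <;> omega

theorem blockPerm_orbitPt {p L : ℕ} (hL : 0 < L) (hpL : p + L ≤ ℓ + 1) (z : ℕ) :
    blockPerm ℓ p L (orbitPt ℓ p L z) = orbitPt ℓ p L (z + 1) := by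
  have h := Nat.mod_lt z (show 0 < 2 * L by omega)
  have hsucc : (z + 1) % (2 * L) = if z % (2 * L) + 1 = 2 * L then 0 else z % (2 * L) + 1 := by
    rw [Nat.add_mod, Nat.mod_eq_of_lt (show 1 < 2 * L by omega)]
    split_ifs with h'
    · rw [h', Nat.mod_self]
    · exact Nat.mod_eq_of_lt (by omega)
  ext
  rw [blockPerm_apply_val hL hpL, orbitPt_val hL hpL, orbitPt_val hL hpL, hsucc]
  generalize z % (2 * L) = w at h ⊢
  split_ifs <;> omega

theorem orbitPt_eq_orbitPt_iff {p L : ℕ} (hL : 0 < L) (hpL : p + L ≤ ℓ + 1) (z z' : ℕ) :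
    orbitPt ℓ p L z = orbitPt ℓ p L z' ↔ z ≡ z' [MOD 2 * L] := by
  unfold Nat.ModEq
  refine ⟨fun h => ?_, fun h => by rw [orbitPt, orbitPt, h]⟩
  have h1 := Nat.mod_lt z (show 0 < 2 * L by omega)
  have h2 := Nat.mod_lt z' (show 0 < 2 * L by omega)
  have hv := congrArg Fin.val h
  rw [orbitPt_val hL hpL, orbitPt_val hL hpL] at hv
  split_ifs at hv <;> omega

theorem J_mul_J : J ℓ * J ℓ = 1 := by
  rw [J_eq_permMatrix, ← permMatrix_mul, tPerm, Equiv.swap_mul_self, permMatrix_one]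

section Partition

variable {μ : ℕ}

/-- The offset `ℓ'_ν = ℓ_1 + ⋯ + ℓ_{ν-1}` of the `ν`-th part. -/
def offset (L : Fin μ → ℕ) (ν : Fin μ) : ℕ := ∑ j ∈ Finset.Iio ν, L j

variable {L : Fin μ → ℕ}

theorem offset_add_eq_sum_Iic (ν : Fin μ) : offset L ν + L ν = ∑ j ∈ Finset.Iic ν, L j := by
  rw [offset, ← Finset.Iio_insert, Finset.sum_insert (by simp), add_comm]

theorem offset_add_le (hsum : ∑ ν, L ν = ℓ + 1) (ν : Fin μ) : offset L ν + L ν ≤ ℓ + 1 := by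
  rw [offset_add_eq_sum_Iic, ← hsum]
  exact Finset.sum_le_sum_of_subset (Finset.subset_univ _)

theorem offset_add_le_offset {ν ν' : Fin μ} (h : ν < ν') : offset L ν + L ν ≤ offset L ν' := by
  rw [offset_add_eq_sum_Iic, offset]
  exact Finset.sum_le_sum_of_subset fun j hj =>
    Finset.mem_Iio.mpr ((Finset.mem_Iic.mp hj).trans_lt h)

theorem not_inBlock_of_inBlock (hsum : ∑ ν, L ν = ℓ + 1) {ν ν' : Fin μ} (hne : ν ≠ ν') {x : ℕ}
    (hx : InBlock ℓ (offset L ν) (L ν) x) : ¬ InBlock ℓ (offset L ν') (L ν') x := by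
  have := offset_add_le hsum ν
  have := offset_add_le hsum ν'
  unfold InBlock at *
  rcases hne.lt_or_gt with h | h
  · have := offset_add_le_offset (L := L) h; omega
  · have := offset_add_le_offset (L := L) h; omega

variable (ℓ L) in
def sigmaPerm : Perm (Fin (2*ℓ+2)) :=
  (List.ofFn fun ν => blockPerm ℓ (offset L ν) (L ν)).reverse.prod

variable (ℓ L) in
def orbit (ν : Fin μ) : Finset (Fin (2*ℓ+2)) :=
  (Finset.range (2 * L ν)).image (orbitPt ℓ (offset L ν) (L ν))

variable (hpos : ∀ ν, 0 < L ν) (hsum : ∑ ν, L ν = ℓ + 1)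
include hpos hsum

theorem n_mul_J_eq_permMatrix : n ℓ μ L * J ℓ = (sigmaPerm ℓ L).permMatrix ℂ := by
  rw [n, mul_assoc, J_mul_J, mul_one, sigmaPerm, ← List.prod_map_permMatrix, List.map_ofFn]
  exact congrArg _ (List.ofFn_inj.mpr (funext fun ν =>
    block_eq_permMatrix (hpos ν) (offset_add_le hsum ν)))

theorem blockPerm_orbitPt_of_ne {ν i : Fin μ} (hi : i ≠ ν) (z : ℕ) :
    blockPerm ℓ (offset L i) (L i) (orbitPt ℓ (offset L ν) (L ν) z) =
      orbitPt ℓ (offset L ν) (L ν) z :=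
  blockPerm_apply_of_not_inBlock (hpos i) (offset_add_le hsum i)
    (not_inBlock_of_inBlock hsum hi.symm (inBlock_orbitPt (hpos ν) (offset_add_le hsum ν) z))

theorem sigmaPerm_orbitPt (ν : Fin μ) (z : ℕ) :
    sigmaPerm ℓ L (orbitPt ℓ (offset L ν) (L ν) z) = orbitPt ℓ (offset L ν) (L ν) (z + 1) := by
  rw [← blockPerm_orbitPt (hpos ν) (offset_add_le hsum ν), sigmaPerm]
  refine List.prod_reverse_ofFn_apply_of_fixed _ ν fun i hi => ?_
  rw [blockPerm_orbitPt (hpos ν) (offset_add_le hsum ν)]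
  exact ⟨blockPerm_orbitPt_of_ne hpos hsum hi z, blockPerm_orbitPt_of_ne hpos hsum hi (z + 1)⟩

theorem sigmaPerm_pow_orbitPt (ν : Fin μ) (z m : ℕ) :
    (sigmaPerm ℓ L ^ m) (orbitPt ℓ (offset L ν) (L ν) z) =
      orbitPt ℓ (offset L ν) (L ν) (z + m) := by
  induction m with
  | zero => rfl
  | succ m ih => rw [pow_succ', Perm.mul_apply, ih, sigmaPerm_orbitPt hpos hsum, add_assoc]

theorem card_orbit (ν : Fin μ) : (orbit ℓ L ν).card = 2 * L ν := by
  rw [orbit, Finset.card_image_of_injOn, Finset.card_range]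
  intro z hz z' hz' h
  have := (orbitPt_eq_orbitPt_iff (hpos ν) (offset_add_le hsum ν) z z').mp h
  exact Nat.ModEq.eq_of_lt_of_lt this (Finset.mem_range.mp hz) (Finset.mem_range.mp hz')

theorem disjoint_orbit {ν ν' : Fin μ} (hne : ν ≠ ν') : Disjoint (orbit ℓ L ν) (orbit ℓ L ν') := by
  simp only [orbit, Finset.disjoint_left, Finset.mem_image, not_exists, not_and]
  rintro _ ⟨z, -, rfl⟩ z' - h
  exact not_inBlock_of_inBlock hsum hne (inBlock_orbitPt (hpos ν) (offset_add_le hsum ν) z)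
    (h ▸ inBlock_orbitPt (hpos ν') (offset_add_le hsum ν') z')

theorem biUnion_orbit : Finset.univ.biUnion (orbit ℓ L) = Finset.univ := by
  apply Finset.eq_univ_of_card
  rw [Finset.card_biUnion fun ν _ ν' _ hne => disjoint_orbit hpos hsum hne,
    Finset.sum_congr rfl fun ν _ => card_orbit hpos hsum ν, ← Finset.mul_sum, hsum,
    Fintype.card_fin]
  ring

theorem sigmaPerm_pow_apply_eq_self_iff {ν : Fin μ} {x : Fin (2*ℓ+2)} (hx : x ∈ orbit ℓ L ν)
    (m : ℕ) : (sigmaPerm ℓ L ^ m) x = x ↔ 2 * L ν ∣ m := by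
  obtain ⟨z, -, rfl⟩ := Finset.mem_image.mp hx
  rw [sigmaPerm_pow_orbitPt hpos hsum, orbitPt_eq_orbitPt_iff (hpos ν) (offset_add_le hsum ν),
    Nat.add_modEq_left_iff]

theorem ncard_fixedPoints_sigmaPerm_pow (m : ℕ) :
    (Function.fixedPoints (sigmaPerm ℓ L ^ m)).ncard =
      ((Finset.univ.val.map fun ν => 2 * L ν).filter (· ∣ m)).sum := by
  have hfix : Function.fixedPoints (sigmaPerm ℓ L ^ m) =
      ↑((Finset.univ.filter fun ν => 2 * L ν ∣ m).biUnion (orbit ℓ L)) := by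
    ext x
    obtain ⟨ν, -, hx⟩ :=
      Finset.mem_biUnion.mp ((biUnion_orbit hpos hsum).symm ▸ Finset.mem_univ x)
    simp only [Function.mem_fixedPoints, Function.IsFixedPt, Finset.mem_coe,
      Finset.mem_biUnion, Finset.mem_filter, Finset.mem_univ, true_and]
    exact ⟨fun h => ⟨ν, (sigmaPerm_pow_apply_eq_self_iff hpos hsum hx m).mp h, hx⟩,
      fun ⟨ν', h, hx'⟩ => (sigmaPerm_pow_apply_eq_self_iff hpos hsum hx' m).mpr h⟩
  rw [hfix, Set.ncard_coe_finset,
    Finset.card_biUnion fun ν _ ν' _ hne => disjoint_orbit hpos hsum hne,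
    Finset.sum_congr rfl fun ν _ => card_orbit hpos hsum ν, Finset.sum_eq_multiset_sum,
    Finset.filter_val, Multiset.filter_map]
  rfl

end Partition

theorem stmt19_general (ℓ : ℕ) (μ μ' : ℕ)
    (L : Fin μ → ℕ) (L' : Fin μ' → ℕ)
    (hpos : ∀ ν, 0 < L ν) (hmono : Monotone L) (hsum : ∑ ν, L ν = ℓ + 1)
    (hpos' : ∀ ν, 0 < L' ν) (hmono' : Monotone L') (hsum' : ∑ ν, L' ν = ℓ + 1)
    (h : Matrix (Fin (2*ℓ+2)) (Fin (2*ℓ+2)) ℂ)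
    (hdet : h.det = 1)
    (hconj : n ℓ μ' L' = h * n ℓ μ L * (J ℓ * h * J ℓ)⁻¹) :
    μ = μ' ∧ ∀ (ν : ℕ) (h1 : ν < μ) (h2 : ν < μ'), L ⟨ν, h1⟩ = L' ⟨ν, h2⟩ := by
  have hh : IsUnit h := (isUnit_iff_isUnit_det h).mpr (hdet ▸ isUnit_one)
  have hσ : (sigmaPerm ℓ L').permMatrix ℂ = h * (sigmaPerm ℓ L).permMatrix ℂ * h⁻¹ := by
    rw [← n_mul_J_eq_permMatrix hpos hsum, ← n_mul_J_eq_permMatrix hpos' hsum']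
    exact mul_eq_conj_of_eq_twistedConj J_mul_J hconj
  have hparts : Finset.univ.val.map (fun ν => 2 * L ν) =
      Finset.univ.val.map (fun ν => 2 * L' ν) := by
    refine Multiset.eq_of_forall_sum_filter_dvd_eq ?_ ?_ fun m _ => ?_
    · simpa using fun ν => (hpos ν).ne'
    · simpa using fun ν => (hpos' ν).ne'
    · rw [← ncard_fixedPoints_sigmaPerm_pow hpos hsum,
        ← ncard_fixedPoints_sigmaPerm_pow hpos' hsum',
        ncard_fixedPoints_pow_eq_of_permMatrix_eq_conj hh hσ]
  refine eq_of_monotone_of_map_univ_eq hmono hmono'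
    (Multiset.map_injective (f := (2 * ·)) (mul_right_injective₀ two_ne_zero) ?_)
  simpa [Multiset.map_map, Function.comp_def] using hparts

/-- Let `ℓ ≥ 2` and let `ℓ⃗`, `ℓ⃗'` be partitions of `ℓ+1`, each into an odd
number of positive parts, with associated elements `n_{ℓ⃗}`, `n_{ℓ⃗'}` of `SO_{2ℓ+2}(ℂ)`.
If some `h ∈ SO_{2ℓ+2}(ℂ)` satisfies `n_{ℓ⃗'} = h · n_{ℓ⃗} · θ(h)⁻¹` with `θ(g) = J g J`,
then `ℓ⃗ = ℓ⃗'`. -/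
theorem stmt19 (ℓ : ℕ) (hℓ : 2 ≤ ℓ) (μ μ' : ℕ) (hμ : Odd μ) (hμ' : Odd μ')
    (L : Fin μ → ℕ) (L' : Fin μ' → ℕ)
    (hpos : ∀ ν, 0 < L ν) (hmono : Monotone L) (hsum : ∑ ν, L ν = ℓ + 1)
    (hpos' : ∀ ν, 0 < L' ν) (hmono' : Monotone L') (hsum' : ∑ ν, L' ν = ℓ + 1)
    (h : Matrix (Fin (2*ℓ+2)) (Fin (2*ℓ+2)) ℂ)
    (hdet : h.det = 1) (hSO : h = (K ℓ * h⁻¹ * K ℓ)ᵀ)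
    (hconj : n ℓ μ' L' = h * n ℓ μ L * (J ℓ * h * J ℓ)⁻¹) :
    μ = μ' ∧ ∀ (ν : ℕ) (h1 : ν < μ) (h2 : ν < μ'), L ⟨ν, h1⟩ = L' ⟨ν, h2⟩ :=
  stmt19_general ℓ μ μ' L L' hpos hmono hsum hpos' hmono' hsum' h hdet hconj

end Stmt19
end
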